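/- arXiv:1012.3919 — 12 statements merged into one kernel-verified Lean document; each statement's English description precedes it below -/
import Mathlib

section
/- Let a and b be odd positive integers and let p be an odd prime such that p ≠ a, p ≠ b, p does not divide ab + 1, and p = ax² + by² for some integers x, y. Set n = ((ab+1)p − a − b)/8; then n is a positive integer and (−1)^{((a+b)/2)·x + (b+1)/2} · (4ax² − 2p) = λ(a, b; n+1). -/
lemma oddsq8 (w : ℤ) (h : w % 2 = 1) : (8:ℤ) ∣ w^2 - 1 := by
  obtain ⟨k, hk⟩ : ∃ k, w = 2*k+1 := ⟨(w-1)/2, by omega⟩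
  obtain ⟨m, hm⟩ := Int.even_mul_succ_self k
  exact ⟨m, by subst hk; linear_combination 4*hm⟩

lemma sqmod2 (x : ℤ) : x^2 % 2 = x % 2 := by
  rcases Int.even_or_odd x with h | h
  · rw [Int.even_iff.mp h, Int.even_iff.mp (Int.even_pow.mpr ⟨h, by norm_num⟩)]
  · rw [Int.odd_iff.mp h, Int.odd_iff.mp (h.pow)]

lemma key0 (P c d t : ℤ) (hpp : Prime P) (hP2 : 2 ≤ P) (hc : 0 < c) (hd : 0 < d)
    (ht : P = c * t^2 * d) (hPd : ¬ P ∣ d) (hcP : c ≠ P) : False := by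
  have hP0 : P ≠ 0 := by omega
  have ht0 : t ≠ 0 := by rintro rfl; exact hP0 (by rw [ht]; ring)
  have ht1 : 1 ≤ t^2 := by
    have h0 : 0 < t^2 := by positivity
    exact h0
  have hd1 : (1:ℤ) ≤ d := hd
  have tcase : P ∣ t → False := by
    intro h
    obtain ⟨s, hs⟩ := h
    have h4 : P * 1 = P * (c*P*s^2*d) := by linear_combination ht + c*d*(t + P*s)*hs
    have h6 : (1:ℤ) = c*P*s^2*d := mul_left_cancel₀ hP0 h4
    have h5 : P ∣ 1 := ⟨c*s^2*d, by linear_combination h6⟩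
    have := Int.le_of_dvd one_pos h5; omega
  have h1 : P ∣ c * (t*(t*d)) := ⟨1, by rw [ht]; ring⟩
  rcases hpp.2.2 _ _ h1 with h | h
  · have h2 : P ≤ c := Int.le_of_dvd hc h
    have e1 : c ≤ c*t^2 := by nlinarith
    have e2 : c*t^2 ≤ c*t^2*d := by nlinarith
    exact hcP (by linarith)
  rcases hpp.2.2 _ _ h with h | h
  · exact tcase h
  rcases hpp.2.2 _ _ h with h | h
  · exact tcase h
  · exact hPd h

lemma sqmod2' (x : ℤ) : x^2 % 2 = x % 2 := by
  rcases Int.even_or_odd x with h | h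
  · rw [Int.even_iff.mp h, Int.even_iff.mp (Int.even_pow.mpr ⟨h, by norm_num⟩)]
  · rw [Int.odd_iff.mp h, Int.odd_iff.mp (h.pow)]

lemma forwardA (a b P x y X Y : ℤ) (hpp : Prime P) (hP2 : 2 ≤ P)
    (ha : 0 < a) (hb : 0 < b)
    (hxy : P = a*x^2 + b*y^2) (hE : a*X^2 + b*Y^2 = (a*b+1)*P)
    (hXodd : X % 2 = 1) (hab2 : (a*b) % 2 = 1)
    (hA : P ∣ X*y - x*Y) :
    ((X = x+b*y ∨ X = -(x+b*y)) ∧ (Y = y-a*x ∨ Y = -(y-a*x))) ∨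
    ((X = x-b*y ∨ X = -(x-b*y)) ∧ (Y = y+a*x ∨ Y = -(y+a*x))) := by
  have hP0 : P ≠ 0 := by omega
  obtain ⟨t, ht⟩ := hA
  set u := a*X*x + b*Y*y with hu
  have hI : u^2 + a*b*(P*t)^2 = P^2*(a*b+1) := by
    rw [← ht, hu]; linear_combination (a*x^2+b*y^2)*hE - (a*b+1)*P*hxy
  have hPX : P*X = x*u + b*y*(P*t) := by rw [← ht, hu]; linear_combination X*hxy
  have hPY : P*Y = y*u - a*x*(P*t) := by rw [← ht, hu]; linear_combination Y*hxy
  have hab1 : 1 ≤ a*b := mul_pos ha hb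
  by_cases ht0 : t = 0
  · exfalso
    subst ht0
    obtain ⟨c, hc⟩ : ∃ c, a*b+1 = 2*c := ⟨(a*b+1)/2, by omega⟩
    have hX2 : P^2 * X^2 = P^2 * (x^2*(a*b+1)) := by
      linear_combination (P*X + x*u)*hPX + x^2*hI
    have hX2' : X^2 = x^2*(a*b+1) := mul_left_cancel₀ (pow_ne_zero 2 hP0) hX2
    have h1 : X^2 % 2 = 1 := by rw [sqmod2', hXodd]
    have h2 : (2:ℤ) ∣ X^2 := ⟨x^2*c, by rw [hX2', hc]; ring⟩
    obtain ⟨k, hk⟩ := h2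
    rw [hk] at h1
    omega
  · have htpm : t = 1 ∨ t = -1 := by
      have h5 : t ≤ -2 ∨ t = -1 ∨ t = 1 ∨ 2 ≤ t := by omega
      rcases h5 with h|h|h|h
      · exfalso
        have h6 : (4:ℤ) ≤ t^2 := by nlinarith
        have hP2' : (4:ℤ) ≤ P^2 := by nlinarith
        have e1 : P^2*4 ≤ P^2*t^2 := by nlinarith [sq_nonneg P]
        have e2 : (a*b)*(P^2*4) ≤ (a*b)*(P^2*t^2) := mul_le_mul_of_nonneg_left e1 (by positivity)
        have e3 : P^2 ≤ (a*b)*P^2 := le_mul_of_one_le_left (sq_nonneg P) hab1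
        linarith [hI, e2, e3, hP2', sq_nonneg u]
      · right; exact h
      · left; exact h
      · exfalso
        have h6 : (4:ℤ) ≤ t^2 := by nlinarith
        have hP2' : (4:ℤ) ≤ P^2 := by nlinarith
        have e1 : P^2*4 ≤ P^2*t^2 := by nlinarith [sq_nonneg P]
        have e2 : (a*b)*(P^2*4) ≤ (a*b)*(P^2*t^2) := mul_le_mul_of_nonneg_left e1 (by positivity)
        have e3 : P^2 ≤ (a*b)*P^2 := le_mul_of_one_le_left (sq_nonneg P) hab1
        linarith [hI, e2, e3, hP2', sq_nonneg u]
    have hu2 : u^2 = P^2 := by rcases htpm with rfl|rfl <;> linear_combination hI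
    have hupm : u = P ∨ u = -P := by
      have h7 : (u - P)*(u + P) = 0 := by linear_combination hu2
      rcases mul_eq_zero.mp h7 with h|h
      · left; linarith
      · right; linarith
    rcases hupm with hu1|hu1 <;> rcases htpm with rfl|rfl
    · exact Or.inl ⟨Or.inl (by apply mul_left_cancel₀ hP0; rw [hPX, hu1]; ring),
        Or.inl (by apply mul_left_cancel₀ hP0; rw [hPY, hu1]; ring)⟩
    · exact Or.inr ⟨Or.inl (by apply mul_left_cancel₀ hP0; rw [hPX, hu1]; ring),
        Or.inl (by apply mul_left_cancel₀ hP0; rw [hPY, hu1]; ring)⟩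
    · exact Or.inr ⟨Or.inr (by apply mul_left_cancel₀ hP0; rw [hPX, hu1]; ring),
        Or.inr (by apply mul_left_cancel₀ hP0; rw [hPY, hu1]; ring)⟩
    · exact Or.inl ⟨Or.inr (by apply mul_left_cancel₀ hP0; rw [hPX, hu1]; ring),
        Or.inr (by apply mul_left_cancel₀ hP0; rw [hPY, hu1]; ring)⟩

lemma forward (a b P x y X Y : ℤ) (hpp : Prime P) (hP2 : 2 ≤ P)
    (ha : 0 < a) (hb : 0 < b) (haP : ¬ P ∣ a)
    (hxy : P = a*x^2 + b*y^2) (hE : a*X^2 + b*Y^2 = (a*b+1)*P)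
    (hXodd : X % 2 = 1) (hab2 : (a*b) % 2 = 1) :
    ((X = x+b*y ∨ X = -(x+b*y)) ∧ (Y = y-a*x ∨ Y = -(y-a*x))) ∨
    ((X = x-b*y ∨ X = -(x-b*y)) ∧ (Y = y+a*x ∨ Y = -(y+a*x))) := by
  have h1 : P ∣ a * (a * ((X*y - x*Y)*(X*y + x*Y))) :=
    ⟨a*y^2*(a*b+1) - a*Y^2, by linear_combination a*y^2*hE + a*Y^2*hxy⟩
  rcases hpp.2.2 _ _ h1 with h | h
  · exact absurd h haP
  rcases hpp.2.2 _ _ h with h | h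
  · exact absurd h haP
  rcases hpp.2.2 _ _ h with h | h
  · exact forwardA a b P x y X Y hpp hP2 ha hb hxy hE hXodd hab2 h
  · obtain ⟨k, hk⟩ := h
    have h' : P ∣ X*y - x*(-Y) := ⟨k, by linear_combination hk⟩
    have hE' : a*X^2 + b*(-Y)^2 = (a*b+1)*P := by linear_combination hE
    rcases forwardA a b P x y X (-Y) hpp hP2 ha hb hxy hE' hXodd hab2 h' with ⟨h1,h2⟩|⟨h1,h2⟩
    · refine Or.inl ⟨h1, ?_⟩
      rcases h2 with h2|h2
      · exact Or.inr (by linarith)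
      · exact Or.inl (by linarith)
    · refine Or.inr ⟨h1, ?_⟩
      rcases h2 with h2|h2
      · exact Or.inr (by linarith)
      · exact Or.inl (by linarith)

lemma lemCD (a b x y : ℤ) (ha : a % 2 = 1) (hb : b % 2 = 1) (hpar : x % 2 + y % 2 = 1) :
    (4:ℤ) ∣ (x+b*y)*(y-a*x) + 1 - 2*(((a+b)/2)*x + (b+1)/2) ∧
    (4:ℤ) ∣ (x+b*y)*(y-a*x)*((x-b*y)*(y+a*x)) + 1 := by
  obtain ⟨A, hA⟩ : ∃ A, a = 2*A+1 := ⟨(a-1)/2, by omega⟩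
  obtain ⟨B, hB⟩ : ∃ B, b = 2*B+1 := ⟨(b-1)/2, by omega⟩
  have hd1 : (a+b)/2 = A+B+1 := by omega
  have hd2 : (b+1)/2 = B+1 := by omega
  rw [hd1, hd2]
  rcases (by omega : x % 2 = 0 ∧ y % 2 = 1 ∨ x % 2 = 1 ∧ y % 2 = 0) with ⟨hx,hy⟩|⟨hx,hy⟩
  · obtain ⟨U, hU⟩ : ∃ U, x = 2*U := ⟨x/2, by omega⟩
    obtain ⟨V, hV⟩ : ∃ V, y = 2*V+1 := ⟨(y-1)/2, by omega⟩
    subst hA hB hU hV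
    refine ⟨⟨(1)*V + (1)*V^2 + (-1)*U + (-1)*U^2 + (2)*B*V + (2)*B*V^2 + (-2)*B*U + (-2)*B*U*V + (-2)*A*U + (-2)*A*U*V + (-2)*A*U^2 + (-2)*A*B*U + (-4)*A*B*U*V, by ring⟩, ⟨(-2)*V + (-6)*V^2 + (-8)*V^3 + (-4)*V^4 + (2)*U^2 + (8)*U^2*V + (8)*U^2*V^2 + (-4)*U^4 + (-1)*B + (-8)*B*V + (-24)*B*V^2 + (-32)*B*V^3 + (-16)*B*V^4 + (4)*B*U^2 + (16)*B*U^2*V + (16)*B*U^2*V^2 + (-1)*B^2 + (-8)*B^2*V + (-24)*B^2*V^2 + (-32)*B^2*V^3 + (-16)*B^2*V^4 + (4)*B^2*U^2 + (16)*B^2*U^2*V + (16)*B^2*U^2*V^2 + (4)*A*U^2 + (16)*A*U^2*V + (16)*A*U^2*V^2 + (-16)*A*U^4 + (16)*A*B*U^2 + (64)*A*B*U^2*V + (64)*A*B*U^2*V^2 + (16)*A*B^2*U^2 + (64)*A*B^2*U^2*V + (64)*A*B^2*U^2*V^2 + (4)*A^2*U^2 + (16)*A^2*U^2*V + (16)*A^2*U^2*V^2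 + (-16)*A^2*U^4 + (16)*A^2*B*U^2 + (64)*A^2*B*U^2*V + (64)*A^2*B*U^2*V^2 + (16)*A^2*B^2*U^2 + (64)*A^2*B^2*U^2*V + (64)*A^2*B^2*U^2*V^2, by ring⟩⟩
  · obtain ⟨U, hU⟩ : ∃ U, x = 2*U+1 := ⟨(x-1)/2, by omega⟩
    obtain ⟨V, hV⟩ : ∃ V, y = 2*V := ⟨y/2, by omega⟩
    subst hA hB hU hV
    refine ⟨⟨(-1) + (1)*V^2 + (-2)*U + (-1)*U^2 + (-1)*B + (-1)*B*V + (2)*B*V^2 + (-1)*B*U + (-2)*B*U*V + (-1)*A + (-1)*A*V + (-3)*A*U + (-2)*A*U*V + (-2)*A*U^2 + (-2)*A*B*V + (-4)*A*B*U*V, by ring⟩, ⟨(2)*V^2 + (-4)*V^4 + (-2)*U + (8)*U*V^2 + (-6)*U^2 + (8)*U^2*V^2 + (-8)*U^3 + (-4)*U^4 + (4)*B*V^2 + (-16)*B*V^4 + (16)*B*U*V^2 + (16)*B*U^2*V^2 + (4)*B^2*V^2 + (-16)*B^2*V^4 + (16)*B^2*U*V^2 + (16)*B^2*U^2*V^2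 + (-1)*A + (4)*A*V^2 + (-8)*A*U + (16)*A*U*V^2 + (-24)*A*U^2 + (16)*A*U^2*V^2 + (-32)*A*U^3 + (-16)*A*U^4 + (16)*A*B*V^2 + (64)*A*B*U*V^2 + (64)*A*B*U^2*V^2 + (16)*A*B^2*V^2 + (64)*A*B^2*U*V^2 + (64)*A*B^2*U^2*V^2 + (-1)*A^2 + (4)*A^2*V^2 + (-8)*A^2*U + (16)*A^2*U*V^2 + (-24)*A^2*U^2 + (16)*A^2*U^2*V^2 + (-32)*A^2*U^3 + (-16)*A^2*U^4 + (16)*A^2*B*V^2 + (64)*A^2*B*U*V^2 + (64)*A^2*B*U^2*V^2 + (16)*A^2*B^2*V^2 + (64)*A^2*B^2*U*V^2 + (64)*A^2*B^2*U^2*V^2, by ring⟩⟩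

/-- `lam a b N` is λ(a, b; N+1): the finite sum of x·y over all integer pairs (x, y)
with x ≡ y ≡ 1 (mod 4) and a·x² + b·y² = 8N + a + b. -/
noncomputable def lam (a b N : ℤ) : ℤ :=
  ∑ᶠ xy ∈ {xy : ℤ × ℤ | xy.1 % 4 = 1 ∧ xy.2 % 4 = 1 ∧
      a * xy.1 ^ 2 + b * xy.2 ^ 2 = 8 * N + a + b}, xy.1 * xy.2

lemma finalsign (Q1 Q2 m A B D : ℤ)
    (hA1 : A % 4 = 1) (hB1 : B % 4 = 1)
    (hAval : A = Q1 ∨ A = -Q1) (hBval : B = Q2 ∨ B = -Q2)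
    (hC : 4 ∣ Q1 + 1 - 2*m) (hD : 4 ∣ Q1*Q2 + 1)
    (hQ12 : Q1 - Q2 = -D) :
    (-1:ℤ)^(m.natAbs) * D = A + B := by
  obtain ⟨kC, hkC⟩ := hC
  obtain ⟨kD, hkD⟩ := hD
  have hprod : Q1*Q2 = 4*kD - 1 := by linarith
  have hmul : (Q1*Q2) % 4 = ((Q1 % 4) * (Q2 % 4)) % 4 := Int.mul_emod _ _ _
  rw [hprod] at hmul
  have hQ2r : Q2 % 4 = 1 ∨ Q2 % 4 = 3 := by rcases hBval with rfl|h <;> omega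
  rcases Int.even_or_odd m with hme|hmo
  · have hpow : (-1:ℤ)^(m.natAbs) = 1 := Even.neg_one_pow (Int.natAbs_even.mpr hme)
    obtain ⟨m', hm'⟩ := hme
    have hQ1m : Q1 % 4 = 3 := by omega
    have hQ2m : Q2 % 4 = 1 := by
      rcases hQ2r with h|h
      · exact h
      · rw [hQ1m, h] at hmul; omega
    have hA' : A = -Q1 := by rcases hAval with rfl|h; · omega
                             · exact h
    have hB' : B = Q2 := by rcases hBval with rfl|h; · rfl
                            · omega
    rw [hpow, one_mul, hA', hB']; linarith
  · have hpow : (-1:ℤ)^(m.natAbs) = -1 := Odd.neg_one_pow (Int.natAbs_odd.mpr hmo)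
    obtain ⟨m', hm'⟩ := hmo
    have hQ1m : Q1 % 4 = 1 := by omega
    have hQ2m : Q2 % 4 = 3 := by
      rcases hQ2r with h|h
      · rw [hQ1m, h] at hmul; omega
      · exact h
    have hA' : A = Q1 := by rcases hAval with rfl|h; · rfl
                            · omega
    have hB' : B = -Q2 := by rcases hBval with rfl|h; · omega
                             · exact h
    rw [hpow, hA', hB']; linarith

lemma pin (X w : ℤ) (hw : w % 2 = 1) (hX : X % 4 = 1) (h : X = w ∨ X = -w) :
    X = (if w % 4 = 1 then w else -w) := by
  split_ifs with h4 <;> rcases h with rfl|rfl <;> omega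

lemma esgnmod (w : ℤ) (hw : w % 2 = 1) : (if w % 4 = 1 then w else -w) % 4 = 1 := by
  split_ifs with h4 <;> omega

theorem stmt0 (a b : ℤ) (ha : 0 < a) (hb : 0 < b) (hao : Odd a) (hbo : Odd b)
    (p : ℕ) (hp : p.Prime) (hpodd : Odd p)
    (hpa : (p : ℤ) ≠ a) (hpb : (p : ℤ) ≠ b) (hpab : ¬ ((p : ℤ) ∣ a * b + 1))
    (x y : ℤ) (hxy : (p : ℤ) = a * x ^ 2 + b * y ^ 2)
    (n : ℤ) (hn : n = ((a * b + 1) * p - a - b) / 8) :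
    (8 : ℤ) ∣ ((a * b + 1) * p - a - b) ∧ 0 < n ∧
      (-1 : ℤ) ^ (((a + b) / 2) * x + (b + 1) / 2).natAbs *
          (4 * a * x ^ 2 - 2 * (p : ℤ)) = lam a b n := by
  have hP2 : (2:ℤ) ≤ (p:ℤ) := by exact_mod_cast hp.two_le
  have hpp : Prime ((p:ℤ)) := Nat.prime_iff_prime_int.mp hp
  have ha2 : a % 2 = 1 := Int.odd_iff.mp hao
  have hb2 : b % 2 = 1 := Int.odd_iff.mp hbo
  have hP1 : ((p:ℤ)) % 2 = 1 := Int.odd_iff.mp (by exact_mod_cast hpodd)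
  have hpar : x % 2 + y % 2 = 1 := by
    have e1 : (a*x^2) % 2 = 1 * (x % 2) % 2 := by rw [Int.mul_emod, sqmod2', ha2]
    have e2 : (b*y^2) % 2 = 1 * (y % 2) % 2 := by rw [Int.mul_emod, sqmod2', hb2]
    have e3 : ((p:ℤ)) % 2 = ((a*x^2) % 2 + (b*y^2) % 2) % 2 := by rw [hxy, Int.add_emod]
    omega
  have hab2 : (a*b) % 2 = 1 := by rw [Int.mul_emod, ha2, hb2]; rfl

  have hx0 : x ≠ 0 := by
    rintro rfl
    exact key0 (p:ℤ) b 1 y hpp hP2 hb one_pos (by linear_combination hxy)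
      (fun h => by have := Int.le_of_dvd one_pos h; omega) (Ne.symm hpb)
  have hy0 : y ≠ 0 := by
    rintro rfl
    exact key0 (p:ℤ) a 1 x hpp hP2 ha one_pos (by linear_combination hxy)
      (fun h => by have := Int.le_of_dvd one_pos h; omega) (Ne.symm hpa)
  have hx1 : 1 ≤ x^2 := by have h0 : 0 < x^2 := by positivity
                           exact h0
  have hy1 : 1 ≤ y^2 := by have h0 : 0 < y^2 := by positivity
                           exact h0
  have haP : ¬ (p:ℤ) ∣ a := by
    intro h
    have h2 : (p:ℤ) ≤ a := Int.le_of_dvd ha h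
    have e1 : a*1 ≤ a*x^2 := mul_le_mul_of_nonneg_left hx1 ha.le
    have e2 : b*1 ≤ b*y^2 := mul_le_mul_of_nonneg_left hy1 hb.le
    linarith
  have hby : (b*y) % 2 = 1 * (y%2) % 2 := by rw [Int.mul_emod, hb2]
  have hax : (a*x) % 2 = 1 * (x%2) % 2 := by rw [Int.mul_emod, ha2]
  have hw1o : (x + b*y) % 2 = 1 := by omega
  have hw2o : (y - a*x) % 2 = 1 := by omega
  have hw3o : (x - b*y) % 2 = 1 := by omega
  have hw4o : (y + a*x) % 2 = 1 := by omega
  have hw1n : x + b*y ≠ 0 := fun h =>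
    key0 (p:ℤ) b (a*b+1) y hpp hP2 hb (by positivity)
      (by linear_combination hxy + a*(x - b*y)*h) hpab (Ne.symm hpb)
  have hw3n : x - b*y ≠ 0 := fun h =>
    key0 (p:ℤ) b (a*b+1) y hpp hP2 hb (by positivity)
      (by linear_combination hxy + a*(x + b*y)*h) hpab (Ne.symm hpb)
  have hw2n : y - a*x ≠ 0 := fun h =>
    key0 (p:ℤ) a (a*b+1) x hpp hP2 ha (by positivity)
      (by linear_combination hxy + b*(y + a*x)*h) hpab (Ne.symm hpa)
  have hw4n : y + a*x ≠ 0 := fun h =>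
    key0 (p:ℤ) a (a*b+1) x hpp hP2 ha (by positivity)
      (by linear_combination hxy + b*(y - a*x)*h) hpab (Ne.symm hpa)
  obtain ⟨s1, hs1⟩ := oddsq8 _ hw1o
  obtain ⟨s2, hs2⟩ := oddsq8 _ hw2o
  have hdiv : (8:ℤ) ∣ ((a*b+1)*p - a - b) :=
    ⟨a*s1 + b*s2, by linear_combination a*hs1 + b*hs2 + (a*b+1)*hxy⟩
  have h8n : 8*n = (a*b+1)*p - a - b := by
    obtain ⟨k, hk⟩ := hdiv
    rw [hn, hk, Int.mul_ediv_cancel_left k (by norm_num : (8:ℤ) ≠ 0)]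
  have hnpos : 0 < n := by
    have e1 : a*1 ≤ a*x^2 := mul_le_mul_of_nonneg_left hx1 ha.le
    have e2 : b*1 ≤ b*y^2 := mul_le_mul_of_nonneg_left hy1 hb.le
    have hab1 : 1 ≤ a*b := mul_pos ha hb
    have e3 : 2*(p:ℤ) ≤ (a*b+1)*(p:ℤ) :=
      mul_le_mul_of_nonneg_right (by linarith) (by linarith)
    linarith
  refine ⟨hdiv, hnpos, ?_⟩
  set E1 := if (x+b*y) % 4 = 1 then x+b*y else -(x+b*y) with hE1
  set E2 := if (y-a*x) % 4 = 1 then y-a*x else -(y-a*x) with hE2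
  set E3 := if (x-b*y) % 4 = 1 then x-b*y else -(x-b*y) with hE3
  set E4 := if (y+a*x) % 4 = 1 then y+a*x else -(y+a*x) with hE4
  have hE1m : E1 % 4 = 1 := esgnmod _ hw1o
  have hE2m : E2 % 4 = 1 := esgnmod _ hw2o
  have hE3m : E3 % 4 = 1 := esgnmod _ hw3o
  have hE4m : E4 % 4 = 1 := esgnmod _ hw4o
  have hset : {xy : ℤ × ℤ | xy.1 % 4 = 1 ∧ xy.2 % 4 = 1 ∧
      a * xy.1 ^ 2 + b * xy.2 ^ 2 = 8 * n + a + b} = {(E1, E2), (E3, E4)} := by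
    ext ⟨X, Y⟩
    simp only [Set.mem_setOf_eq, Set.mem_insert_iff, Set.mem_singleton_iff, Prod.mk.injEq]
    constructor
    · rintro ⟨hX4, hY4, hEq⟩
      have hE' : a*X^2 + b*Y^2 = (a*b+1)*(p:ℤ) := by linarith
      have hXodd : X % 2 = 1 := by omega
      rcases forward a b (p:ℤ) x y X Y hpp hP2 ha hb haP hxy hE' hXodd hab2 with
        ⟨hx', hy'⟩|⟨hx', hy'⟩
      · exact Or.inl ⟨pin X _ hw1o hX4 hx', pin Y _ hw2o hY4 hy'⟩
      · exact Or.inr ⟨pin X _ hw3o hX4 hx', pin Y _ hw4o hY4 hy'⟩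
    · have sq1 : E1^2 = (x+b*y)^2 := by rw [hE1]; split_ifs <;> ring
      have sq2 : E2^2 = (y-a*x)^2 := by rw [hE2]; split_ifs <;> ring
      have sq3 : E3^2 = (x-b*y)^2 := by rw [hE3]; split_ifs <;> ring
      have sq4 : E4^2 = (y+a*x)^2 := by rw [hE4]; split_ifs <;> ring
      rintro (⟨rfl, rfl⟩ | ⟨rfl, rfl⟩)
      · exact ⟨hE1m, hE2m, by rw [sq1, sq2]; linear_combination -h8n - (a*b+1)*hxy⟩
      · exact ⟨hE3m, hE4m, by rw [sq3, sq4]; linear_combination -h8n - (a*b+1)*hxy⟩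
  have hne : ((E1, E2) : ℤ × ℤ) ≠ (E3, E4) := by
    intro hcontra
    have h1 : E1 = E3 := congrArg Prod.fst hcontra
    rw [hE1, hE3] at h1
    have hby0 : b*y ≠ 0 := mul_ne_zero (by omega) hy0
    revert h1
    split_ifs <;> intro h1
    · exact hby0 (by linarith)
    · exact hx0 (by linarith)
    · exact hx0 (by linarith)
    · exact hby0 (by linarith)
  have hlam : lam a b n = E1 * E2 + E3 * E4 := by
    rw [lam, hset, finsum_mem_pair hne]
  rw [hlam]
  have hA1 : (E1 * E2) % 4 = 1 := by rw [Int.mul_emod, hE1m, hE2m]; rfl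
  have hB1 : (E3 * E4) % 4 = 1 := by rw [Int.mul_emod, hE3m, hE4m]; rfl
  have hAval : E1 * E2 = (x+b*y)*(y-a*x) ∨ E1 * E2 = -((x+b*y)*(y-a*x)) := by
    rw [hE1, hE2]; split_ifs
    · exact Or.inl rfl
    · exact Or.inr (by ring)
    · exact Or.inr (by ring)
    · exact Or.inl (by ring)
  have hBval : E3 * E4 = (x-b*y)*(y+a*x) ∨ E3 * E4 = -((x-b*y)*(y+a*x)) := by
    rw [hE3, hE4]; split_ifs
    · exact Or.inl rfl
    · exact Or.inr (by ring)
    · exact Or.inr (by ring)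
    · exact Or.inl (by ring)
  obtain ⟨hC, hD⟩ := lemCD a b x y ha2 hb2 hpar
  exact finalsign ((x+b*y)*(y-a*x)) ((x-b*y)*(y+a*x)) _ (E1*E2) (E3*E4)
    (4*a*x^2 - 2*(p:ℤ)) hA1 hB1 hAval hBval hC hD (by linear_combination -2*hxy)
end

section
/- Let a and b be coprime positive integers with ab odd, and let p be an odd prime such that p ≠ ab, p ≠ ab + 1, and p = x² + aby² for some integers x, y. Then n = (a+b)(p−1)/8 is a nonnegative integer and (−1)^{((ab+1)/2)·y} · (4x² − 2p) = λ(a, b; n+1). -/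
def modFourSign (m : ℤ) : ℤ := if m % 4 = 1 then 1 else -1

lemma modFourSign_sq (m : ℤ) : modFourSign m ^ 2 = 1 := by
  unfold modFourSign; split_ifs <;> norm_num

lemma modFourSign_mul_self_emod_four {m : ℤ} (hm : Odd m) : modFourSign m * m % 4 = 1 := by
  have := Int.odd_iff.mp hm
  unfold modFourSign; split_ifs <;> omega

lemma eq_modFourSign_mul_of_sq_eq {X m : ℤ} (hX : X % 4 = 1) (h : X ^ 2 = m ^ 2) :
    X = modFourSign m * m := by
  unfold modFourSign
  rcases sq_eq_sq_iff_eq_or_eq_neg.mp h with rfl | rfl <;> split_ifs <;> omega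

lemma modFourSign_mul {m m' : ℤ} (hm : Odd m) (hm' : Odd m') :
    modFourSign (m * m') = modFourSign m * modFourSign m' := by
  have h := Int.mul_emod m m' 4
  have := Int.odd_iff.mp hm
  have := Int.odd_iff.mp hm'
  rcases (by omega : m % 4 = 1 ∨ m % 4 = 3) with h1 | h1 <;>
    rcases (by omega : m' % 4 = 1 ∨ m' % 4 = 3) with h2 | h2 <;>
    simp [modFourSign, h, h1, h2]

lemma modFourSign_congr {m m' : ℤ} (h : m ≡ m' [ZMOD 4]) : modFourSign m = modFourSign m' := by
  simp only [modFourSign, show m % 4 = m' % 4 from h]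

lemma odd_add_mul_of_odd_add {x y c : ℤ} (h : Odd (x + y)) (hc : Odd c) : Odd (x + c * y) := by
  obtain ⟨k, rfl⟩ := hc
  have e : x + (2 * k + 1) * y = x + y + 2 * (k * y) := by ring
  exact e ▸ h.add_even (even_two_mul _)

lemma odd_sub_mul_of_odd_add {x y c : ℤ} (h : Odd (x + y)) (hc : Odd c) : Odd (x - c * y) := by
  simpa [sub_eq_add_neg] using odd_add_mul_of_odd_add h hc.neg

section Representation

variable {a b p x y X Y s t : ℤ}

lemma exists_solution_of_dvd (hp : Prime p) (hpa : ¬p ∣ a) (hxy : p = x ^ 2 + a * b * y ^ 2)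
    (hXY : a * X ^ 2 + b * Y ^ 2 = (a + b) * p) (hdvd : p ∣ x * Y - a * y * X) :
    ∃ s t, a * s ^ 2 + b * t ^ 2 = a + b ∧ X = s * x - b * t * y ∧ Y = a * s * y + t * x := by
  obtain ⟨t, ht⟩ := hdvd
  have hkey : a * (x * X + b * y * Y) ^ 2 = p ^ 2 * (a + b - b * t ^ 2) := by
    linear_combination (x ^ 2 + a * b * y ^ 2) * hXY - (a + b) * p * hxy
      - b * (x * Y - a * y * X + p * t) * ht
  obtain ⟨s, hs⟩ : p ∣ x * X + b * y * Y := by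
    have : p ∣ a * (x * X + b * y * Y) ^ 2 := ⟨p * (a + b - b * t ^ 2), by rw [hkey]; ring⟩
    exact hp.dvd_of_dvd_pow ((hp.dvd_mul.mp this).resolve_left hpa)
  have hp0 := hp.ne_zero
  refine ⟨s, t, ?_, ?_, ?_⟩
  · refine mul_left_cancel₀ (pow_ne_zero 2 hp0) ?_
    linear_combination hkey - a * (x * X + b * y * Y + p * s) * hs
  · refine mul_left_cancel₀ hp0 ?_
    linear_combination x * hs - b * y * ht + X * hxy
  · refine mul_left_cancel₀ hp0 ?_
    linear_combination a * y * hs + x * ht + Y * hxy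

lemma odd_and_odd_of_eq (hao : Odd a) (hbo : Odd b) (hodd : Odd (x + y)) (hX : Odd X)
    (hY : Odd Y) (hXe : X = s * x - b * t * y) (hYe : Y = a * s * y + t * x) :
    Odd s ∧ Odd t := by
  simp only [← ZMod.intCast_eq_one_iff_odd] at *
  subst hXe hYe
  push_cast at *
  rw [hao, hbo] at *
  generalize (s : ZMod 2) = s, (t : ZMod 2) = t, (x : ZMod 2) = x, (y : ZMod 2) = y at *
  decide +revert

lemma sq_eq_one_of_odd (ha : 0 < a) (hb : 0 < b) (h : a * s ^ 2 + b * t ^ 2 = a + b)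
    (hs : Odd s) (ht : Odd t) : s ^ 2 = 1 ∧ t ^ 2 = 1 := by
  have hs0 : s ≠ 0 := by have := Int.odd_iff.mp hs; omega
  have ht0 : t ≠ 0 := by have := Int.odd_iff.mp ht; omega
  have hs1 : 0 < s ^ 2 := by positivity
  have ht1 : 0 < t ^ 2 := by positivity
  constructor <;> nlinarith

lemma sq_eq_sq_of_dvd (ha : 0 < a) (hb : 0 < b) (hao : Odd a) (hbo : Odd b) (hp : Prime p)
    (hpa : ¬p ∣ a) (hxy : p = x ^ 2 + a * b * y ^ 2) (hodd : Odd (x + y)) (hX : Odd X)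
    (hY : Odd Y) (hXY : a * X ^ 2 + b * Y ^ 2 = (a + b) * p) (hdvd : p ∣ x * Y - a * y * X) :
    X ^ 2 = (x + b * y) ^ 2 ∧ Y ^ 2 = (x - a * y) ^ 2 ∨
      X ^ 2 = (x - b * y) ^ 2 ∧ Y ^ 2 = (x + a * y) ^ 2 := by
  obtain ⟨s, t, hst, hXe, hYe⟩ := exists_solution_of_dvd hp hpa hxy hXY hdvd
  obtain ⟨hs, ht⟩ := odd_and_odd_of_eq hao hbo hodd hX hY hXe hYe
  obtain ⟨hs1, ht1⟩ := sq_eq_one_of_odd ha hb hst hs ht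
  subst hXe hYe
  rcases mul_self_eq_one_iff.mp (show s * t * (s * t) = 1 by linear_combination t ^ 2 * hs1 + ht1)
    with hst1 | hst1 <;> [right; left] <;>
    exact ⟨by linear_combination x ^ 2 * hs1 + b ^ 2 * y ^ 2 * ht1 - 2 * b * x * y * hst1,
      by linear_combination a ^ 2 * y ^ 2 * hs1 + x ^ 2 * ht1 + 2 * a * x * y * hst1⟩

lemma sq_eq_sq_of_add_sq_eq (ha : 0 < a) (hb : 0 < b) (hao : Odd a) (hbo : Odd b)
    (hp : Prime p) (hpa : ¬p ∣ a) (hxy : p = x ^ 2 + a * b * y ^ 2) (hodd : Odd (x + y))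
    (hX : Odd X) (hY : Odd Y) (hXY : a * X ^ 2 + b * Y ^ 2 = (a + b) * p) :
    X ^ 2 = (x + b * y) ^ 2 ∧ Y ^ 2 = (x - a * y) ^ 2 ∨
      X ^ 2 = (x - b * y) ^ 2 ∧ Y ^ 2 = (x + a * y) ^ 2 := by
  -- `x² ≡ -aby² (mod p)` turns `x²Y² - a²y²X²` into `-ay²(aX² + bY²) ≡ 0`.
  have hprod : p ∣ (x * Y - a * y * X) * (x * Y - a * (-y) * X) :=
    ⟨Y ^ 2 - a * (a + b) * y ^ 2, by linear_combination -Y ^ 2 * hxy - a * y ^ 2 * hXY⟩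
  rcases hp.dvd_mul.mp hprod with hdvd | hdvd
  · exact sq_eq_sq_of_dvd ha hb hao hbo hp hpa hxy hodd hX hY hXY hdvd
  · have hxy' : p = x ^ 2 + a * b * (-y) ^ 2 := by rw [hxy]; ring
    have hodd' : Odd (x + -y) :=
      (by ring : x + y - 2 * y = x + -y) ▸ hodd.sub_even (even_two_mul y)
    rcases sq_eq_sq_of_dvd ha hb hao hbo hp hpa hxy' hodd' hX hY hXY hdvd with ⟨h1, h2⟩ | ⟨h1, h2⟩
    · right; constructor <;> [linear_combination h1; linear_combination h2]
    · left; constructor <;> [linear_combination h1; linear_combination h2]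

lemma solutions_eq_pair (ha : 0 < a) (hb : 0 < b) (hao : Odd a) (hbo : Odd b) (hp : Prime p)
    (hpa : ¬p ∣ a) (hxy : p = x ^ 2 + a * b * y ^ 2) (hodd : Odd (x + y)) :
    {XY : ℤ × ℤ | XY.1 % 4 = 1 ∧ XY.2 % 4 = 1 ∧ a * XY.1 ^ 2 + b * XY.2 ^ 2 = (a + b) * p} =
      {(modFourSign (x + b * y) * (x + b * y), modFourSign (x - a * y) * (x - a * y)),
        (modFourSign (x - b * y) * (x - b * y), modFourSign (x + a * y) * (x + a * y))} := by
  ext ⟨X, Y⟩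
  simp only [Set.mem_ofPred_eq, Set.mem_insert_iff, Set.mem_singleton_iff, Prod.mk.injEq]
  constructor
  · rintro ⟨hX, hY, hXY⟩
    have hXo : Odd X := Int.odd_iff.mpr (by omega)
    have hYo : Odd Y := Int.odd_iff.mpr (by omega)
    rcases sq_eq_sq_of_add_sq_eq ha hb hao hbo hp hpa hxy hodd hXo hYo hXY with ⟨h1, h2⟩ | ⟨h1, h2⟩
    · exact Or.inl ⟨eq_modFourSign_mul_of_sq_eq hX h1, eq_modFourSign_mul_of_sq_eq hY h2⟩
    · exact Or.inr ⟨eq_modFourSign_mul_of_sq_eq hX h1, eq_modFourSign_mul_of_sq_eq hY h2⟩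
  · rintro (⟨rfl, rfl⟩ | ⟨rfl, rfl⟩) <;> simp only [mul_pow, modFourSign_sq, one_mul]
    · exact ⟨modFourSign_mul_self_emod_four (odd_add_mul_of_odd_add hodd hbo),
        modFourSign_mul_self_emod_four (odd_sub_mul_of_odd_add hodd hao), by rw [hxy]; ring⟩
    · exact ⟨modFourSign_mul_self_emod_four (odd_sub_mul_of_odd_add hodd hbo),
        modFourSign_mul_self_emod_four (odd_add_mul_of_odd_add hodd hao), by rw [hxy]; ring⟩

end Representation

section Signs

variable {a b x y : ℤ}

lemma modFourSign_mul_add_ne (hb : b ≠ 0) (hx : x ≠ 0) (hy : y ≠ 0) :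
    modFourSign (x + b * y) * (x + b * y) ≠ modFourSign (x - b * y) * (x - b * y) := by
  intro h
  have h2 := congrArg (· ^ 2) h
  simp only [mul_pow, modFourSign_sq, one_mul] at h2
  have : 4 * b * x * y = 0 := by linear_combination h2
  simp [hb, hx, hy] at this

lemma add_mul_mul_sub_mul_modEq (hao : Odd a) (hbo : Odd b) (hodd : Odd (x + y)) :
    (x + b * y) * (x - a * y) ≡ x ^ 2 - a * b * y ^ 2 [ZMOD 4] ∧
      (x - b * y) * (x + a * y) ≡ x ^ 2 - a * b * y ^ 2 [ZMOD 4] := by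
  have hxy : Even (x * y) := by
    rcases Int.even_or_odd x with hx | hx
    · exact hx.mul_right y
    · exact (Int.odd_add.mp hodd |>.mp hx).mul_left x
  obtain ⟨k, hk⟩ : 2 * 2 ∣ (a - b) * (x * y) :=
    mul_dvd_mul (hao.sub_odd hbo).two_dvd hxy.two_dvd
  exact ⟨Int.modEq_iff_dvd.mpr ⟨k, by linear_combination hk⟩,
    Int.modEq_iff_dvd.mpr ⟨-k, by linear_combination -hk⟩⟩

lemma modFourSign_sq_sub_mul_sq (hao : Odd a) (hbo : Odd b) (hodd : Odd (x + y)) :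
    modFourSign (x ^ 2 - a * b * y ^ 2) = (-1) ^ ((a * b + 1) / 2 * y).natAbs := by
  rcases Int.even_or_odd y with hy | hy
  · have hx4 := Int.sq_mod_four_eq_one_of_odd (Int.odd_add.mp hodd |>.mpr hy)
    rw [(Int.natAbs_even.mpr (hy.mul_left _)).neg_one_pow]
    obtain ⟨k, rfl⟩ := hy
    have e : a * b * (k + k) ^ 2 = 4 * (a * b * k ^ 2) := by ring
    rw [modFourSign, if_pos (by omega)]
  · obtain ⟨r, rfl⟩ : Even x := (Int.odd_add'.mp hodd).mp hy
    have hab := Int.odd_iff.mp (hao.mul hbo)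
    obtain ⟨w, hw⟩ := Int.eight_dvd_sq_sub_one_of_odd hy
    have e₁ : (r + r) ^ 2 = 4 * r ^ 2 := by ring
    have e₂ : a * b * y ^ 2 = a * b + 8 * (a * b * w) := by linear_combination a * b * hw
    rcases Int.even_or_odd ((a * b + 1) / 2) with hk | hk
    · have := Int.even_iff.mp hk
      rw [(Int.natAbs_even.mpr (hk.mul_right y)).neg_one_pow, modFourSign, if_pos (by omega)]
    · have := Int.odd_iff.mp hk
      rw [(Int.natAbs_odd.mpr (hk.mul hy)).neg_one_pow, modFourSign, if_neg (by omega)]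

lemma pair_products_sum (hao : Odd a) (hbo : Odd b) (hodd : Odd (x + y)) :
    modFourSign (x + b * y) * (x + b * y) * (modFourSign (x - a * y) * (x - a * y)) +
      modFourSign (x - b * y) * (x - b * y) * (modFourSign (x + a * y) * (x + a * y)) =
      (-1) ^ ((a * b + 1) / 2 * y).natAbs * (2 * x ^ 2 - 2 * a * b * y ^ 2) := by
  obtain ⟨h₁, h₂⟩ := add_mul_mul_sub_mul_modEq hao hbo hodd
  rw [mul_mul_mul_comm, ← modFourSign_mul (odd_add_mul_of_odd_add hodd hbo)
      (odd_sub_mul_of_odd_add hodd hao), modFourSign_congr h₁,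
    mul_mul_mul_comm, ← modFourSign_mul (odd_sub_mul_of_odd_add hodd hbo)
      (odd_add_mul_of_odd_add hodd hao), modFourSign_congr h₂,
    modFourSign_sq_sub_mul_sq hao hbo hodd]
  ring

end Signs

lemma ne_zero_and_ne_zero_of_prime_eq {p c x y : ℤ} (hp : Prime p) (hpc : p ≠ c)
    (h : p = x ^ 2 + c * y ^ 2) : x ≠ 0 ∧ y ≠ 0 := by
  have hsf := hp.irreducible.squarefree
  constructor
  · rintro rfl
    have hy := Int.isUnit_sq (hsf y ⟨c, by rw [h]; ring⟩)
    exact hpc (by rw [h, hy]; ring)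
  · rintro rfl
    have hx := Int.isUnit_sq (hsf x ⟨1, by rw [h]; ring⟩)
    exact hp.not_isUnit (by rw [h, hx]; simp)

lemma not_dvd_of_prime_eq {p c x y : ℤ} (hp : Prime p) (hc : 0 ≤ c) (hx : x ≠ 0)
    (h : p = x ^ 2 + c * y ^ 2) : ¬p ∣ c := by
  intro hpc
  have hpx : p ∣ x := hp.dvd_of_dvd_pow (n := 2)
    ((by rw [h]; ring : x ^ 2 = p - c * y ^ 2) ▸ dvd_sub dvd_rfl (hpc.mul_right _))
  have hp2 : p ^ 2 ≤ x ^ 2 := Int.le_of_dvd (by positivity) (pow_dvd_pow_of_dvd hpx 2)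
  have hcy : 0 ≤ c * y ^ 2 := by positivity
  have hx2 : 0 < x ^ 2 := by positivity
  have hp1 : 1 < p := by have := hp.ne_one; omega
  nlinarith

lemma eight_dvd_add_mul_sub_one {a b p x y : ℤ} (hao : Odd a) (hbo : Odd b) (hodd : Odd (x + y))
    (hxy : p = x ^ 2 + a * b * y ^ 2) : 8 ∣ (a + b) * (p - 1) := by
  have hX := Int.eight_dvd_sq_sub_one_of_odd (odd_add_mul_of_odd_add hodd hbo)
  have hY := Int.eight_dvd_sq_sub_one_of_odd (odd_sub_mul_of_odd_add hodd hao)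
  have e : (a + b) * (p - 1) = a * ((x + b * y) ^ 2 - 1) + b * ((x - a * y) ^ 2 - 1) := by
    rw [hxy]; ring
  exact e ▸ dvd_add (hX.mul_left a) (hY.mul_left b)

theorem stmt3_general (a b : ℤ) (ha : 0 < a) (hb : 0 < b) (hao : Odd a) (hbo : Odd b)
    (p : ℕ) (hp : p.Prime) (hpodd : Odd p)
    (hpab : (p : ℤ) ≠ a * b)
    (x y : ℤ) (hxy : (p : ℤ) = x ^ 2 + a * b * y ^ 2)
    (n : ℤ) (hn : n = (a + b) * ((p : ℤ) - 1) / 8) :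
    (8 : ℤ) ∣ (a + b) * ((p : ℤ) - 1) ∧ 0 ≤ n ∧
      (-1 : ℤ) ^ (((a * b + 1) / 2) * y).natAbs * (4 * x ^ 2 - 2 * (p : ℤ)) = lam a b n := by
  have hpz : Prime (p : ℤ) := Nat.prime_iff_prime_int.mp hp
  have hab : 0 < a * b := mul_pos ha hb
  obtain ⟨hx, hy⟩ := ne_zero_and_ne_zero_of_prime_eq hpz hpab hxy
  have hpa : ¬(p : ℤ) ∣ a := fun h => not_dvd_of_prime_eq hpz hab.le hx hxy (h.mul_right b)
  have hodd : Odd (x + y) := by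
    have := (Int.odd_coe_nat p).mpr hpodd
    rw [hxy] at this
    simpa [parity_simps, Int.not_even_iff_odd.mpr hao, Int.not_even_iff_odd.mpr hbo] using this
  have h8 := eight_dvd_add_mul_sub_one hao hbo hodd hxy
  have hn8 : 8 * n = (a + b) * (p - 1) := hn ▸ Int.mul_ediv_cancel' h8
  have hp1 : (1 : ℤ) ≤ p := by exact_mod_cast hp.one_lt.le
  refine ⟨h8, by nlinarith, ?_⟩
  rw [lam, show 8 * n + a + b = (a + b) * p by linear_combination hn8,
    solutions_eq_pair ha hb hao hbo hpz hpa hxy hodd,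
    finsum_mem_pair (ne_of_apply_ne Prod.fst (modFourSign_mul_add_ne hb.ne' hx hy)),
    pair_products_sum hao hbo hodd]
  linear_combination (-2 * (-1 : ℤ) ^ ((a * b + 1) / 2 * y).natAbs) * hxy

theorem stmt3 (a b : ℤ) (ha : 0 < a) (hb : 0 < b) (hao : Odd a) (hbo : Odd b)
    (hcop : IsCoprime a b)
    (p : ℕ) (hp : p.Prime) (hpodd : Odd p)
    (hpab : (p : ℤ) ≠ a * b) (hpab1 : (p : ℤ) ≠ a * b + 1)
    (x y : ℤ) (hxy : (p : ℤ) = x ^ 2 + a * b * y ^ 2)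
    (n : ℤ) (hn : n = (a + b) * ((p : ℤ) - 1) / 8) :
    (8 : ℤ) ∣ (a + b) * ((p : ℤ) - 1) ∧ 0 ≤ n ∧
      (-1 : ℤ) ^ (((a * b + 1) / 2) * y).natAbs * (4 * x ^ 2 - 2 * (p : ℤ)) = lam a b n :=
  stmt3_general a b ha hb hao hbo p hp hpodd hpab x y hxy n hn
end

section
/- Let a and b be coprime positive integers with a odd, b even and b not divisible by 8, and let p be a prime with p ≡ 1 (mod 8) such that p ≠ ab, p ≠ ab + 1, and p = x² + aby² for some integers x, y. Then y is even, n = (a+b)(p−1)/8 is a nonnegative integer, and (−1)^{y/2} · (4x² − 2p) = λ(a, b; n+1). -/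
/-- For odd `m`, the one of `±m` that is `≡ 1 mod 4`. -/
def oneModFourAssociate (m : ℤ) : ℤ := if m % 4 = 1 then m else -m

lemma oneModFourAssociate_emod_four {m : ℤ} (hm : Odd m) : oneModFourAssociate m % 4 = 1 := by
  obtain ⟨k, rfl⟩ := hm
  unfold oneModFourAssociate
  split_ifs <;> omega

lemma oneModFourAssociate_sq (m : ℤ) : oneModFourAssociate m ^ 2 = m ^ 2 := by
  unfold oneModFourAssociate
  split_ifs <;> ring

lemma eq_oneModFourAssociate_of_sq_eq {u m : ℤ} (hu : u % 4 = 1) (h : u ^ 2 = m ^ 2) :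
    u = oneModFourAssociate m := by
  unfold oneModFourAssociate
  rcases sq_eq_sq_iff_eq_or_eq_neg.1 h with rfl | rfl <;> split_ifs <;> omega

lemma oneModFourAssociate_mul {m k : ℤ} (hm : Odd m) (hk : Odd k) :
    oneModFourAssociate m * oneModFourAssociate k = oneModFourAssociate (m * k) := by
  refine eq_oneModFourAssociate_of_sq_eq ?_ (by simp only [mul_pow, oneModFourAssociate_sq])
  rw [Int.mul_emod, oneModFourAssociate_emod_four hm, oneModFourAssociate_emod_four hk]
  rfl

lemma oneModFourAssociate_eq_neg_one_pow_mul {m t : ℤ} (h : m % 4 = (1 + 2 * t) % 4) :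
    oneModFourAssociate m = (-1) ^ t.natAbs * m := by
  unfold oneModFourAssociate
  rcases Int.even_or_odd t with ht | ht
  · rw [(Int.natAbs_even.2 ht).neg_one_pow]
    obtain ⟨s, rfl⟩ := ht
    split_ifs <;> omega
  · rw [(Int.natAbs_odd.2 ht).neg_one_pow]
    obtain ⟨s, rfl⟩ := ht
    split_ifs <;> omega

lemma one_le_sq_of_ne_zero {m : ℤ} (hm : m ≠ 0) : 1 ≤ m ^ 2 :=
  (one_le_sq_iff_one_le_abs m).2 (Int.one_le_abs hm)

section Representations

variable {a b p x y u v : ℤ}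

lemma sq_eq_one_of_mul_sq_add_mul_sq_eq_add {α β : ℤ} (ha : 0 < a) (hb : 0 < b)
    (hα : Odd α) (hβ : Odd β) (h : a * α ^ 2 + b * β ^ 2 = a + b) :
    α ^ 2 = 1 ∧ β ^ 2 = 1 := by
  have hα1 := one_le_sq_of_ne_zero (show α ≠ 0 by rintro rfl; simp at hα)
  have hβ1 := one_le_sq_of_ne_zero (show β ≠ 0 by rintro rfl; simp at hβ)
  constructor <;> nlinarith

lemma exists_mul_sq_add_mul_sq_eq_add (hp : Prime p) (hpb : ¬ p ∣ b)
    (hpxy : p = x ^ 2 + a * b * y ^ 2) (huv : a * u ^ 2 + b * v ^ 2 = (a + b) * p)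
    (hdvd : p ∣ x * u + b * y * v) :
    ∃ α β, x * u + b * y * v = p * α ∧ x * v - a * y * u = p * β ∧
      a * α ^ 2 + b * β ^ 2 = a + b := by
  have composition :
      a * (x * u + b * y * v) ^ 2 + b * (x * v - a * y * u) ^ 2 = (a + b) * p ^ 2 := by
    linear_combination (-(a * u ^ 2 + b * v ^ 2)) * hpxy + p * huv
  obtain ⟨α, hα⟩ := hdvd
  obtain ⟨β, hβ⟩ : p ∣ x * v - a * y * u := by
    have : p ∣ b * (x * v - a * y * u) ^ 2 :=
      ⟨p * (a + b - a * α ^ 2),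
        by linear_combination composition - a * (x * u + b * y * v + p * α) * hα⟩
    exact hp.dvd_of_dvd_pow ((hp.dvd_or_dvd this).resolve_left hpb)
  refine ⟨α, β, hα, hβ, mul_left_cancel₀ (pow_ne_zero 2 hp.ne_zero) ?_⟩
  rw [hα, hβ] at composition
  linear_combination composition

lemma sq_eq_of_mul_sq_add_mul_sq_eq_of_dvd (ha : 0 < a) (hb : 0 < b) (hp : Prime p)
    (hpb : ¬ p ∣ b) (hbe : Even b) (hx : Odd x) (hy : Even y) (hu : Odd u) (hv : Odd v)
    (hpxy : p = x ^ 2 + a * b * y ^ 2) (huv : a * u ^ 2 + b * v ^ 2 = (a + b) * p)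
    (hdvd : p ∣ x * u + b * y * v) :
    (u ^ 2 = (x - b * y) ^ 2 ∧ v ^ 2 = (x + a * y) ^ 2) ∨
      (u ^ 2 = (x + b * y) ^ 2 ∧ v ^ 2 = (x - a * y) ^ 2) := by
  obtain ⟨α, β, hα, hβ, hαβ⟩ := exists_mul_sq_add_mul_sq_eq_add hp hpb hpxy huv hdvd
  have hα_odd : Odd α :=
    (Int.odd_mul.1 (hα ▸ (hx.mul hu).add_even ((hbe.mul_right y).mul_right v))).2
  have hβ_odd : Odd β :=
    (Int.odd_mul.1 (hβ ▸ (hx.mul hv).sub_even ((hy.mul_left a).mul_right u))).2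
  obtain ⟨hα1, hβ1⟩ := sq_eq_one_of_mul_sq_add_mul_sq_eq_add ha hb hα_odd hβ_odd hαβ
  -- `p u = x (x u + b y v) - b y (x v - a y u)` and `p v = a y (x u + b y v) + x (x v - a y u)`
  have hu' : u = α * x - β * (b * y) := mul_left_cancel₀ hp.ne_zero <| by
    linear_combination u * hpxy + x * hα - b * y * hβ
  have hv' : v = β * x + α * (a * y) := mul_left_cancel₀ hp.ne_zero <| by
    linear_combination v * hpxy + a * y * hα + x * hβ
  have hu2 : u ^ 2 = (x - α * β * (b * y)) ^ 2 := by
    rw [hu']; linear_combination (x ^ 2 - β ^ 2 * (b * y) ^ 2) * hα1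
  have hv2 : v ^ 2 = (x + α * β * (a * y)) ^ 2 := by
    rw [hv']; linear_combination (x ^ 2 - α ^ 2 * (a * y) ^ 2) * hβ1
  rcases sq_eq_one_iff.1 (show (α * β) ^ 2 = 1 by rw [mul_pow, hα1, hβ1, one_mul]) with h | h
  · rw [h, one_mul] at hu2 hv2
    exact .inl ⟨hu2, hv2⟩
  · rw [h, neg_one_mul, sub_neg_eq_add] at hu2
    rw [h, neg_one_mul, ← sub_eq_add_neg] at hv2
    exact .inr ⟨hu2, hv2⟩

lemma sq_eq_of_mul_sq_add_mul_sq_eq (ha : 0 < a) (hb : 0 < b) (hp : Prime p) (hpb : ¬ p ∣ b)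
    (hbe : Even b) (hx : Odd x) (hy : Even y) (hu : Odd u) (hv : Odd v)
    (hpxy : p = x ^ 2 + a * b * y ^ 2) (huv : a * u ^ 2 + b * v ^ 2 = (a + b) * p) :
    (u ^ 2 = (x + b * y) ^ 2 ∧ v ^ 2 = (x - a * y) ^ 2) ∨
      (u ^ 2 = (x - b * y) ^ 2 ∧ v ^ 2 = (x + a * y) ^ 2) := by
  have hprod : p ∣ (x * u + b * y * v) * (x * u - b * y * v) :=
    ⟨u ^ 2 - b * (a + b) * y ^ 2, by linear_combination (-u ^ 2) * hpxy - b * y ^ 2 * huv⟩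
  rcases hp.dvd_or_dvd hprod with hdvd | hdvd
  · exact (sq_eq_of_mul_sq_add_mul_sq_eq_of_dvd ha hb hp hpb hbe hx hy hu hv hpxy huv hdvd).symm
  · have hpxy' : p = x ^ 2 + a * b * (-y) ^ 2 := by rw [neg_sq]; exact hpxy
    have hdvd' : p ∣ x * u + b * -y * v := by
      rwa [show x * u + b * -y * v = x * u - b * y * v by ring]
    rcases sq_eq_of_mul_sq_add_mul_sq_eq_of_dvd ha hb hp hpb hbe hx hy.neg hu hv hpxy' huv hdvd'
      with ⟨h1, h2⟩ | ⟨h1, h2⟩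
    · exact .inl ⟨by linear_combination h1, by linear_combination h2⟩
    · exact .inr ⟨by linear_combination h1, by linear_combination h2⟩

lemma setOf_mul_sq_add_mul_sq_eq (ha : 0 < a) (hb : 0 < b) (hp : Prime p) (hpb : ¬ p ∣ b)
    (hbe : Even b) (hx : Odd x) (hy : Even y) (hpxy : p = x ^ 2 + a * b * y ^ 2) :
    {uv : ℤ × ℤ | uv.1 % 4 = 1 ∧ uv.2 % 4 = 1 ∧
        a * uv.1 ^ 2 + b * uv.2 ^ 2 = (a + b) * p} =
      {(oneModFourAssociate (x + b * y), oneModFourAssociate (x - a * y)),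
        (oneModFourAssociate (x - b * y), oneModFourAssociate (x + a * y))} := by
  ext ⟨u, v⟩
  simp only [Set.mem_ofPred_eq, Set.mem_insert_iff, Set.mem_singleton_iff, Prod.mk.injEq]
  constructor
  · rintro ⟨hu, hv, huv⟩
    have hu_odd : Odd u := Int.odd_iff.2 (by omega)
    have hv_odd : Odd v := Int.odd_iff.2 (by omega)
    rcases sq_eq_of_mul_sq_add_mul_sq_eq ha hb hp hpb hbe hx hy hu_odd hv_odd hpxy huv with
      ⟨h1, h2⟩ | ⟨h1, h2⟩
    · exact .inl ⟨eq_oneModFourAssociate_of_sq_eq hu h1, eq_oneModFourAssociate_of_sq_eq hv h2⟩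
    · exact .inr ⟨eq_oneModFourAssociate_of_sq_eq hu h1, eq_oneModFourAssociate_of_sq_eq hv h2⟩
  · have hby : Even (b * y) := hbe.mul_right y
    have hay : Even (a * y) := hy.mul_left a
    rintro (⟨rfl, rfl⟩ | ⟨rfl, rfl⟩) <;> simp only [oneModFourAssociate_sq]
    · exact ⟨oneModFourAssociate_emod_four (hx.add_even hby),
        oneModFourAssociate_emod_four (hx.sub_even hay), by linear_combination -(a + b) * hpxy⟩
    · exact ⟨oneModFourAssociate_emod_four (hx.sub_even hby),
        oneModFourAssociate_emod_four (hx.add_even hay), by linear_combination -(a + b) * hpxy⟩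

lemma lam_eq_of_eq_sq_add_mul_sq (ha : 0 < a) (hb : 0 < b) (hp : Prime p) (hpb : ¬ p ∣ b)
    (hbe : Even b) (hx : Odd x) (hy : Even y) (hy0 : y ≠ 0) (hpxy : p = x ^ 2 + a * b * y ^ 2)
    {N : ℤ} (hN : 8 * N + a + b = (a + b) * p) :
    lam a b N = oneModFourAssociate (x + b * y) * oneModFourAssociate (x - a * y) +
      oneModFourAssociate (x - b * y) * oneModFourAssociate (x + a * y) := by
  have hne : (oneModFourAssociate (x + b * y), oneModFourAssociate (x - a * y)) ≠
      (oneModFourAssociate (x - b * y), oneModFourAssociate (x + a * y)) := by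
    intro h
    have h1 := congrArg (fun uv : ℤ × ℤ ↦ uv.1 ^ 2) h
    simp only [oneModFourAssociate_sq] at h1
    have : 4 * (b * x * y) = 0 := by linear_combination h1
    simp [hb.ne', hy0, (show x ≠ 0 by rintro rfl; simp at hx)] at this
  unfold lam
  rw [hN, setOf_mul_sq_add_mul_sq_eq ha hb hp hpb hbe hx hy hpxy, finsum_mem_pair hne]

lemma oneModFourAssociate_sum_eq (hao : Odd a) (hbe : Even b) (hx : Odd x)
    (hp8 : p % 8 = 1) (hpxy : p = x ^ 2 + a * b * y ^ 2) {t : ℤ} (hy : y = 2 * t) :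
    oneModFourAssociate (x + b * y) * oneModFourAssociate (x - a * y) +
      oneModFourAssociate (x - b * y) * oneModFourAssociate (x + a * y) =
      (-1) ^ t.natAbs * (4 * x ^ 2 - 2 * p) := by
  have hby : Even (b * y) := hbe.mul_right y
  have hay : Even (a * y) := (hy ▸ even_two_mul t).mul_left a
  obtain ⟨k, hk⟩ := Int.eight_dvd_sq_sub_one_of_odd hx
  obtain ⟨l, hl⟩ : (8 : ℤ) ∣ p - 1 := by omega
  obtain ⟨c, hc⟩ := (hbe.sub_odd hao).mul hx
  have h1 : (x + b * y) * (x - a * y) = 1 + 2 * t + 4 * (4 * k - 2 * l + c * t) := by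
    subst hy; linear_combination 2 * hk - hl + hpxy + 2 * t * hc
  have h2 : (x - b * y) * (x + a * y) = 1 + 2 * t + 4 * (4 * k - 2 * l - c * t - t) := by
    subst hy; linear_combination 2 * hk - hl + hpxy - 2 * t * hc
  rw [oneModFourAssociate_mul (hx.add_even hby) (hx.sub_even hay),
    oneModFourAssociate_mul (hx.sub_even hby) (hx.add_even hay),
    oneModFourAssociate_eq_neg_one_pow_mul (t := t) (by rw [h1, Int.add_mul_emod_self_left]),
    oneModFourAssociate_eq_neg_one_pow_mul (t := t) (by rw [h2, Int.add_mul_emod_self_left])]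
  linear_combination (2 * (-1) ^ t.natAbs) * hpxy

lemma odd_of_eq_sq_add (hp : Odd p) (hbe : Even b) (hpxy : p = x ^ 2 + a * b * y ^ 2) :
    Odd x := by
  rw [hpxy, Int.odd_add] at hp
  exact (Int.odd_pow.1 (hp.2 ((hbe.mul_left a).mul_right _))).resolve_right two_ne_zero

lemma even_of_eq_sq_add (hao : Odd a) (hb8 : ¬ 8 ∣ b) (hx : Odd x) (hp8 : p % 8 = 1)
    (hpxy : p = x ^ 2 + a * b * y ^ 2) : Even y := by
  by_contra hy
  rw [Int.not_even_iff_odd] at hy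
  apply hb8
  have hcop : IsCoprime (8 : ℤ) (a * y ^ 2) := by
    simpa using (Int.isCoprime_two_left.2 (hao.mul hy.pow)).pow_left (m := 3)
  refine hcop.dvd_of_dvd_mul_left ?_
  obtain ⟨k, hk⟩ := Int.eight_dvd_sq_sub_one_of_odd hx
  obtain ⟨l, hl⟩ : (8 : ℤ) ∣ p - 1 := by omega
  exact ⟨l - k, by linear_combination hl - hk - hpxy⟩

lemma ne_zero_of_prime_eq_sq_add (hp : Prime p) (hpxy : p = x ^ 2 + a * b * y ^ 2) : y ≠ 0 := by
  rintro rfl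
  exact hp.irreducible.not_isSquare ⟨x, by rw [hpxy]; ring⟩

lemma not_dvd_of_eq_sq_add (ha : 0 < a) (hb : 0 < b) (hx : x ≠ 0) (hy : y ≠ 0)
    (hpxy : p = x ^ 2 + a * b * y ^ 2) : ¬ p ∣ b := by
  intro hpb
  have hay : 1 ≤ a * y ^ 2 := one_le_mul_of_one_le_of_one_le ha (one_le_sq_of_ne_zero hy)
  nlinarith [Int.le_of_dvd hb hpb, sq_pos_of_ne_zero hx]

end Representations

theorem stmt4_general (a b : ℤ) (ha : 0 < a) (hb : 0 < b) (hao : Odd a) (hbe : 2 ∣ b)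
    (hb8 : ¬ (8 ∣ b))
    (p : ℕ) (hp : p.Prime) (hp8 : p % 8 = 1)
    (x y : ℤ) (hxy : (p : ℤ) = x ^ 2 + a * b * y ^ 2)
    (n : ℤ) (hn : n = (a + b) * ((p : ℤ) - 1) / 8) :
    2 ∣ y ∧ (8 : ℤ) ∣ (a + b) * ((p : ℤ) - 1) ∧
      (-1 : ℤ) ^ (y / 2).natAbs * (4 * x ^ 2 - 2 * (p : ℤ)) = lam a b n := by
  have hpZ : Prime (p : ℤ) := Nat.prime_iff_prime_int.mp hp
  have hp8Z : (p : ℤ) % 8 = 1 := by omega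
  have hbe' : Even b := even_iff_two_dvd.2 hbe
  have hx : Odd x := odd_of_eq_sq_add (Int.odd_iff.2 (by omega)) hbe' hxy
  have hy : Even y := even_of_eq_sq_add hao hb8 hx hp8Z hxy
  have hy0 : y ≠ 0 := ne_zero_of_prime_eq_sq_add hpZ hxy
  have hpb : ¬ (p : ℤ) ∣ b := not_dvd_of_eq_sq_add ha hb (by rintro rfl; simp at hx) hy0 hxy
  have h8 : (8 : ℤ) ∣ (a + b) * ((p : ℤ) - 1) := Dvd.dvd.mul_left (by omega) _
  have hN : 8 * n + a + b = (a + b) * p := by rw [hn, Int.mul_ediv_cancel' h8]; ring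
  refine ⟨even_iff_two_dvd.1 hy, h8, ?_⟩
  rw [lam_eq_of_eq_sq_add_mul_sq ha hb hpZ hpb hbe' hx hy hy0 hxy hN,
    oneModFourAssociate_sum_eq hao hbe' hx hp8Z hxy (Int.two_mul_ediv_two_of_even hy).symm]

theorem stmt4 (a b : ℤ) (ha : 0 < a) (hb : 0 < b) (hao : Odd a) (hbe : 2 ∣ b)
    (hb8 : ¬ (8 ∣ b)) (hcop : IsCoprime a b)
    (p : ℕ) (hp : p.Prime) (hp8 : p % 8 = 1)
    (hpab : (p : ℤ) ≠ a * b) (hpab1 : (p : ℤ) ≠ a * b + 1)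
    (x y : ℤ) (hxy : (p : ℤ) = x ^ 2 + a * b * y ^ 2)
    (n : ℤ) (hn : n = (a + b) * ((p : ℤ) - 1) / 8) :
    2 ∣ y ∧ (8 : ℤ) ∣ (a + b) * ((p : ℤ) - 1) ∧
      (-1 : ℤ) ^ (y / 2).natAbs * (4 * x ^ 2 - 2 * (p : ℤ)) = lam a b n :=
  stmt4_general a b ha hb hao hbe hb8 p hp hp8 x y hxy n hn
end

section
/- Let a and b be coprime odd positive integers, and let p be an odd prime such that p ≠ ab, p ≠ ab + 1, and p = x² + aby² for some integers x, y. Then λ(a, b; (a+b)(p−1)/8 + 1) = λ(1, ab; (ab+1)(p−1)/8 + 1). -/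
/-!
Write p = s² + ab·t². Up to signs, the only solutions of a·X² + b·Y² = (a + b)·p with Y odd are
(X, Y) = (s + bt, s - at) and (s - bt, s + at), both coming from the identity
(a + b)(s² + ab·t²) = a(s + bt)² + b(s - at)². Indeed, p divides one of a·X·t ∓ Y·s, and dividing
out p turns the solution into a representation a + b = a·m² + b·k² with m, k odd, which forces
m² = k² = 1.

Choosing the signs ≡ 1 (mod 4), λ(a, b; (a+b)(p-1)/8 + 1) is the sum of the normalized products
(s + bt)(s - at) and (s - bt)(s + at), i.e. of the normalizations of M ± (b - a)st with
M = s² - ab·t². As 4 ∣ (b - a)st, they add up to twice the normalization of M, which depends on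
a and b only through ab.
-/

def oneModFour (u : ℤ) : ℤ := if u % 4 = 1 then u else -u

lemma oneModFour_emod_four {u : ℤ} (hu : Odd u) : oneModFour u % 4 = 1 := by
  rw [Int.odd_iff] at hu
  unfold oneModFour; split_ifs <;> omega

lemma oneModFour_sq (u : ℤ) : oneModFour u ^ 2 = u ^ 2 := by
  unfold oneModFour; split_ifs <;> ring

lemma eq_oneModFour_of_sq_eq {X u : ℤ} (hu : Odd u) (hX : X % 4 = 1) (h : X ^ 2 = u ^ 2) :
    X = oneModFour u := by
  rw [Int.odd_iff] at hu
  unfold oneModFour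
  rcases sq_eq_sq_iff_eq_or_eq_neg.mp h with rfl | rfl <;> split_ifs <;> omega

lemma oneModFour_mul {u v : ℤ} (hu : Odd u) (hv : Odd v) :
    oneModFour u * oneModFour v = oneModFour (u * v) := by
  rw [Int.odd_iff] at hu hv
  have huv := Int.mul_emod u v 4
  have hu4 : u % 4 = 1 ∨ u % 4 = 3 := by omega
  have hv4 : v % 4 = 1 ∨ v % 4 = 3 := by omega
  unfold oneModFour
  rcases hu4 with h | h <;> rcases hv4 with h' | h' <;> rw [h, h'] at huv <;>
    norm_num at huv <;> split_ifs <;> first | omega | ring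

lemma oneModFour_add_add_oneModFour_sub {M K : ℤ} (hM : Odd M) (hK : 4 ∣ K) :
    oneModFour (M + K) + oneModFour (M - K) = 2 * oneModFour M := by
  rw [Int.odd_iff] at hM
  unfold oneModFour
  split_ifs <;> omega

lemma Prime.eq_of_dvd_of_eq_sq_add_mul_sq {p n x y : ℤ} (hp : Prime p) (hn : 0 < n)
    (h : p = x ^ 2 + n * y ^ 2) (hd : p ∣ n) : p = n := by
  have hp2 : 2 ≤ p := by
    have : 0 ≤ p := h ▸ by positivity
    have := hp.ne_one
    have := hp.ne_zero
    omega
  obtain ⟨e, rfl⟩ := hd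
  have he : 0 < e := pos_of_mul_pos_right hn (by omega)
  obtain ⟨c, rfl⟩ := hp.dvd_of_dvd_pow (a := x) (n := 2) ⟨1 - e * y ^ 2, by linear_combination -h⟩
  have h1 : p * c ^ 2 + e * y ^ 2 = 1 := mul_left_cancel₀ hp.ne_zero (by linear_combination -h)
  have hc : c ^ 2 = 0 := by nlinarith [sq_nonneg c, sq_nonneg y]
  rw [hc, mul_zero, zero_add] at h1
  rw [Int.eq_one_of_mul_eq_one_right he.le h1, mul_one]

lemma isCoprime_of_prime_eq_sq_add_mul {p a s c : ℤ} (hp : Prime p) (h : p = s ^ 2 + a * c)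
    (ha : ¬p ∣ a) : IsCoprime a s := by
  refine isCoprime_of_prime_dvd (fun ⟨ha0, _⟩ => ha (ha0 ▸ dvd_zero p)) fun q hq hqa hqs => ha ?_
  have hqp : q ∣ p := h ▸ dvd_add (dvd_pow hqs two_ne_zero) (hqa.mul_right c)
  exact (hq.irreducible.dvd_symm hp.irreducible hqp).trans hqa

lemma mul_ne_zero_of_prime_eq_sq_add_mul_sq {p n s t : ℤ} (hp : Prime p)
    (h : p = s ^ 2 + n * t ^ 2) (hn : ¬p ∣ n) : s * t ≠ 0 := by
  intro hst
  rcases mul_eq_zero.mp hst with rfl | rfl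
  · rcases hp.dvd_or_dvd (a := n) (b := t ^ 2) ⟨1, by linear_combination -h⟩ with hd | hd
    · exact hn hd
    · obtain ⟨c, rfl⟩ := hp.dvd_of_dvd_pow hd
      exact hp.not_isUnit (isUnit_of_dvd_one
        ⟨n * c ^ 2, mul_left_cancel₀ hp.ne_zero (by linear_combination h)⟩)
  · exact hp.not_isSquare ⟨s, by simpa [sq] using h⟩

section Parity

variable {s t n : ℤ}

lemma odd_add_mul_and_odd_sub_mul {c : ℤ} (hn : Odd n) (hc : Odd c)
    (h : Odd (s ^ 2 + n * t ^ 2)) :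
    Odd (s + c * t) ∧ Odd (s - c * t) := by
  simp only [Int.odd_add, Int.odd_sub, Int.odd_mul, Int.odd_pow' two_ne_zero,
    ← Int.not_odd_iff_even] at h ⊢
  tauto

lemma even_mul_of_odd_sq_add_mul_sq (hn : Odd n) (h : Odd (s ^ 2 + n * t ^ 2)) :
    Even (s * t) := by
  simp only [Int.odd_add, Int.odd_mul, Int.odd_pow' two_ne_zero,
    ← Int.not_odd_iff_even] at h ⊢
  tauto

end Parity

section Descent

variable {a b p s t X Y : ℤ}

lemma exists_sq_add_mul_sq_eq_of_prime_dvd (hp : Prime p) (hps : p = s ^ 2 + a * b * t ^ 2)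
    (heq : a * X ^ 2 + b * Y ^ 2 = (a + b) * p) (hd : p ∣ a * X * t - Y * s) :
    ∃ m k, m ^ 2 + a * b * k ^ 2 = a * (a + b) ∧ a * X = s * m + a * b * t * k ∧
      Y = t * m - s * k := by
  obtain ⟨k, hk⟩ := hd
  have key : (a * X * s + a * b * Y * t) ^ 2 = p ^ 2 * (a * (a + b) - a * b * k ^ 2) := by
    linear_combination (a * (s ^ 2 + a * b * t ^ 2)) * heq - (a * (a + b) * p) * hps -
      (a * b * (a * X * t - Y * s + p * k)) * hk
  obtain ⟨m, hm⟩ : p ∣ a * X * s + a * b * Y * t :=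
    hp.dvd_of_dvd_pow (n := 2) ⟨p * (a * (a + b) - a * b * k ^ 2), by rw [key]; ring⟩
  refine ⟨m, k, ?_, ?_, ?_⟩
  · exact mul_left_cancel₀ (pow_ne_zero 2 hp.ne_zero)
      (by linear_combination key - (a * X * s + a * b * Y * t + p * m) * hm)
  · exact mul_left_cancel₀ hp.ne_zero
      (by linear_combination s * hm + (a * b * t) * hk + (a * X) * hps)
  · exact mul_left_cancel₀ hp.ne_zero (by linear_combination t * hm - s * hk + Y * hps)

lemma sq_eq_of_mul_sq_add_mul_sq_eq_of_dvd_s5 (ha : 0 < a) (hb : 0 < b) (hao : Odd a) (hbo : Odd b)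
    (hp : Prime p) (hps : p = s ^ 2 + a * b * t ^ 2) (hcop : IsCoprime a s) (hY : Odd Y)
    (heq : a * X ^ 2 + b * Y ^ 2 = (a + b) * p) (hd : p ∣ a * X * t - Y * s) :
    (X ^ 2 = (s + b * t) ^ 2 ∧ Y ^ 2 = (s - a * t) ^ 2) ∨
      (X ^ 2 = (s - b * t) ^ 2 ∧ Y ^ 2 = (s + a * t) ^ 2) := by
  obtain ⟨m, k, hmk, hX, rfl⟩ := exists_sq_add_mul_sq_eq_of_prime_dvd hp hps heq hd
  obtain ⟨m, rfl⟩ : a ∣ m := hcop.dvd_of_dvd_mul_left ⟨X - b * t * k, by linear_combination -hX⟩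
  have hmk : a * m ^ 2 + b * k ^ 2 = a + b :=
    mul_left_cancel₀ ha.ne' (by linear_combination hmk)
  have hX : X = s * m + b * t * k := mul_left_cancel₀ ha.ne' (by linear_combination hX)
  have hodd : Odd m ∧ Odd k := by
    have he : Even (a * m ^ 2 + b * k ^ 2) := hmk ▸ hao.add_odd hbo
    simp only [Int.odd_add, Int.odd_sub, Int.odd_mul, Int.odd_pow' two_ne_zero,
      ← Int.not_odd_iff_even] at he hY
    tauto
  have hm1 : m ^ 2 = 1 ∧ k ^ 2 = 1 := by
    have hm := (one_le_sq_iff_one_le_abs m).mpr (Int.one_le_abs (by rintro rfl; simp at hodd))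
    have hk := (one_le_sq_iff_one_le_abs k).mpr (Int.one_le_abs (by rintro rfl; simp at hodd))
    constructor <;> nlinarith
  rcases sq_eq_sq_iff_eq_or_eq_neg.mp (hm1.1.trans hm1.2.symm) with rfl | rfl
  · exact Or.inl ⟨by rw [hX]; linear_combination (s + b * t) ^ 2 * hm1.1,
      by linear_combination (s - a * t) ^ 2 * hm1.1⟩
  · exact Or.inr ⟨by rw [hX]; linear_combination (s - b * t) ^ 2 * hm1.2,
      by linear_combination (s + a * t) ^ 2 * hm1.2⟩

lemma sq_eq_of_mul_sq_add_mul_sq_eq_s5 (ha : 0 < a) (hb : 0 < b) (hao : Odd a) (hbo : Odd b)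
    (hp : Prime p) (hps : p = s ^ 2 + a * b * t ^ 2) (hcop : IsCoprime a s) (hY : Odd Y)
    (heq : a * X ^ 2 + b * Y ^ 2 = (a + b) * p) :
    (X ^ 2 = (s + b * t) ^ 2 ∧ Y ^ 2 = (s - a * t) ^ 2) ∨
      (X ^ 2 = (s - b * t) ^ 2 ∧ Y ^ 2 = (s + a * t) ^ 2) := by
  have key : (a * X * t - Y * s) * (a * X * t - -Y * s) = p * (a * (a + b) * t ^ 2 - Y ^ 2) := by
    linear_combination (a * t ^ 2) * heq + Y ^ 2 * hps
  rcases hp.dvd_or_dvd ⟨_, key⟩ with hd | hd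
  · exact sq_eq_of_mul_sq_add_mul_sq_eq_of_dvd_s5 ha hb hao hbo hp hps hcop hY heq hd
  · rw [← neg_sq Y]
    exact sq_eq_of_mul_sq_add_mul_sq_eq_of_dvd_s5 ha hb hao hbo hp hps hcop hY.neg (by rwa [neg_sq]) hd

end Descent

section Solutions

variable {a b p s t : ℤ}

lemma setOf_mul_sq_add_mul_sq_eq_s5 (ha : 0 < a) (hb : 0 < b) (hao : Odd a) (hbo : Odd b)
    (hp : Prime p) (hpo : Odd p) (hps : p = s ^ 2 + a * b * t ^ 2) (hpab : ¬p ∣ a * b) :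
    {XY : ℤ × ℤ | XY.1 % 4 = 1 ∧ XY.2 % 4 = 1 ∧ a * XY.1 ^ 2 + b * XY.2 ^ 2 = (a + b) * p} =
      {(oneModFour (s + b * t), oneModFour (s - a * t)),
        (oneModFour (s - b * t), oneModFour (s + a * t))} := by
  have hodd : Odd (s ^ 2 + a * b * t ^ 2) := hps ▸ hpo
  obtain ⟨hbp, hbm⟩ := odd_add_mul_and_odd_sub_mul (hao.mul hbo) hbo hodd
  obtain ⟨hap, ham⟩ := odd_add_mul_and_odd_sub_mul (hao.mul hbo) hao hodd
  have hcop : IsCoprime a s := isCoprime_of_prime_eq_sq_add_mul hp (c := b * t ^ 2)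
    (by rw [hps]; ring) fun h => hpab (h.mul_right b)
  ext ⟨X, Y⟩
  simp only [Set.mem_insert_iff, Set.mem_singleton_iff, Prod.mk.injEq]
  constructor
  · rintro ⟨hX, hY, heq⟩
    rcases sq_eq_of_mul_sq_add_mul_sq_eq_s5 ha hb hao hbo hp hps hcop (Int.odd_iff.mpr (by omega))
      heq with ⟨hX2, hY2⟩ | ⟨hX2, hY2⟩
    · exact Or.inl ⟨eq_oneModFour_of_sq_eq hbp hX hX2, eq_oneModFour_of_sq_eq ham hY hY2⟩
    · exact Or.inr ⟨eq_oneModFour_of_sq_eq hbm hX hX2, eq_oneModFour_of_sq_eq hap hY hY2⟩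
  · rintro (⟨rfl, rfl⟩ | ⟨rfl, rfl⟩) <;>
      refine ⟨oneModFour_emod_four ‹_›, oneModFour_emod_four ‹_›, ?_⟩ <;>
      rw [oneModFour_sq, oneModFour_sq, hps] <;> ring

lemma lam_eq_two_mul_oneModFour (ha : 0 < a) (hb : 0 < b) (hao : Odd a)
    (hbo : Odd b) (hp : Prime p) (hpo : Odd p) (hps : p = s ^ 2 + a * b * t ^ 2)
    (hpab : ¬p ∣ a * b) :
    lam a b ((a + b) * (p - 1) / 8) = 2 * oneModFour (s ^ 2 - a * b * t ^ 2) := by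
  have hodd : Odd (s ^ 2 + a * b * t ^ 2) := hps ▸ hpo
  obtain ⟨hbp, hbm⟩ := odd_add_mul_and_odd_sub_mul (hao.mul hbo) hbo hodd
  obtain ⟨hap, ham⟩ := odd_add_mul_and_odd_sub_mul (hao.mul hbo) hao hodd
  have h8 : 8 ∣ (a + b) * (p - 1) := by
    have h : (a + b) * (p - 1) = a * ((s + b * t) ^ 2 - 1) + b * ((s - a * t) ^ 2 - 1) := by
      rw [hps]; ring
    rw [h]
    exact dvd_add (dvd_mul_of_dvd_right (Int.eight_dvd_sq_sub_one_of_odd hbp) a)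
      (dvd_mul_of_dvd_right (Int.eight_dvd_sq_sub_one_of_odd ham) b)
  have hN : 8 * ((a + b) * (p - 1) / 8) + a + b = (a + b) * p := by
    rw [Int.mul_ediv_cancel' h8]; ring
  have hne : (oneModFour (s + b * t), oneModFour (s - a * t)) ≠
      (oneModFour (s - b * t), oneModFour (s + a * t)) := by
    intro h
    have h2 := congrArg (fun XY : ℤ × ℤ => XY.1 ^ 2) h
    simp only [oneModFour_sq] at h2
    exact mul_ne_zero_of_prime_eq_sq_add_mul_sq hp hps hpab
      (mul_left_cancel₀ (mul_ne_zero four_ne_zero hb.ne') (by linear_combination h2))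
  have hM : Odd (s ^ 2 - a * b * t ^ 2) := by
    rw [show s ^ 2 - a * b * t ^ 2 = s ^ 2 + a * b * t ^ 2 - 2 * (a * b * t ^ 2) by ring]
    exact hodd.sub_even (even_two_mul _)
  have hK : 4 ∣ (b - a) * (s * t) := mul_dvd_mul (even_iff_two_dvd.mp (hbo.sub_odd hao))
    (even_iff_two_dvd.mp (even_mul_of_odd_sq_add_mul_sq (hao.mul hbo) hodd))
  unfold lam
  rw [hN, setOf_mul_sq_add_mul_sq_eq_s5 ha hb hao hbo hp hpo hps hpab, finsum_mem_pair hne]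
  dsimp only
  rw [oneModFour_mul hbp ham, oneModFour_mul hbm hap]
  convert oneModFour_add_add_oneModFour_sub hM hK using 3 <;> ring

end Solutions

theorem stmt5_general (a b : ℤ) (ha : 0 < a) (hb : 0 < b) (hao : Odd a) (hbo : Odd b)
    (p : ℕ) (hp : p.Prime) (hpodd : Odd p)
    (hpab : (p : ℤ) ≠ a * b)
    (x y : ℤ) (hxy : (p : ℤ) = x ^ 2 + a * b * y ^ 2) :
    lam a b ((a + b) * ((p : ℤ) - 1) / 8) = lam 1 (a * b) ((a * b + 1) * ((p : ℤ) - 1) / 8) := by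
  have hpZ : Prime (p : ℤ) := Nat.prime_iff_prime_int.mp hp
  have hab : 0 < a * b := mul_pos ha hb
  have hpab' : ¬(p : ℤ) ∣ a * b := fun h => hpab (hpZ.eq_of_dvd_of_eq_sq_add_mul_sq hab hxy h)
  rw [lam_eq_two_mul_oneModFour ha hb hao hbo hpZ hpodd.natCast hxy hpab', add_comm (a * b) 1,
    lam_eq_two_mul_oneModFour (s := x) (t := y) one_pos hab odd_one (hao.mul hbo) hpZ
      hpodd.natCast (by linear_combination hxy) (by rwa [one_mul]), one_mul]

theorem stmt5 (a b : ℤ) (ha : 0 < a) (hb : 0 < b) (hao : Odd a) (hbo : Odd b)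
    (hcop : IsCoprime a b)
    (p : ℕ) (hp : p.Prime) (hpodd : Odd p)
    (hpab : (p : ℤ) ≠ a * b) (hpab1 : (p : ℤ) ≠ a * b + 1)
    (x y : ℤ) (hxy : (p : ℤ) = x ^ 2 + a * b * y ^ 2) :
    lam a b ((a + b) * ((p : ℤ) - 1) / 8) = lam 1 (a * b) ((a * b + 1) * ((p : ℤ) - 1) / 8) :=
  stmt5_general a b ha hb hao hbo p hp hpodd hpab x y hxy
end

section
/- Let a be an odd positive integer and let p be an odd prime such that p = x² + 16ay² for some integers x, y. Then (−1)^{y} · (4x² − 2p) = λ(a, 4; ((a+4)p − a + 4)/8). -/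
lemma stmt6one_le_sq {z : ℤ} (hz : z ≠ 0) : 1 ≤ z ^ 2 := by
  have h : 0 < z ^ 2 := by positivity
  linarith

/-- Core descent lemma. -/
lemma stmt6core (a : ℤ) (ha : 0 < a) (p : ℕ) (hp : p.Prime) (hpodd : Odd p)
    (x y X Y : ℤ) (hy : y ≠ 0) (hxy : (p : ℤ) = x ^ 2 + 16 * a * y ^ 2)
    (hXodd : X % 2 = 1) (hYodd : Y % 2 = 1)
    (hE : a * X ^ 2 + 4 * Y ^ 2 = (a + 4) * (p : ℤ))
    (hd : (p : ℤ) ∣ X * x - 8 * y * Y) :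
    ∃ u v : ℤ, (u = 1 ∨ u = -1) ∧ (v = 1 ∨ v = -1) ∧
      X = u * x + 8 * v * y ∧ Y = v * x - 2 * a * u * y := by
  have hp' : Prime ((p : ℕ) : ℤ) := Nat.prime_iff_prime_int.mp hp
  have hp2 : (2 : ℕ) ≤ p := hp.two_le
  have hpo2 : p % 2 = 1 := Nat.odd_iff.mp hpodd
  have hp0 : ((p : ℕ) : ℤ) ≠ 0 := by exact_mod_cast hp.ne_zero
  have hpge : (2 : ℤ) ≤ (p : ℤ) := by exact_mod_cast hp2
  have hy1 : 1 ≤ y ^ 2 := stmt6one_le_sq hy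
  have hap : a < (p : ℤ) := by nlinarith [sq_nonneg x]
  have hpa : ¬ ((p : ℕ) : ℤ) ∣ a := by
    intro h
    have := Int.le_of_dvd ha h
    omega
  have hpY : ¬ ((p : ℕ) : ℤ) ∣ Y := by
    intro hdY
    have h1 : ((p : ℕ) : ℤ) ∣ a * X ^ 2 := by
      obtain ⟨Y', rfl⟩ := hdY
      exact ⟨(a + 4) - 4 * (p : ℤ) * Y' ^ 2, by linear_combination hE⟩
    have hdX : ((p : ℕ) : ℤ) ∣ X := by
      rcases (hp'.dvd_mul.mp h1) with h | h
      · exact absurd h hpa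
      · exact hp'.dvd_of_dvd_pow h
    obtain ⟨X', hX'⟩ := hdX
    obtain ⟨Y', hY'⟩ := hdY
    have hq : ((p : ℕ) : ℤ) * (a * X' ^ 2 + 4 * Y' ^ 2) = a + 4 := by
      apply mul_left_cancel₀ hp0
      linear_combination hE - a * (X + (p:ℤ) * X') * hX' - 4 * (Y + (p:ℤ)*Y') * hY'
    have hX'1 : 1 ≤ X' ^ 2 := by
      refine stmt6one_le_sq ?_
      rintro rfl; simp at hX'; omega
    have hY'1 : 1 ≤ Y' ^ 2 := by
      refine stmt6one_le_sq ?_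
      rintro rfl; simp at hY'; omega
    have hsum : a + 4 ≤ a * X' ^ 2 + 4 * Y' ^ 2 := by nlinarith
    have hmul : (p : ℤ) * (a + 4) ≤ (p : ℤ) * (a * X' ^ 2 + 4 * Y' ^ 2) :=
      mul_le_mul_of_nonneg_left hsum (by positivity)
    nlinarith
  obtain ⟨u, hu⟩ := hd
  have hd2 : ((p : ℕ) : ℤ) ∣ 4 * Y * (Y * x + 2 * a * X * y) :=
    ⟨(a + 4) * x - a * X * u, by linear_combination x * hE - a * X * hu⟩
  have hdv : ((p : ℕ) : ℤ) ∣ Y * x + 2 * a * X * y := by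
    rcases hp'.dvd_mul.mp hd2 with h | h
    · exfalso
      rcases hp'.dvd_mul.mp h with h4 | hY'
      · have h4' : (p : ℕ) ∣ 4 := by exact_mod_cast h4
        have hle := Nat.le_of_dvd (by norm_num) h4'
        have hp3 : p = 3 := by omega
        rw [hp3] at h4'
        norm_num at h4'
      · exact hpY hY'
    · exact h
  obtain ⟨v, hv⟩ := hdv
  have hX : X = u * x + 8 * v * y := by
    apply mul_left_cancel₀ hp0
    linear_combination x * hu + 8 * y * hv + X * hxy
  have hY : Y = v * x - 2 * a * u * y := by
    apply mul_left_cancel₀ hp0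
    linear_combination x * hv - 2 * a * y * hu + Y * hxy
  have key : a * u ^ 2 + 4 * v ^ 2 = a + 4 := by
    apply mul_left_cancel₀ hp0
    rw [hX, hY] at hE
    linear_combination hE + (a * u ^ 2 + 4 * v ^ 2) * hxy
  -- u is odd
  have hxodd : x % 2 = 1 := by
    have hpo : ((p : ℕ) : ℤ) % 2 = 1 := by omega
    rcases Int.even_or_odd x with ⟨k, hk⟩ | ⟨k, hk⟩
    · exfalso
      have : ((p : ℕ) : ℤ) = 2 * (2 * k ^ 2 + 8 * a * y ^ 2) := by
        rw [hxy, hk]; ring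
      omega
    · omega
  have huodd : u % 2 = 1 := by
    rcases Int.even_or_odd u with ⟨k, hk⟩ | ⟨k, hk⟩
    · exfalso
      have : X = 2 * (k * x) + 8 * (v * y) := by rw [hX, hk]; ring
      omega
    · omega
  obtain ⟨k, hk⟩ : ∃ k, u = 2 * k + 1 := ⟨(u - 1) / 2, by omega⟩
  have hkk : 0 ≤ k * (k + 1) := by
    rcases le_or_gt 0 k with h | h
    · exact mul_nonneg h (by omega)
    · have := mul_nonneg (show (0:ℤ) ≤ -k by omega) (show (0:ℤ) ≤ -(k+1) by omega)
      nlinarith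
  have key2 : 4 * (a * (k * (k + 1))) + 4 * v ^ 2 = 4 := by
    rw [hk] at key; linear_combination key
  have hkle : a * (k * (k + 1)) ≤ 1 := by
    have := sq_nonneg v; linarith
  have hm0 : k * (k + 1) = 0 := by
    rcases hkk.lt_or_eq with hpos | h
    · exfalso
      obtain ⟨t, ht⟩ := Int.even_mul_succ_self k
      have ht1 : 1 ≤ t := by
        have : 0 < t + t := ht ▸ hpos
        omega
      have hge2 : 2 ≤ k * (k + 1) := by omega
      have := mul_nonneg (show (0:ℤ) ≤ a - 1 by omega) hkk
      nlinarith
    · omega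
  have hu2 : u ^ 2 = 1 := by rw [hk]; linear_combination 4 * hm0
  have hv2 : v ^ 2 = 1 := by
    have h4 : 4 * v ^ 2 = 4 := by linear_combination key - a * hu2
    linarith
  refine ⟨u, v, ?_, ?_, hX, hY⟩
  · have h : (u - 1) * (u + 1) = 0 := by linear_combination hu2
    rcases mul_eq_zero.mp h with h | h
    · left; omega
    · right; omega
  · have h : (v - 1) * (v + 1) = 0 := by linear_combination hv2
    rcases mul_eq_zero.mp h with h | h
    · left; omega
    · right; omega

lemma stmt6main (a : ℤ) (ha : 0 < a) (hao : Odd a) (p : ℕ) (hp : p.Prime) (hpodd : Odd p)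
    (x y : ℤ) (hy : y ≠ 0) (hx4 : x % 4 = 1) (hxy : (p : ℤ) = x ^ 2 + 16 * a * y ^ 2)
    (s : ℤ) (hs : (y % 2 = 0 ∧ s = 1) ∨ (y % 2 = 1 ∧ s = -1)) :
    {xy : ℤ × ℤ | xy.1 % 4 = 1 ∧ xy.2 % 4 = 1 ∧
        a * xy.1 ^ 2 + 4 * xy.2 ^ 2 = (a + 4) * (p : ℤ)} =
      {(x + 8 * s * y, s * x - 2 * a * y), (x - 8 * s * y, s * x + 2 * a * y)} := by
  obtain ⟨b, hb0⟩ := hao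
  have hb : a = 2 * b + 1 := by omega
  have hp' : Prime ((p : ℕ) : ℤ) := Nat.prime_iff_prime_int.mp hp
  have hy1 : 1 ≤ y ^ 2 := stmt6one_le_sq hy
  have hap : a < (p : ℤ) := by nlinarith [sq_nonneg x]
  have hpa : ¬ ((p : ℕ) : ℤ) ∣ a := by
    intro h
    have := Int.le_of_dvd ha h
    omega
  ext ⟨X, Y⟩
  simp only [Set.mem_setOf_eq, Set.mem_insert_iff, Set.mem_singleton_iff, Prod.mk.injEq]
  constructor
  · rintro ⟨h1, h2, h3⟩
    have hdvd : ((p : ℕ) : ℤ) ∣ a * ((X * x - 8 * y * Y) * (X * x + 8 * y * Y)) :=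
      ⟨(a + 4) * x ^ 2 - 4 * Y ^ 2, by linear_combination x ^ 2 * h3 + 4 * Y ^ 2 * hxy⟩
    have hdvd2 := (hp'.dvd_mul.mp hdvd).resolve_left hpa
    rcases hp'.dvd_mul.mp hdvd2 with hc | hc
    · -- first family
      obtain ⟨u, v, hu, hv, hX, hY⟩ :=
        stmt6core a ha p hp hpodd x y X Y hy hxy (by omega) (by omega) h3 hc
      rcases hu with rfl | rfl
      · rcases hv with rfl | rfl
        · -- (X, Y) = (x + 8y, x - 2ay), y even
          have hXl : X = x + 8 * y := by linear_combination hX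
          have hYl : Y = x - 4 * (b * y) - 2 * y := by rw [hY, hb]; ring
          obtain ⟨c, hc'⟩ : ∃ c, b * y = c := ⟨_, rfl⟩
          rw [hc'] at hYl
          rcases hs with ⟨hye, rfl⟩ | ⟨hyo, rfl⟩
          · left
            constructor
            · linear_combination hXl
            · rw [hb]; linear_combination hYl + 4 * hc'
          · exfalso; omega
        · -- (X, Y) = (x - 8y, -x - 2ay), y odd
          have hXl : X = x - 8 * y := by linear_combination hX
          have hYl : Y = -x - 4 * (b * y) - 2 * y := by rw [hY, hb]; ring
          obtain ⟨c, hc'⟩ : ∃ c, b * y = c := ⟨_, rfl⟩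
          rw [hc'] at hYl
          rcases hs with ⟨hye, rfl⟩ | ⟨hyo, rfl⟩
          · exfalso; omega
          · left
            constructor
            · linear_combination hXl
            · rw [hb]; linear_combination hYl + 4 * hc'
      · exfalso
        rcases hv with rfl | rfl
        · have hXl : X = -x + 8 * y := by linear_combination hX
          omega
        · have hXl : X = -x - 8 * y := by linear_combination hX
          omega
    · -- second family: apply core with -y
      have hxy' : ((p : ℕ) : ℤ) = x ^ 2 + 16 * a * (-y) ^ 2 := by rw [hxy]; ring
      have hc' : ((p : ℕ) : ℤ) ∣ X * x - 8 * (-y) * Y := by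
        obtain ⟨c, hcc⟩ := hc
        exact ⟨c, by linear_combination hcc⟩
      obtain ⟨u, v, hu, hv, hX, hY⟩ :=
        stmt6core a ha p hp hpodd x (-y) X Y (neg_ne_zero.mpr hy) hxy'
          (by omega) (by omega) h3 hc'
      rcases hu with rfl | rfl
      · rcases hv with rfl | rfl
        · -- (X, Y) = (x - 8y, x + 2ay), y even
          have hXl : X = x - 8 * y := by linear_combination hX
          have hYl : Y = x + 4 * (b * y) + 2 * y := by rw [hY, hb]; ring
          obtain ⟨c, hc''⟩ : ∃ c, b * y = c := ⟨_, rfl⟩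
          rw [hc''] at hYl
          rcases hs with ⟨hye, rfl⟩ | ⟨hyo, rfl⟩
          · right
            constructor
            · linear_combination hXl
            · rw [hb]; linear_combination hYl - 4 * hc''
          · exfalso; omega
        · -- (X, Y) = (x + 8y, -x + 2ay), y odd
          have hXl : X = x + 8 * y := by linear_combination hX
          have hYl : Y = -x + 4 * (b * y) + 2 * y := by rw [hY, hb]; ring
          obtain ⟨c, hc''⟩ : ∃ c, b * y = c := ⟨_, rfl⟩
          rw [hc''] at hYl
          rcases hs with ⟨hye, rfl⟩ | ⟨hyo, rfl⟩
          · exfalso; omega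
          · right
            constructor
            · linear_combination hXl
            · rw [hb]; linear_combination hYl - 4 * hc''
      · exfalso
        rcases hv with rfl | rfl
        · have hXl : X = -x - 8 * y := by linear_combination hX
          omega
        · have hXl : X = -x + 8 * y := by linear_combination hX
          omega
  · rintro (⟨hX, hY⟩ | ⟨hX, hY⟩) <;> subst hX <;> subst hY <;>
      rcases hs with ⟨hye, rfl⟩ | ⟨hyo, rfl⟩
    · refine ⟨?_, ?_, ?_⟩
      · have e : x + 8 * 1 * y = x + 8 * y := by ring
        rw [e]; omega
      · have e : 1 * x - 2 * a * y = x - 4 * (b * y) - 2 * y := by rw [hb]; ring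
        rw [e]
        obtain ⟨c, hc'⟩ : ∃ c, b * y = c := ⟨_, rfl⟩
        rw [hc']; omega
      · linear_combination (-(a + 4)) * hxy
    · refine ⟨?_, ?_, ?_⟩
      · have e : x + 8 * (-1) * y = x - 8 * y := by ring
        rw [e]; omega
      · have e : (-1) * x - 2 * a * y = -x - 4 * (b * y) - 2 * y := by rw [hb]; ring
        rw [e]
        obtain ⟨c, hc'⟩ : ∃ c, b * y = c := ⟨_, rfl⟩
        rw [hc']; omega
      · linear_combination (-(a + 4)) * hxy
    · refine ⟨?_, ?_, ?_⟩
      · have e : x - 8 * 1 * y = x - 8 * y := by ring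
        rw [e]; omega
      · have e : 1 * x + 2 * a * y = x + 4 * (b * y) + 2 * y := by rw [hb]; ring
        rw [e]
        obtain ⟨c, hc'⟩ : ∃ c, b * y = c := ⟨_, rfl⟩
        rw [hc']; omega
      · linear_combination (-(a + 4)) * hxy
    · refine ⟨?_, ?_, ?_⟩
      · have e : x - 8 * (-1) * y = x + 8 * y := by ring
        rw [e]; omega
      · have e : (-1) * x + 2 * a * y = -x + 4 * (b * y) + 2 * y := by rw [hb]; ring
        rw [e]
        obtain ⟨c, hc'⟩ : ∃ c, b * y = c := ⟨_, rfl⟩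
        rw [hc']; omega
      · linear_combination (-(a + 4)) * hxy

theorem stmt6 (a : ℤ) (ha : 0 < a) (hao : Odd a)
    (p : ℕ) (hp : p.Prime) (hpodd : Odd p)
    (x y : ℤ) (hxy : (p : ℤ) = x ^ 2 + 16 * a * y ^ 2) :
    (-1 : ℤ) ^ y.natAbs * (4 * x ^ 2 - 2 * (p : ℤ)) =
      lam a 4 (((a + 4) * (p : ℤ) - a + 4) / 8 - 1) := by
  have hpo2 : p % 2 = 1 := Nat.odd_iff.mp hpodd
  have hpoZ : ((p : ℕ) : ℤ) % 2 = 1 := by omega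
  -- y ≠ 0
  have hy0 : y ≠ 0 := by
    rintro rfl
    have hx2 : ((p : ℕ) : ℤ) = x * x := by rw [hxy]; ring
    have h1 : ((x.natAbs * x.natAbs : ℕ) : ℤ) = x * x := Int.natAbs_mul_self
    have hpn : p = x.natAbs * x.natAbs := by
      have : ((p : ℕ) : ℤ) = ((x.natAbs * x.natAbs : ℕ) : ℤ) := by rw [h1, hx2]
      exact_mod_cast this
    rcases hp.eq_one_or_self_of_dvd x.natAbs ⟨x.natAbs, hpn⟩ with h | h
    · rw [h] at hpn
      have := hp.one_lt; omega
    · rw [h] at hpn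
      have := hp.two_le
      nlinarith
  -- x odd
  have hxodd : x % 2 = 1 := by
    rcases Int.even_or_odd x with ⟨k, hk⟩ | ⟨k, hk⟩
    · exfalso
      have h2 : ((p : ℕ) : ℤ) = 2 * (2 * k ^ 2 + 8 * a * y ^ 2) := by rw [hxy, hk]; ring
      obtain ⟨M, hM⟩ : ∃ M, (2 * k ^ 2 + 8 * a * y ^ 2 : ℤ) = M := ⟨_, rfl⟩
      rw [hM] at h2; omega
    · omega
  -- normalize x mod 4
  obtain ⟨x', hx'4, hx'sq⟩ : ∃ x', x' % 4 = 1 ∧ x' ^ 2 = x ^ 2 := by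
    rcases (by omega : x % 4 = 1 ∨ x % 4 = 3) with h | h
    · exact ⟨x, h, rfl⟩
    · exact ⟨-x, by omega, by ring⟩
  have hxy' : ((p : ℕ) : ℤ) = x' ^ 2 + 16 * a * y ^ 2 := by rw [hx'sq]; exact hxy
  -- p ≡ 1 (mod 8)
  have hp8 : ((p : ℕ) : ℤ) % 8 = 1 := by
    obtain ⟨k, hk⟩ : ∃ k, x' = 2 * k + 1 := ⟨(x' - 1) / 2, by omega⟩
    obtain ⟨t, ht⟩ := Int.even_mul_succ_self k
    have hsq : x' ^ 2 = 8 * t + 1 := by rw [hk]; linear_combination 4 * ht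
    obtain ⟨w, hw⟩ : ∃ w, (a * y ^ 2 : ℤ) = w := ⟨_, rfl⟩
    have : ((p : ℕ) : ℤ) = 8 * t + 1 + 16 * w := by rw [hxy', hsq, ← hw]; ring
    omega
  -- N arithmetic
  obtain ⟨m, hm⟩ : ∃ m, ((p : ℕ) : ℤ) = 8 * m + 1 := ⟨(((p : ℕ) : ℤ) - 1) / 8, by omega⟩
  have hc : (a + 4) * ((p : ℕ) : ℤ) = 8 * ((a + 4) * m) + a + 4 := by rw [hm]; ring
  obtain ⟨c, hcc⟩ : ∃ c, ((a + 4) * m : ℤ) = c := ⟨_, rfl⟩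
  rw [hcc] at hc
  have hN : 8 * (((a + 4) * ((p : ℕ) : ℤ) - a + 4) / 8 - 1) + a + 4 = (a + 4) * ((p : ℕ) : ℤ) := by
    rw [hc]; omega
  -- choose the sign s
  obtain ⟨s, hs, hpow⟩ : ∃ s : ℤ, ((y % 2 = 0 ∧ s = 1) ∨ (y % 2 = 1 ∧ s = -1)) ∧
      (-1 : ℤ) ^ y.natAbs = s := by
    rcases Int.even_or_odd y with h | h
    · exact ⟨1, Or.inl ⟨Int.even_iff.mp h, rfl⟩, Even.neg_one_pow (Int.natAbs_even.mpr h)⟩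
    · exact ⟨-1, Or.inr ⟨Int.odd_iff.mp h, rfl⟩, Odd.neg_one_pow (Int.natAbs_odd.mpr h)⟩
  rw [hpow, lam, hN, stmt6main a ha hao p hp hpodd x' y hy0 hx'4 hxy' s hs]
  have hne : ((x' + 8 * s * y, s * x' - 2 * a * y) : ℤ × ℤ) ≠
      (x' - 8 * s * y, s * x' + 2 * a * y) := by
    rcases hs with ⟨h2, rfl⟩ | ⟨h2, rfl⟩ <;>
      · intro h
        rw [Prod.mk.injEq] at h
        have h1 := h.1
        have : y = 0 := by linarith
        exact hy0 this
  have hset : ({(x' + 8 * s * y, s * x' - 2 * a * y), (x' - 8 * s * y, s * x' + 2 * a * y)} :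
      Set (ℤ × ℤ)) = (({(x' + 8 * s * y, s * x' - 2 * a * y),
        (x' - 8 * s * y, s * x' + 2 * a * y)} : Finset (ℤ × ℤ)) : Set (ℤ × ℤ)) := by
    simp
  rw [hset, finsum_mem_coe_finset, Finset.sum_pair hne]
  dsimp only
  linear_combination (-4 * s) * hx'sq + (-2 * s) * hxy'
end

section
/- Let a and b be positive integers with a odd, b even and b not divisible by 8. Let p be a prime with p ≡ a (mod 8), p ≠ a, p not dividing ab + 1, and p = ax² + by² for some integers x, y. Then y is even, n = ((ab+1)p − a − b)/8 is a nonnegative integer, and (−1)^{(a−1)/2 + y/2} · (4ax² − 2p) = λ(a, b; n+1); equivalently, (−1)^{(a−1)/2 + y/2} · (2p − 4by²) = λ(a, b; n+1). -/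
private lemma odd_sq8 (x : ℤ) (hx : Odd x) : ∃ w : ℤ, x ^ 2 = 8 * w + 1 := by
  obtain ⟨k, rfl⟩ := hx
  rcases Int.even_or_odd k with ⟨j, rfl⟩ | ⟨j, rfl⟩
  · exact ⟨j * (2 * j + 1), by ring⟩
  · exact ⟨(2 * j + 1) * (j + 1), by ring⟩

private lemma sel4 (Z : ℤ) (hZ : Z % 2 = 1) :
    ∃ e : ℤ, (e = 1 ∨ e = -1) ∧ (e * Z) % 4 = 1 ∧
      ∀ W : ℤ, W % 4 = 1 → (W = Z ∨ W = -Z) → W = e * Z := by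
  rcases (by omega : Z % 4 = 1 ∨ Z % 4 = 3) with h | h
  · refine ⟨1, Or.inl rfl, by omega, ?_⟩
    intro W hW hWZ
    rcases hWZ with rfl | rfl <;> omega
  · refine ⟨-1, Or.inr rfl, by omega, ?_⟩
    intro W hW hWZ
    rcases hWZ with rfl | rfl <;> omega

private lemma classify (a b P x y X Y : ℤ) (ha : 0 < a) (hb2' : 2 ≤ b)
    (hprime : Prime P) (hPa : ¬ P ∣ a)
    (hxy : P = a * x ^ 2 + b * y ^ 2) (hx : Odd x) (hy : Even y)
    (hY : Odd Y)
    (hXY : a * X ^ 2 + b * Y ^ 2 = (a * b + 1) * P) :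
    ((X = x + b * y ∨ X = -(x + b * y)) ∧ (Y = y - a * x ∨ Y = -(y - a * x))) ∨
    ((X = x - b * y ∨ X = -(x - b * y)) ∧ (Y = y + a * x ∨ Y = -(y + a * x))) := by
  have hP0 : P ≠ 0 := hprime.ne_zero
  have hP2 : (0:ℤ) < P ^ 2 := pow_two_pos_of_ne_zero hP0
  have hab2 : 2 ≤ a * b := by nlinarith
  have key : P ∣ a * ((X * y - x * Y) * (X * y + x * Y)) := by
    refine ⟨(a * b + 1) * y ^ 2 - Y ^ 2, ?_⟩
    linear_combination y ^ 2 * hXY + Y ^ 2 * hxy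
  have hUV : P ∣ (X * y - x * Y) ∨ P ∣ (X * y + x * Y) := by
    rcases hprime.dvd_mul.mp key with h | h
    · exact absurd h hPa
    · exact hprime.dvd_mul.mp h
  have hodd1 : Odd (X * y - x * Y) := (hy.mul_left X).sub_odd (hx.mul hY)
  have hodd2 : Odd (X * y + x * Y) := by
    have := (hy.mul_left X).add_odd (hx.mul hY)
    exact this
  rcases hUV with ⟨m, hm⟩ | ⟨m, hm⟩
  · -- case Xy - xY = P m
    have hid : (a * X * x + b * Y * y) ^ 2 = P ^ 2 * ((a * b + 1) - a * b * m ^ 2) := by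
      calc (a * X * x + b * Y * y) ^ 2
          = (a * X ^ 2 + b * Y ^ 2) * (a * x ^ 2 + b * y ^ 2) - a * b * (X * y - x * Y) ^ 2 := by
            ring
        _ = P ^ 2 * ((a * b + 1) - a * b * m ^ 2) := by
            rw [hXY, ← hxy, hm]; ring
    have hm0 : m ≠ 0 := by
      rintro rfl
      rw [mul_zero] at hm
      rw [hm] at hodd1
      simp [Int.odd_iff] at hodd1
    have hmsq : m ^ 2 = 1 := by
      have h1 : a * b * m ^ 2 ≤ a * b + 1 := by nlinarith [sq_nonneg (a * X * x + b * Y * y)]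
      have h2 : m ^ 2 ≤ 1 := by nlinarith
      have h3 : 1 ≤ m ^ 2 := by
        rcases lt_or_gt_of_ne hm0 with h | h <;> nlinarith
      omega
    have hk2 : (a * X * x + b * Y * y) ^ 2 = P ^ 2 := by
      rw [hid, hmsq]; ring
    have hk : a * X * x + b * Y * y = P ∨ a * X * x + b * Y * y = -P := by
      have : (a * X * x + b * Y * y - P) * (a * X * x + b * Y * y + P) = 0 := by
        linear_combination hk2
      rcases mul_eq_zero.mp this with h | h
      · left; linarith
      · right; linarith
    have hd : m = 1 ∨ m = -1 := by
      have : (m - 1) * (m + 1) = 0 := by linear_combination hmsq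
      rcases mul_eq_zero.mp this with h | h
      · left; linarith
      · right; linarith
    obtain ⟨e, he⟩ : ∃ e : ℤ, a * X * x + b * Y * y = e * P ∧ (e = 1 ∨ e = -1) := by
      rcases hk with h | h
      · exact ⟨1, by linarith, Or.inl rfl⟩
      · exact ⟨-1, by linarith, Or.inr rfl⟩
    obtain ⟨he1, he2⟩ := he
    have hXv : X = e * x + m * (b * y) := by
      have h1 : P * X = P * (e * x + m * (b * y)) := by
        linear_combination x * he1 + b * y * hm + X * hxy
      exact mul_left_cancel₀ hP0 h1
    have hYv : Y = e * y - m * (a * x) := by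
      have h1 : P * Y = P * (e * y - m * (a * x)) := by
        linear_combination y * he1 - a * x * hm + Y * hxy
      exact mul_left_cancel₀ hP0 h1
    rcases he2 with rfl | rfl <;> rcases hd with rfl | rfl
    · exact Or.inl ⟨Or.inl (by rw [hXv]; ring), Or.inl (by rw [hYv]; ring)⟩
    · exact Or.inr ⟨Or.inl (by rw [hXv]; ring), Or.inl (by rw [hYv]; ring)⟩
    · exact Or.inr ⟨Or.inr (by rw [hXv]; ring), Or.inr (by rw [hYv]; ring)⟩
    · exact Or.inl ⟨Or.inr (by rw [hXv]; ring), Or.inr (by rw [hYv]; ring)⟩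
  · -- case Xy + xY = P m
    have hid : (a * X * x - b * Y * y) ^ 2 = P ^ 2 * ((a * b + 1) - a * b * m ^ 2) := by
      calc (a * X * x - b * Y * y) ^ 2
          = (a * X ^ 2 + b * Y ^ 2) * (a * x ^ 2 + b * y ^ 2) - a * b * (X * y + x * Y) ^ 2 := by
            ring
        _ = P ^ 2 * ((a * b + 1) - a * b * m ^ 2) := by
            rw [hXY, ← hxy, hm]; ring
    have hm0 : m ≠ 0 := by
      rintro rfl
      rw [mul_zero] at hm
      rw [hm] at hodd2
      simp [Int.odd_iff] at hodd2
    have hmsq : m ^ 2 = 1 := by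
      have h1 : a * b * m ^ 2 ≤ a * b + 1 := by nlinarith [sq_nonneg (a * X * x - b * Y * y)]
      have h2 : m ^ 2 ≤ 1 := by nlinarith
      have h3 : 1 ≤ m ^ 2 := by
        rcases lt_or_gt_of_ne hm0 with h | h <;> nlinarith
      omega
    have hk2 : (a * X * x - b * Y * y) ^ 2 = P ^ 2 := by
      rw [hid, hmsq]; ring
    have hk : a * X * x - b * Y * y = P ∨ a * X * x - b * Y * y = -P := by
      have : (a * X * x - b * Y * y - P) * (a * X * x - b * Y * y + P) = 0 := by
        linear_combination hk2
      rcases mul_eq_zero.mp this with h | h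
      · left; linarith
      · right; linarith
    have hd : m = 1 ∨ m = -1 := by
      have : (m - 1) * (m + 1) = 0 := by linear_combination hmsq
      rcases mul_eq_zero.mp this with h | h
      · left; linarith
      · right; linarith
    obtain ⟨e, he1, he2⟩ : ∃ e : ℤ, a * X * x - b * Y * y = e * P ∧ (e = 1 ∨ e = -1) := by
      rcases hk with h | h
      · exact ⟨1, by linarith, Or.inl rfl⟩
      · exact ⟨-1, by linarith, Or.inr rfl⟩
    have hXv : X = e * x + m * (b * y) := by
      have h1 : P * X = P * (e * x + m * (b * y)) := by
        linear_combination x * he1 + b * y * hm + X * hxy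
      exact mul_left_cancel₀ hP0 h1
    have hYv : Y = m * (a * x) - e * y := by
      have h1 : P * Y = P * (m * (a * x) - e * y) := by
        linear_combination a * x * hm - y * he1 + Y * hxy
      exact mul_left_cancel₀ hP0 h1
    rcases he2 with rfl | rfl <;> rcases hd with rfl | rfl
    · exact Or.inl ⟨Or.inl (by rw [hXv]; ring), Or.inr (by rw [hYv]; ring)⟩
    · exact Or.inr ⟨Or.inl (by rw [hXv]; ring), Or.inr (by rw [hYv]; ring)⟩
    · exact Or.inr ⟨Or.inr (by rw [hXv]; ring), Or.inl (by rw [hYv]; ring)⟩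
    · exact Or.inl ⟨Or.inr (by rw [hXv]; ring), Or.inl (by rw [hYv]; ring)⟩

private lemma sign_flip (g1 g2 AB CD yy aa W1 W2 : ℤ)
    (h1 : g1 = 1 ∨ g1 = -1) (h2 : g2 = 1 ∨ g2 = -1)
    (hAB : AB = (yy - aa) + 4*W1) (hCD : CD = (yy + aa) + 4*W2)
    (hyy : 2 ∣ yy) (haa : aa % 2 = 1)
    (hg1 : (g1*AB) % 4 = 1) (hg2 : (g2*CD) % 4 = 1) : g2 = -g1 := by
  rcases h1 with rfl | rfl <;> rcases h2 with rfl | rfl <;> omega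

private lemma sign_val (g1 AB s v W1 : ℤ) (hg : g1 = 1 ∨ g1 = -1)
    (hAB : AB = (2*v - (2*s+1)) + 4*W1) (h1 : (g1*AB) % 4 = 1) :
    ((-1:ℤ)) ^ ((s + v : ℤ)).natAbs = -g1 := by
  rcases hg with rfl | rfl
  · have hodd : Odd ((s+v : ℤ).natAbs) := by
      rw [Int.natAbs_odd, Int.odd_iff]; omega
    rw [hodd.neg_one_pow]
  · have hev : Even ((s+v : ℤ).natAbs) := by
      rw [Int.natAbs_even, Int.even_iff]; omega
    rw [hev.neg_one_pow]; norm_num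

set_option maxHeartbeats 400000 in
theorem stmt7 (a b : ℤ) (ha : 0 < a) (hb : 0 < b) (hao : Odd a) (hbe : 2 ∣ b)
    (hb8 : ¬ (8 ∣ b))
    (p : ℕ) (hp : p.Prime) (hp8 : (p : ℤ) % 8 = a % 8) (hpa : (p : ℤ) ≠ a)
    (hpab : ¬ ((p : ℤ) ∣ a * b + 1))
    (x y : ℤ) (hxy : (p : ℤ) = a * x ^ 2 + b * y ^ 2)
    (n : ℤ) (hn : n = ((a * b + 1) * (p : ℤ) - a - b) / 8) :
    2 ∣ y ∧ (8 : ℤ) ∣ ((a * b + 1) * (p : ℤ) - a - b) ∧ 0 ≤ n ∧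
      (-1 : ℤ) ^ ((a - 1) / 2 + y / 2).natAbs * (4 * a * x ^ 2 - 2 * (p : ℤ)) = lam a b n ∧
      (-1 : ℤ) ^ ((a - 1) / 2 + y / 2).natAbs * (2 * (p : ℤ) - 4 * b * y ^ 2) = lam a b n := by
  have hPprime : Prime ((p:ℤ)) := Nat.prime_iff_prime_int.mp hp
  have hP0 : (p:ℤ) ≠ 0 := hPprime.ne_zero
  have hPpos : (0:ℤ) < p := by exact_mod_cast hp.pos
  obtain ⟨c, hc⟩ := hbe
  obtain ⟨s, hs⟩ := hao
  have hao : Odd a := ⟨s, hs⟩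
  have hPodd : (p:ℤ) % 2 = 1 := by omega
  -- x odd
  have hxodd : Odd x := by
    rcases Int.even_or_odd x with ⟨t, rfl⟩ | h
    · exfalso
      have h2 : (p:ℤ) = 2 * (2*a*t^2 + c*y^2) := by rw [hxy, hc]; ring
      omega
    · exact h
  obtain ⟨u, hu⟩ := hxodd
  have hxodd : Odd x := ⟨u, hu⟩
  obtain ⟨w1, hw1⟩ := odd_sq8 x hxodd
  -- y even
  have hyeven : 2 ∣ y := by
    rcases Int.even_or_odd y with ⟨t, ht⟩ | ⟨t, ht⟩
    · exact ⟨t, by linarith⟩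
    · exfalso
      obtain ⟨w2, hw2⟩ := odd_sq8 y ⟨t, ht⟩
      obtain ⟨K, hK⟩ : ∃ K : ℤ, (p:ℤ) - a - 2*c = 8*K :=
        ⟨a*w1 + 2*c*w2, by rw [hxy, hw1, hc, hw2]; ring⟩
      omega
  obtain ⟨v, hv'⟩ := hyeven
  have hv : y = 2 * v := by omega
  have hyev : Even y := ⟨v, by omega⟩
  -- x ≠ 0
  have hx0 : x ≠ 0 := by
    rintro rfl
    have h2 : (p:ℤ) = 2*(2*(b*v^2)) := by rw [hxy, hv]; ring
    omega
  -- y ≠ 0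
  have hy0 : y ≠ 0 := by
    rintro rfl
    have hpa2 : (p:ℤ) = a * x^2 := by rw [hxy]; ring
    rcases hPprime.irreducible.isUnit_or_isUnit hpa2 with hun | hun
    · rcases Int.isUnit_iff.mp hun with rfl | rfl
      · have hpx : (p:ℤ) = x * x := by linear_combination hpa2
        rcases hPprime.irreducible.isUnit_or_isUnit hpx with h2 | h2 <;>
          rcases Int.isUnit_iff.mp h2 with rfl | rfl <;>
          exact hPprime.ne_one (by linarith)
      · omega
    · rcases Int.isUnit_iff.mp hun with h2 | h2
      · exact hpa (by rw [hpa2, h2]; ring)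
      · nlinarith [sq_nonneg x]
  have hx2 : 1 ≤ x ^ 2 := by
    rcases lt_or_gt_of_ne hx0 with h | h <;> nlinarith
  have hy2 : 4 ≤ y ^ 2 := by
    have hv0 : v ≠ 0 := by intro h; rw [h] at hv; omega
    have : 1 ≤ v ^ 2 := by rcases lt_or_gt_of_ne hv0 with h | h <;> nlinarith
    rw [hv]; nlinarith
  -- p does not divide a
  have hPnda : ¬ (p:ℤ) ∣ a := by
    intro hd
    have h1 := Int.le_of_dvd ha hd
    nlinarith
  -- 8 divides
  obtain ⟨wa, hwa⟩ := odd_sq8 a hao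
  have h8 : (8:ℤ) ∣ ((a*b+1)*(p:ℤ) - a - b) := by
    obtain ⟨t, ht⟩ : (8:ℤ) ∣ ((p:ℤ) - a) := by omega
    exact ⟨(a*b+1)*t + b*wa, by linear_combination (a*b+1)*ht + b*hwa⟩
  obtain ⟨t8, ht8⟩ := h8
  have h8n : 8 * n = (a*b+1)*(p:ℤ) - a - b := by
    rw [hn, ht8, Int.mul_ediv_cancel_left _ (by norm_num : (8:ℤ) ≠ 0)]
  have hapos : a ≤ (p:ℤ) := by nlinarith
  have hbpos : b ≤ (p:ℤ) := by nlinarith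
  have hbge2 : 2 ≤ b := by omega
  have hab2 : 2 ≤ a * b := by nlinarith
  have hn0 : 0 ≤ n := by
    have h1 : (0:ℤ) ≤ 8 * n := by rw [h8n]; nlinarith
    omega
  -- parities of the four quantities
  have haxodd : a * x = 2*(2*s*u + s + u) + 1 := by rw [hs, hu]; ring
  have hbyeven : b * y = 2*(c*y) := by rw [hc]; ring
  have hA2 : (x + b*y) % 2 = 1 := by omega
  have hB2 : (y - a*x) % 2 = 1 := by omega
  have hC2 : (x - b*y) % 2 = 1 := by omega
  have hD2 : (y + a*x) % 2 = 1 := by omega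
  obtain ⟨e1, he1, he1A, hsel1⟩ := sel4 (x + b*y) hA2
  obtain ⟨f1, hf1, hf1B, hsel2⟩ := sel4 (y - a*x) hB2
  obtain ⟨e2, he2, he2C, hsel3⟩ := sel4 (x - b*y) hC2
  obtain ⟨f2, hf2, hf2D, hsel4⟩ := sel4 (y + a*x) hD2
  -- the solution set
  have hset : {xy : ℤ × ℤ | xy.1 % 4 = 1 ∧ xy.2 % 4 = 1 ∧
      a * xy.1 ^ 2 + b * xy.2 ^ 2 = 8 * n + a + b} =
      {(e1*(x + b*y), f1*(y - a*x)), (e2*(x - b*y), f2*(y + a*x))} := by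
    ext ⟨X, Y⟩
    simp only [Set.mem_setOf_eq, Set.mem_insert_iff, Set.mem_singleton_iff, Prod.mk.injEq]
    constructor
    · rintro ⟨h1, h2, h3⟩
      have hYodd : Odd Y := by rw [Int.odd_iff]; omega
      have h3' : a*X^2 + b*Y^2 = (a*b+1)*(p:ℤ) := by rw [h3]; linarith
      rcases classify a b (p:ℤ) x y X Y ha (by omega) hPprime hPnda hxy hxodd hyev
          hYodd h3' with ⟨hxd, hyd⟩ | ⟨hxd, hyd⟩
      · exact Or.inl ⟨hsel1 X h1 hxd, hsel2 Y h2 hyd⟩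
      · exact Or.inr ⟨hsel3 X h1 hxd, hsel4 Y h2 hyd⟩
    · rintro (⟨rfl, rfl⟩ | ⟨rfl, rfl⟩)
      · refine ⟨he1A, hf1B, ?_⟩
        have hE : a*(e1*(x + b*y))^2 + b*(f1*(y - a*x))^2 = (a*b+1)*(p:ℤ) := by
          rcases he1 with rfl | rfl <;> rcases hf1 with rfl | rfl <;>
            linear_combination (-(a*b+1))*hxy
        rw [hE]; linarith
      · refine ⟨he2C, hf2D, ?_⟩
        have hE : a*(e2*(x - b*y))^2 + b*(f2*(y + a*x))^2 = (a*b+1)*(p:ℤ) := by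
          rcases he2 with rfl | rfl <;> rcases hf2 with rfl | rfl <;>
            linear_combination (-(a*b+1))*hxy
        rw [hE]; linarith
  -- distinctness
  have hne : ((e1*(x + b*y), f1*(y - a*x)) : ℤ × ℤ) ≠ (e2*(x - b*y), f2*(y + a*x)) := by
    intro h
    have h1 : e1*(x + b*y) = e2*(x - b*y) := congrArg Prod.fst h
    have he1sq : e1^2 = 1 := by rcases he1 with rfl | rfl <;> norm_num
    have he2sq : e2^2 = 1 := by rcases he2 with rfl | rfl <;> norm_num
    have h2 : (e1*(x + b*y))^2 = (e2*(x - b*y))^2 := by rw [h1]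
    have hsq : (x + b*y)^2 = (x - b*y)^2 := by
      linear_combination h2 - ((x + b*y)^2)*he1sq + ((x - b*y)^2)*he2sq
    have h4 : 4*(b*(x*y)) = 0 := by linear_combination hsq
    have h5 : b*(x*y) = 0 := by linarith
    rcases mul_eq_zero.mp h5 with h6 | h6
    · omega
    · rcases mul_eq_zero.mp h6 with h7 | h7
      · exact hx0 h7
      · exact hy0 h7
  -- compute lam
  have hlam : lam a b n = (e1*(x + b*y)) * (f1*(y - a*x)) + (e2*(x - b*y)) * (f2*(y + a*x)) := by
    unfold lam
    rw [hset]
    exact finsum_mem_pair hne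
  -- modular values of the products
  obtain ⟨AB, hABd⟩ : ∃ t : ℤ, t = (x + b*y)*(y - a*x) := ⟨_, rfl⟩
  obtain ⟨CD, hCDd⟩ : ∃ t : ℤ, t = (x - b*y)*(y + a*x) := ⟨_, rfl⟩
  have hABm : AB = (y - a) + 4*(u*v - a*u^2 - a*u + 2*c*v^2 - 2*a*c*u*v - a*c*v) := by
    rw [hABd, hu, hv, hc]; ring
  have hCDm : CD = (y + a) + 4*(u*v + a*u^2 + a*u - 2*c*v^2 - 2*a*c*u*v - a*c*v) := by
    rw [hCDd, hu, hv, hc]; ring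
  have hg1 : ((e1*f1) * AB) % 4 = 1 := by
    have heq : (e1*f1) * AB = (e1*(x + b*y)) * (f1*(y - a*x)) := by rw [hABd]; ring
    rw [heq, Int.mul_emod, he1A, hf1B]; norm_num
  have hg2 : ((e2*f2) * CD) % 4 = 1 := by
    have heq : (e2*f2) * CD = (e2*(x - b*y)) * (f2*(y + a*x)) := by rw [hCDd]; ring
    rw [heq, Int.mul_emod, he2C, hf2D]; norm_num
  have hgg1 : e1*f1 = 1 ∨ e1*f1 = -1 := by
    rcases he1 with rfl | rfl <;> rcases hf1 with rfl | rfl <;> norm_num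
  have hgg2 : e2*f2 = 1 ∨ e2*f2 = -1 := by
    rcases he2 with rfl | rfl <;> rcases hf2 with rfl | rfl <;> norm_num
  have hg12 : e2*f2 = -(e1*f1) :=
    sign_flip (e1*f1) (e2*f2) AB CD y a _ _ hgg1 hgg2
      (by rw [hABm]) (by rw [hCDm]) ⟨v, by omega⟩ (by omega) hg1 hg2
  -- the sign
  have hEs : ((a - 1) / 2 + y / 2) = s + v := by omega
  have hsign : ((-1:ℤ)) ^ (((a - 1) / 2 + y / 2).natAbs) = -(e1*f1) := by
    rw [hEs]
    exact sign_val (e1*f1) AB s v _ hgg1 (by rw [hABm, hv, hs]) hg1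
  refine ⟨⟨v, by omega⟩, ⟨t8, ht8⟩, hn0, ?_, ?_⟩
  · rw [hsign, hlam]
    have hr1 : (e1*(x + b*y)) * (f1*(y - a*x)) = (e1*f1) * AB := by rw [hABd]; ring
    have hr2 : (e2*(x - b*y)) * (f2*(y + a*x)) = (e2*f2) * CD := by rw [hCDd]; ring
    rw [hr1, hr2, hg12, hABd, hCDd]
    linear_combination (2*(e1*f1)) * hxy
  · rw [hsign, hlam]
    have hr1 : (e1*(x + b*y)) * (f1*(y - a*x)) = (e1*f1) * AB := by rw [hABd]; ring
    have hr2 : (e2*(x - b*y)) * (f2*(y + a*x)) = (e2*f2) * CD := by rw [hCDd]; ring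
    rw [hr1, hr2, hg12, hABd, hCDd]
    linear_combination (-2*(e1*f1)) * hxy
end

section
/- Let a and b be coprime positive integers with a odd, b even and b not divisible by 8. Let p be a prime with p ≡ 1 (mod 8) such that p ≠ ab, p ≠ ab + 1, and p = x² + aby² for some integers x, y. Then λ(a, b; (a+b)(p−1)/8 + 1) = λ(1, ab; (ab+1)(p−1)/8 + 1). -/
private lemma odd_sq_8 (x : ℤ) (hx : x % 2 = 1) : ∃ k, x ^ 2 = 8 * k + 1 := by
  obtain ⟨m, hm⟩ : ∃ m, x = 2*m+1 := ⟨(x-1)/2, by omega⟩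
  obtain ⟨r, hr⟩ := Int.even_mul_succ_self m
  exact ⟨r, by subst hm; linear_combination 4*hr⟩

private lemma one_le_sq_aux (c : ℤ) (h : c ≠ 0) : 1 ≤ c ^ 2 := by
  rcases h.lt_or_gt with h|h <;> nlinarith

private lemma sq_one_aux (A B c d : ℤ) (hA : 0 < A) (hB : 0 < B)
    (hcd : A * c ^ 2 + B * d ^ 2 = A + B) (hc1 : 1 ≤ c ^ 2) (hd1 : 1 ≤ d ^ 2) :
    c ^ 2 = 1 := by nlinarith

private lemma fwd (A B p u v x y : ℤ) (hA : 0 < A) (hB : 0 < B) (hAodd : A % 2 = 1)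
    (hBeven : B % 2 = 0) (hAB8 : ¬ (8 ∣ A * B)) (hp : Prime p) (hpB : ¬ p ∣ B)
    (hpuv : p = u ^ 2 + A * B * v ^ 2) (hu4 : u % 4 = 1) (hv2 : v % 2 = 0)
    (hx4 : x % 4 = 1) (hy4 : y % 4 = 1) (hxy : A * x ^ 2 + B * y ^ 2 = (A + B) * p)
    (hdvd : p ∣ x * u - B * v * y) :
    (x = u + B * v ∧ y = (if (u - A * v) % 4 = 1 then 1 else -1) * (u - A * v)) ∨
    (x = u - B * v ∧ y = (if (u - A * v) % 4 = 1 then 1 else -1) * (u + A * v)) := by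
  obtain ⟨c, hc⟩ := hdvd
  have hp0 : p ≠ 0 := hp.ne_zero
  have key2 : B * (y * u + A * x * v) ^ 2 = p ^ 2 * (A + B - A * c ^ 2) := by
    linear_combination (u^2 + A*B*v^2) * hxy - (A+B)*p*hpuv - A*(x*u - B*v*y + p*c)*hc
  have hpd : p ∣ y * u + A * x * v := by
    have h1 : p ∣ B * (y*u+A*x*v)^2 := ⟨p*(A+B-A*c^2), by rw [key2]; ring⟩
    exact hp.dvd_of_dvd_pow ((hp.dvd_mul.mp h1).resolve_left hpB)
  obtain ⟨d, hd⟩ := hpd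
  have hcd : A * c ^ 2 + B * d ^ 2 = A + B := by
    have h3 : p^2 * (A*c^2 + B*d^2) = p^2 * (A+B) := by
      linear_combination key2 - B*(y*u+A*x*v+p*d)*hd
    exact mul_left_cancel₀ (pow_ne_zero 2 hp0) h3
  have hcodd : c % 2 = 1 := by
    rcases Int.even_or_odd c with hce | hco
    · exfalso
      obtain ⟨c2, hc2⟩ := hce
      obtain ⟨B2, hB2⟩ : ∃ t, B = 2*t := ⟨B/2, by omega⟩
      subst hc2 hB2
      have h4 : (2:ℤ) ∣ A := ⟨2*A*c2^2 - B2 + B2*d^2, by linear_combination (-1 : ℤ)*hcd⟩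
      omega
    · exact Int.odd_iff.mp hco
  have hdodd : d % 2 = 1 := by
    rcases Int.even_or_odd d with hde | hdo
    · exfalso
      obtain ⟨d2, hde'⟩ := hde
      obtain ⟨B2, hB2⟩ : ∃ t, B = 2*t := ⟨B/2, by omega⟩
      obtain ⟨k, hk⟩ := odd_sq_8 c hcodd
      subst hde' hB2
      have hB8 : (8:ℤ) ∣ 2*B2 := ⟨A*k + B2*d2^2, by linear_combination A*hk - hcd⟩
      exact hAB8 (Dvd.dvd.mul_left hB8 A)
    · exact Int.odd_iff.mp hdo
  have hc1 : 1 ≤ c^2 := one_le_sq_aux c (by intro h; rw [h] at hcodd; simp at hcodd)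
  have hd1 : 1 ≤ d^2 := one_le_sq_aux d (by intro h; rw [h] at hdodd; simp at hdodd)
  have hcsq : c^2 = 1 := sq_one_aux A B c d hA hB hcd hc1 hd1
  have hdsq : d^2 = 1 := by
    have := sq_one_aux B A d c hB hA (by linarith) hd1 hc1
    exact this
  have hxf : x = u*c + B*v*d :=
    mul_left_cancel₀ hp0 (by linear_combination u*hc + B*v*hd + x*hpuv)
  have hyf : y = u*d - A*v*c :=
    mul_left_cancel₀ hp0 (by linear_combination u*hd - A*v*hc + y*hpuv)
  obtain ⟨s, hs⟩ : ∃ s, B*v = 4*s := by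
    obtain ⟨B2, hB2⟩ : ∃ t, B = 2*t := ⟨B/2, by omega⟩
    obtain ⟨v2, hv2'⟩ : ∃ t, v = 2*t := ⟨v/2, by omega⟩
    exact ⟨B2*v2, by rw [hB2, hv2']; ring⟩
  obtain ⟨r, hr⟩ : ∃ r, A*v = 2*r := by
    obtain ⟨v2, hv2'⟩ : ∃ t, v = 2*t := ⟨v/2, by omega⟩
    exact ⟨A*v2, by rw [hv2']; ring⟩
  rw [hs] at hxf ⊢
  rw [hr] at hyf ⊢
  have hcc : c = 1 ∨ c = -1 := by
    have h0 : (c-1)*(c+1) = 0 := by linear_combination hcsq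
    rcases mul_eq_zero.mp h0 with h|h
    · left; omega
    · right; omega
  have hdd : d = 1 ∨ d = -1 := by
    have h0 : (d-1)*(d+1) = 0 := by linear_combination hdsq
    rcases mul_eq_zero.mp h0 with h|h
    · left; omega
    · right; omega
  rcases hcc with rfl | rfl <;> rcases hdd with rfl | rfl
  · -- c = 1, d = 1 : x = u + 4s, y = u - 2r
    left
    have hx' : x = u + 4*s := by linear_combination hxf
    have hy' : y = u - 2*r := by linear_combination hyf
    refine ⟨hx', ?_⟩
    split_ifs with h
    · omega
    · omega
  · -- c = 1, d = -1 : x = u - 4s, y = -u - 2r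
    right
    have hx' : x = u - 4*s := by linear_combination hxf
    have hy' : y = -u - 2*r := by linear_combination hyf
    refine ⟨hx', ?_⟩
    split_ifs with h
    · omega
    · omega
  · -- c = -1, d = 1 : x = -u + 4s : contradiction with x % 4 = 1
    exfalso
    have hx' : x = -u + 4*s := by linear_combination hxf
    omega
  · -- c = -1, d = -1 : x = -u - 4s : contradiction
    exfalso
    have hx' : x = -u - 4*s := by linear_combination hxf
    omega

private lemma key (A B p u v : ℤ) (hA : 0 < A) (hB : 0 < B) (hAodd : A % 2 = 1)
    (hBeven : B % 2 = 0) (hAB8 : ¬ (8 ∣ A * B)) (hp : Prime p) (hpAB : ¬ p ∣ A * B)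
    (hpuv : p = u ^ 2 + A * B * v ^ 2) (hu4 : u % 4 = 1) (hv2 : v % 2 = 0) (hv0 : v ≠ 0) :
    ∑ᶠ xy ∈ {xy : ℤ × ℤ | xy.1 % 4 = 1 ∧ xy.2 % 4 = 1 ∧
        A * xy.1 ^ 2 + B * xy.2 ^ 2 = (A + B) * p}, xy.1 * xy.2 =
    (if (u - A * v) % 4 = 1 then 1 else -1) * (2 * u ^ 2 - 2 * A * B * v ^ 2) := by
  have hpA : ¬ p ∣ A := fun h => hpAB (h.mul_right B)
  have hpB : ¬ p ∣ B := fun h => hpAB (h.mul_left A)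
  obtain ⟨s, hs⟩ : ∃ s, B*v = 4*s := by
    obtain ⟨B2, hB2⟩ : ∃ t, B = 2*t := ⟨B/2, by omega⟩
    obtain ⟨v2, hv2'⟩ : ∃ t, v = 2*t := ⟨v/2, by omega⟩
    exact ⟨B2*v2, by rw [hB2, hv2']; ring⟩
  obtain ⟨r, hr⟩ : ∃ r, A*v = 2*r := by
    obtain ⟨v2, hv2'⟩ : ∃ t, v = 2*t := ⟨v/2, by omega⟩
    exact ⟨A*v2, by rw [hv2']; ring⟩
  have hPM : (u + A*v) % 4 = (u - A*v) % 4 := by rw [hr]; omega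
  have hsetEq : {xy : ℤ × ℤ | xy.1 % 4 = 1 ∧ xy.2 % 4 = 1 ∧
      A * xy.1 ^ 2 + B * xy.2 ^ 2 = (A + B) * p} =
      ({(u + B*v, (if (u - A * v) % 4 = 1 then 1 else -1) * (u - A*v)),
        (u - B*v, (if (u - A * v) % 4 = 1 then 1 else -1) * (u + A*v))} : Set (ℤ × ℤ)) := by
    ext ⟨x, y⟩
    simp only [Set.mem_setOf_eq, Set.mem_insert_iff, Set.mem_singleton_iff, Prod.mk.injEq]
    constructor
    · rintro ⟨hx4, hy4, hxyE⟩
      have hid : A^2*((x*u - B*v*y)*(x*u + B*v*y)) = p*(A^2*x^2 - A^2*B*v^2*(A+B)) := by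
        linear_combination (-(A^2*x^2))*hpuv - A^2*B*v^2*hxyE
      have hdvd2 : p ∣ (x*u - B*v*y)*(x*u + B*v*y) := by
        have h1 : p ∣ A^2*((x*u - B*v*y)*(x*u + B*v*y)) := ⟨_, hid⟩
        exact (hp.dvd_mul.mp h1).resolve_left
          (fun h => hpA (hp.dvd_of_dvd_pow h))
      rcases hp.dvd_mul.mp hdvd2 with h | h
      · exact fwd A B p u v x y hA hB hAodd hBeven hAB8 hp hpB hpuv hu4 hv2 hx4 hy4 hxyE h
      · have h' : p ∣ x*u - B*(-v)*y := by
          have he : x*u - B*(-v)*y = x*u + B*v*y := by ring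
          rw [he]; exact h
        rcases fwd A B p u (-v) x y hA hB hAodd hBeven hAB8 hp hpB
          (by rw [hpuv]; ring) hu4 (by omega) hx4 hy4 hxyE h' with ⟨h1, h2⟩ | ⟨h1, h2⟩
        · right
          rw [show u + B*(-v) = u - B*v from by ring] at h1
          rw [show u - A*(-v) = u + A*v from by ring, hPM] at h2
          exact ⟨h1, h2⟩
        · left
          rw [show u - B*(-v) = u + B*v from by ring] at h1
          rw [show u - A*(-v) = u + A*v from by ring, hPM,
            show u + A*(-v) = u - A*v from by ring] at h2
          exact ⟨h1, h2⟩
    · rintro (⟨rfl, rfl⟩ | ⟨rfl, rfl⟩)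
      · refine ⟨by rw [hs]; omega, ?_, ?_⟩
        · rw [hr]; split_ifs with h <;> omega
        · split_ifs with h <;> linear_combination (-(A+B))*hpuv
      · refine ⟨by rw [hs]; omega, ?_, ?_⟩
        · rw [hr]; split_ifs with h <;> omega
        · split_ifs with h <;> linear_combination (-(A+B))*hpuv
  rw [hsetEq]
  rw [finsum_mem_pair (by
    intro hEq
    rw [Prod.mk.injEq] at hEq
    have h1 := hEq.1
    have hBv : B*v ≠ 0 := mul_ne_zero hB.ne' hv0
    exact hBv (by linarith))]
  ring

theorem stmt8 (a b : ℤ) (ha : 0 < a) (hb : 0 < b) (hao : Odd a) (hbe : 2 ∣ b)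
    (hb8 : ¬ (8 ∣ b)) (hcop : IsCoprime a b)
    (p : ℕ) (hp : p.Prime) (hp8 : p % 8 = 1)
    (hpab : (p : ℤ) ≠ a * b) (hpab1 : (p : ℤ) ≠ a * b + 1)
    (x y : ℤ) (hxy : (p : ℤ) = x ^ 2 + a * b * y ^ 2) :
    lam a b ((a + b) * ((p : ℤ) - 1) / 8) = lam 1 (a * b) ((a * b + 1) * ((p : ℤ) - 1) / 8) := by
  have hp' : Prime (p:ℤ) := Nat.prime_iff_prime_int.mp hp
  have hp8' : (p:ℤ) % 8 = 1 := by omega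
  have hpge : (2:ℤ) ≤ (p:ℤ) := by exact_mod_cast hp.two_le
  have hb2 : b % 2 = 0 := Int.emod_eq_zero_of_dvd hbe
  have ha2 : a % 2 = 1 := Int.odd_iff.mp hao
  have hm2 : (a*b) % 2 = 0 := Int.emod_eq_zero_of_dvd (hbe.mul_left a)
  have hm8 : ¬ (8:ℤ) ∣ a * b := by
    intro h
    apply hb8
    have h2 : ¬ (2:ℤ) ∣ a := by
      intro h2
      have := Int.emod_eq_zero_of_dvd h2
      omega
    have h3 : (2:ℤ)^3 ∣ a * b := by norm_num; exact h
    have := Int.prime_two.pow_dvd_of_dvd_mul_left 3 h2 h3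
    norm_num at this
    exact this
  have hnsq : ∀ z : ℤ, (p:ℤ) ≠ z^2 := by
    intro z hz
    have hz2 : (p:ℤ) ∣ z^2 := ⟨1, by rw [mul_one]; exact hz.symm⟩
    have hzd : (p:ℤ) ∣ z := hp'.dvd_of_dvd_pow hz2
    obtain ⟨w, hw⟩ := hzd
    have hws : (p:ℤ) = (p:ℤ)^2*w^2 := by linear_combination hz + (z + (p:ℤ)*w)*hw
    rcases eq_or_ne w 0 with rfl | hw0
    · simp at hws; omega
    · have h1 : 1 ≤ w^2 := by rcases hw0.lt_or_gt with h|h <;> nlinarith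
      nlinarith
  have hy0 : y ≠ 0 := by
    rintro rfl
    exact hnsq x (by simpa using hxy)
  have hyy : 1 ≤ y^2 := by rcases hy0.lt_or_gt with h|h <;> nlinarith
  have hpm : ¬ (p:ℤ) ∣ a*b := by
    rintro ⟨k, hk⟩
    have hk1 : 0 < k := by nlinarith [mul_pos ha hb]
    rw [hk] at hxy
    have h1 : (p:ℤ) ≤ (p:ℤ)*k := le_mul_of_one_le_right (by positivity) (by omega)
    have h2 : (p:ℤ)*k ≤ (p:ℤ)*k*y^2 := le_mul_of_one_le_right (by positivity) hyy
    have hx2 : x^2 ≤ 0 := by linarith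
    have hx0 : x = 0 := by nlinarith [sq_nonneg x]
    subst hx0
    have hky : k * y^2 = 1 :=
      mul_left_cancel₀ (by positivity : (p:ℤ) ≠ 0) (by linear_combination (-1 : ℤ)*hxy)
    have hkk : k = 1 := by nlinarith [mul_le_mul_of_nonneg_left hyy (le_of_lt hk1)]
    exact hpab (by rw [hk, hkk, mul_one])
  have hxodd : x % 2 = 1 := by
    rcases Int.even_or_odd x with he|ho
    · exfalso
      obtain ⟨x2, hx2⟩ := he
      obtain ⟨m2, hm2'⟩ : ∃ t, a*b = 2*t := ⟨a*b/2, by omega⟩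
      have h2 : (2:ℤ) ∣ (p:ℤ) := ⟨2*x2^2 + m2*y^2, by rw [hxy, hx2, hm2']; ring⟩
      omega
    · exact Int.odd_iff.mp ho
  have hyeven : y % 2 = 0 := by
    rcases Int.even_or_odd y with he|ho
    · exact Int.even_iff.mp he
    · exfalso
      obtain ⟨k1, hk1⟩ := odd_sq_8 x hxodd
      obtain ⟨k2, hk2⟩ := odd_sq_8 y (Int.odd_iff.mp ho)
      obtain ⟨q, hq⟩ : ∃ q, (p:ℤ) = 8*q+1 := ⟨((p:ℤ)-1)/8, by omega⟩
      have h : (p:ℤ) = 8*k1 + 1 + a*b*(8*k2) + a*b := by rw [hxy, hk1, hk2]; ring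
      exact hm8 ⟨q - k1 - a*b*k2, by linear_combination hq - h⟩
  obtain ⟨u, hu4, husq⟩ : ∃ u : ℤ, u % 4 = 1 ∧ u ^ 2 = x ^ 2 := by
    rcases (by omega : x % 4 = 1 ∨ x % 4 = 3) with h|h
    · exact ⟨x, h, rfl⟩
    · exact ⟨-x, by omega, by ring⟩
  have hpuv : (p:ℤ) = u^2 + a*b*y^2 := by rw [husq]; exact hxy
  obtain ⟨P8, hP8⟩ : ∃ t, (p:ℤ) = 8*t + 1 := ⟨((p:ℤ)-1)/8, by omega⟩
  have hNL : (a+b) * ((p:ℤ)-1)/8 = (a+b)*P8 := by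
    rw [hP8, show (8*P8+1-1 : ℤ) = 8*P8 from by ring,
      show (a+b)*(8*P8) = 8*((a+b)*P8) from by ring]
    exact Int.mul_ediv_cancel_left _ (by norm_num)
  have hNR : (a*b+1) * ((p:ℤ)-1)/8 = (a*b+1)*P8 := by
    rw [hP8, show (8*P8+1-1 : ℤ) = 8*P8 from by ring,
      show (a*b+1)*(8*P8) = 8*((a*b+1)*P8) from by ring]
    exact Int.mul_ediv_cancel_left _ (by norm_num)
  have hLv : 8 * ((a+b) * ((p:ℤ)-1)/8) + a + b = (a+b)*(p:ℤ) := by rw [hNL, hP8]; ring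
  have hRv : 8 * ((a*b+1) * ((p:ℤ)-1)/8) + 1 + a*b = (1+a*b)*(p:ℤ) := by rw [hNR, hP8]; ring
  have hL := key a b (p:ℤ) u y ha hb ha2 hb2 hm8 hp' hpm hpuv hu4 hyeven hy0
  have hR := key 1 (a*b) (p:ℤ) u y one_pos (mul_pos ha hb) (by norm_num) hm2
    (by rw [one_mul]; exact hm8) hp' (by rw [one_mul]; exact hpm)
    (by rw [hpuv]; ring) hu4 hyeven hy0
  unfold lam
  rw [hLv, hRv, hL, hR]
  have hcond : (u - a*y) % 4 = (u - 1*y) % 4 := by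
    obtain ⟨a2, ha2'⟩ : ∃ t, a = 2*t+1 := ⟨(a-1)/2, by omega⟩
    obtain ⟨y2, hy2'⟩ : ∃ t, y = 2*t := ⟨y/2, by omega⟩
    rw [show u - a*y = (u - 1*y) + 4*(-(a2*y2)) from by rw [ha2', hy2']; ring,
      Int.add_mul_emod_self_left]
  rw [hcond]
  split_ifs with h <;> ring
end

section
/- Let a and b be positive integers neither of which is divisible by 8, let n be a nonnegative integer, and let p be an odd prime with p = 8n + a + b. Suppose p = ax² + by² with integers x, y satisfying x ≡ y (mod 4). Then x·y = λ(a, b; n+1), and (2ax² − p)² = p² − 4ab·λ(a, b; n+1)². -/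
/-- Uniqueness of the representation of a prime `p = a x² + b y²` with `x ≡ y ≡ 1 [ZMOD 4]`. -/
lemma uniq_rep (a b p : ℤ) (hpp : Prime p) (hp0 : 0 < p)
    (hpa : ¬ p ∣ a) (hab : 2 ≤ a * b)
    (x y u v : ℤ) (hx : x % 4 = 1) (hy : y % 4 = 1) (hu : u % 4 = 1) (hv : v % 4 = 1)
    (hxy : p = a * x ^ 2 + b * y ^ 2) (huv : p = a * u ^ 2 + b * v ^ 2) :
    u = x ∧ v = y := by
  have hx0 : x ≠ 0 := by omega
  have hp0' : p ≠ 0 := hp0.ne'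
  have hkey : a * ((x * v - y * u) * (x * v + y * u)) = p * (v ^ 2 - y ^ 2) := by
    linear_combination y ^ 2 * huv - v ^ 2 * hxy
  have hdvd : p ∣ (x * v - y * u) * (x * v + y * u) := by
    rcases (hpp.dvd_mul.mp ⟨v ^ 2 - y ^ 2, hkey⟩) with h | h
    · exact absurd h hpa
    · exact h
  -- a bound: any multiple of p appearing as B or D must vanish
  have hbound : ∀ B : ℤ, p ∣ B → a * b * B ^ 2 ≤ p ^ 2 → B = 0 := by
    intro B hB hle
    by_contra hBne
    have h1 : p ≤ |B| := Int.le_of_dvd (abs_pos.mpr hBne) ((dvd_abs _ _).mpr hB)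
    have h2 : p ^ 2 ≤ B ^ 2 := by
      have := sq_abs B
      nlinarith [abs_nonneg B]
    nlinarith
  rcases hpp.dvd_mul.mp hdvd with hB | hD
  · -- B = x v - y u = 0
    have hB0 : x * v - y * u = 0 := by
      apply hbound _ hB
      nlinarith [sq_nonneg (a * x * u + b * y * v)]
    have hsq : p * x ^ 2 = p * u ^ 2 := by
      linear_combination x ^ 2 * huv - u ^ 2 * hxy + b * (x * v + y * u) * hB0
    have hxu : (x - u) * (x + u) = 0 := by
      have := mul_left_cancel₀ hp0' hsq
      linear_combination this
    rcases mul_eq_zero.mp hxu with h | h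
    · have hux : u = x := by linarith
      refine ⟨hux, ?_⟩
      have : x * (v - y) = 0 := by
        rw [hux] at hB0; linear_combination hB0
      rcases mul_eq_zero.mp this with h' | h'
      · exact absurd h' hx0
      · linarith
    · exfalso; omega
  · -- D = x v + y u = 0
    exfalso
    have hD0 : x * v + y * u = 0 := by
      apply hbound _ hD
      nlinarith [sq_nonneg (a * x * u - b * y * v)]
    have hsq : p * x ^ 2 = p * u ^ 2 := by
      linear_combination x ^ 2 * huv - u ^ 2 * hxy + b * (x * v - y * u) * hD0
    have hxu : (x - u) * (x + u) = 0 := by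
      have := mul_left_cancel₀ hp0' hsq
      linear_combination this
    rcases mul_eq_zero.mp hxu with h | h
    · have hux : u = x := by linarith
      rw [hux] at hD0
      have : x * (v + y) = 0 := by linear_combination hD0
      rcases mul_eq_zero.mp this with h' | h'
      · exact hx0 h'
      · omega
    · omega

theorem stmt9 (a b : ℤ) (ha : 0 < a) (hb : 0 < b) (ha8 : ¬ (8 ∣ a)) (hb8 : ¬ (8 ∣ b))
    (n : ℕ) (p : ℕ) (hp : p.Prime) (hpodd : Odd p)
    (hpn : (p : ℤ) = 8 * n + a + b)
    (x y : ℤ) (hxy : (p : ℤ) = a * x ^ 2 + b * y ^ 2) (hmod : x % 4 = y % 4) :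
    x * y = lam a b n ∧
      (2 * a * x ^ 2 - (p : ℤ)) ^ 2 = (p : ℤ) ^ 2 - 4 * a * b * (lam a b n) ^ 2 := by
  have hp2n : p % 2 = 1 := Nat.odd_iff.mp hpodd
  have hp2 : (p : ℤ) % 2 = 1 := by omega
  have hppZ : Prime (p : ℤ) := Int.prime_iff_natAbs_prime.mpr (by simpa using hp)
  have hp0 : (0 : ℤ) < p := by exact_mod_cast hp.pos
  -- x and y are odd
  have hxodd : x % 2 = 1 := by
    by_contra h
    have h2x : (2 : ℤ) ∣ x := by omega
    have h2y : (2 : ℤ) ∣ y := by omega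
    obtain ⟨x', rfl⟩ := h2x
    obtain ⟨y', rfl⟩ := h2y
    have : (p : ℤ) = 2 * (2 * (a * x' ^ 2 + b * y' ^ 2)) := by linear_combination hxy
    omega
  have hyodd : y % 2 = 1 := by omega
  -- p does not divide a
  have hpa : ¬ (p : ℤ) ∣ a := by
    intro h
    have := Int.le_of_dvd ha h
    omega
  -- a * b ≥ 2
  have hab : 2 ≤ a * b := by
    have hab1 : ¬ (a = 1 ∧ b = 1) := by
      rintro ⟨rfl, rfl⟩; omega
    rcases (by omega : a = 1 ∨ 2 ≤ a) with rfl | h2a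
    · have : 2 ≤ b := by omega
      nlinarith
    · nlinarith
  -- the normalized representative
  set x₀ : ℤ := if x % 4 = 1 then x else -x with hx₀def
  set y₀ : ℤ := if x % 4 = 1 then y else -y with hy₀def
  have hcases : x % 4 = 1 ∨ x % 4 = 3 := by omega
  have hx₀ : x₀ % 4 = 1 := by
    rcases hcases with h | h <;> simp [hx₀def, h] <;> omega
  have hy₀ : y₀ % 4 = 1 := by
    rcases hcases with h | h <;> simp [hy₀def, h] <;> omega
  have heq₀ : (p : ℤ) = a * x₀ ^ 2 + b * y₀ ^ 2 := by
    rcases hcases with h | h <;> simp [hx₀def, hy₀def, h] <;> linear_combination hxy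
  have hprod : x * y = x₀ * y₀ := by
    rcases hcases with h | h <;> simp [hx₀def, hy₀def, h] <;> ring
  -- the set in lam is the singleton {(x₀, y₀)}
  have hset : {xy : ℤ × ℤ | xy.1 % 4 = 1 ∧ xy.2 % 4 = 1 ∧
      a * xy.1 ^ 2 + b * xy.2 ^ 2 = 8 * (n : ℤ) + a + b} = {(x₀, y₀)} := by
    ext ⟨u, v⟩
    simp only [Set.mem_setOf_eq, Set.mem_singleton_iff, Prod.mk.injEq]
    constructor
    · rintro ⟨hu, hv, huv⟩
      exact uniq_rep a b p hppZ hp0 hpa hab x₀ y₀ u v hx₀ hy₀ hu hv heq₀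
        (by rw [huv, hpn])
    · rintro ⟨rfl, rfl⟩
      exact ⟨hx₀, hy₀, by rw [← heq₀, hpn]⟩
  have hlam : lam a b n = x₀ * y₀ := by
    rw [lam, hset, finsum_mem_singleton]
  constructor
  · rw [hlam, hprod]
  · rw [hlam, ← hprod]
    linear_combination (-4 * a * x ^ 2) * hxy
end

section
/- Let a and b be odd positive integers with ab ≠ 3 and a + b ≡ 4 (mod 8). Let p be an odd prime with p not dividing ab, and suppose 4p = ax² + by² with integers x, y satisfying x ≡ y ≡ 1 (mod 4). Set n = (p − (a+b)/4)/2; then n is a nonnegative integer, x·y = λ(a, b; n+1), and (ax² − 2p)² = 4p² − ab·λ(a, b; n+1)². -/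
set_option maxHeartbeats 1000000 in

lemma uniq_rep_s11 (a b : ℤ) (ha : 0 < a) (hb : 0 < b) (hab5 : 5 ≤ a * b)
    (p : ℕ) (hp : p.Prime) (hpodd : Odd p) (hpab : ¬ ((p : ℤ) ∣ a * b))
    (x₁ y₁ x₂ y₂ : ℤ)
    (h1 : a * x₁ ^ 2 + b * y₁ ^ 2 = 4 * p) (h2 : a * x₂ ^ 2 + b * y₂ ^ 2 = 4 * p)
    (hx1 : x₁ % 4 = 1) (hy1 : y₁ % 4 = 1) (hx2 : x₂ % 4 = 1) (hy2 : y₂ % 4 = 1) :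
    x₁ = x₂ ∧ y₁ = y₂ := by
  have hpz : Prime (p : ℤ) := Nat.prime_iff_prime_int.mp hp
  have hppos : (0 : ℤ) < p := by exact_mod_cast hp.pos
  have hp2 : (p : ℤ) % 2 = 1 := by
    have := Nat.odd_iff.mp hpodd; omega
  set v := x₁ * y₂ - x₂ * y₁ with hv
  set w := x₁ * y₂ + x₂ * y₁ with hw
  -- mod 4 facts
  have hm1 : (x₁ * y₂) % 4 = 1 := by rw [Int.mul_emod, hx1, hy2]; decide
  have hm2 : (x₂ * y₁) % 4 = 1 := by rw [Int.mul_emod, hx2, hy1]; decide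
  have hv4 : v % 4 = 0 := by omega
  have hw4 : w % 4 = 2 := by omega
  -- p divides v * w
  have hkey : a * b * (v * w) = 4 * p * (b * y₂ ^ 2 - b * y₁ ^ 2) := by
    simp only [hv, hw]; ring_nf
    linear_combination (b * y₂ ^ 2) * h1 - (b * y₁ ^ 2) * h2
  have hdvd : (p : ℤ) ∣ a * b * (v * w) := ⟨4 * (b * y₂ ^ 2 - b * y₁ ^ 2), by linarith [hkey]⟩
  have hdvw : (p : ℤ) ∣ v * w := by
    rcases hpz.dvd_mul.mp hdvd with h | h
    · exact absurd h hpab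
    · exact h
  -- bounds
  have hbrv : (a * x₁ * x₂ + b * y₁ * y₂) ^ 2 + a * b * v ^ 2 = 16 * (p:ℤ) ^ 2 := by
    linear_combination (a * x₂ ^ 2 + b * y₂ ^ 2) * h1 + 4 * (p:ℤ) * h2
  have hbrw : (a * x₁ * x₂ - b * y₁ * y₂) ^ 2 + a * b * w ^ 2 = 16 * (p:ℤ) ^ 2 := by
    linear_combination (a * x₂ ^ 2 + b * y₂ ^ 2) * h1 + 4 * (p:ℤ) * h2
  have hbv : a * b * v ^ 2 ≤ 16 * (p:ℤ) ^ 2 := by nlinarith [sq_nonneg (a * x₁ * x₂ + b * y₁ * y₂)]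
  have hbw : a * b * w ^ 2 ≤ 16 * (p:ℤ) ^ 2 := by nlinarith [sq_nonneg (a * x₁ * x₂ - b * y₁ * y₂)]
  have hppsq : (0:ℤ) < (p:ℤ) ^ 2 := by positivity
  have hvlt : v ^ 2 < 4 * (p:ℤ) ^ 2 := by
    nlinarith [mul_nonneg (by linarith : (0:ℤ) ≤ a * b - 5) (sq_nonneg v)]
  have hwlt : w ^ 2 < 4 * (p:ℤ) ^ 2 := by
    nlinarith [mul_nonneg (by linarith : (0:ℤ) ≤ a * b - 5) (sq_nonneg w)]
  have hsmall : ∀ z : ℤ, (p : ℤ) ∣ z → z ^ 2 < 4 * (p:ℤ) ^ 2 → z = 0 ∨ z = p ∨ z = -p := by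
    rintro z ⟨k, rfl⟩ hz
    have hk : k ^ 2 < 4 := by nlinarith
    have hk1 : k = -1 ∨ k = 0 ∨ k = 1 := by
      have h1 : -2 < k := by nlinarith
      have h2 : k < 2 := by nlinarith
      omega
    rcases hk1 with rfl | rfl | rfl
    · right; right; ring
    · left; ring
    · right; left; ring
  have hv0 : v = 0 := by
    rcases hpz.dvd_mul.mp hdvw with h | h
    · rcases hsmall v h hvlt with h | h | h
      · exact h
      · omega
      · omega
    · rcases hsmall w h hwlt with h | h | h <;> omega
  -- from v = 0 deduce equality
  have hx1y2 : x₁ * y₂ = x₂ * y₁ := by omega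
  have hxsq : x₁ ^ 2 = x₂ ^ 2 := by
    have key : 4 * (p:ℤ) * (x₂ ^ 2 - x₁ ^ 2) = 0 := by
      linear_combination x₁ ^ 2 * h2 - x₂ ^ 2 * h1 - b * (x₂ * y₁ + x₁ * y₂) * hx1y2
    have : x₂ ^ 2 - x₁ ^ 2 = 0 := by
      rcases mul_eq_zero.mp key with h | h
      · nlinarith
      · exact h
    linarith
  have hysq : y₁ ^ 2 = y₂ ^ 2 := by
    have hby : b * y₁ ^ 2 = b * y₂ ^ 2 := by linear_combination h1 - h2 - a * hxsq
    exact mul_left_cancel₀ (ne_of_gt hb) hby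
  have hxe : x₁ = x₂ := by
    have hfac : (x₁ - x₂) * (x₁ + x₂) = 0 := by linear_combination hxsq
    rcases mul_eq_zero.mp hfac with h | h <;> omega
  have hye : y₁ = y₂ := by
    have hfac : (y₁ - y₂) * (y₁ + y₂) = 0 := by linear_combination hysq
    rcases mul_eq_zero.mp hfac with h | h <;> omega
  exact ⟨hxe, hye⟩

theorem stmt11 (a b : ℤ) (ha : 0 < a) (hb : 0 < b) (hao : Odd a) (hbo : Odd b)
    (hab3 : a * b ≠ 3) (hab8 : (a + b) % 8 = 4)
    (p : ℕ) (hp : p.Prime) (hpodd : Odd p) (hpab : ¬ ((p : ℤ) ∣ a * b))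
    (x y : ℤ) (hxy : 4 * (p : ℤ) = a * x ^ 2 + b * y ^ 2)
    (hx4 : x % 4 = 1) (hy4 : y % 4 = 1)
    (n : ℤ) (hn : n = ((p : ℤ) - (a + b) / 4) / 2) :
    (2 : ℤ) ∣ ((p : ℤ) - (a + b) / 4) ∧ 0 ≤ n ∧ x * y = lam a b n ∧
      (a * x ^ 2 - 2 * (p : ℤ)) ^ 2 = 4 * (p : ℤ) ^ 2 - a * b * (lam a b n) ^ 2 := by
  have hpn2 : p % 2 = 1 := Nat.odd_iff.mp hpodd
  have hp2 : (p : ℤ) % 2 = 1 := by omega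
  -- a*b ≥ 5
  have habodd : Odd (a * b) := hao.mul hbo
  have hab5 : 5 ≤ a * b := by
    rcases habodd with ⟨k, hk⟩
    by_contra hlt
    push_neg at hlt
    have h1 : 0 < a * b := mul_pos ha hb
    have : a * b = 1 ∨ a * b = 3 := by omega
    rcases this with h | h
    · have ha1 : a = 1 := by nlinarith
      have hb1 : b = 1 := by nlinarith
      omega
    · exact hab3 h
  -- x, y nonzero ⇒ squares ≥ 1
  have hone : ∀ z : ℤ, z % 4 = 1 → 1 ≤ z ^ 2 := by
    intro z hz
    have hzne : z ≠ 0 := by omega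
    have : (0:ℤ) < z ^ 2 := by positivity
    exact Int.lt_iff_add_one_le.mp this
  have hx1 : 1 ≤ x ^ 2 := hone x hx4
  have hy1 : 1 ≤ y ^ 2 := hone y hy4
  have hab4p : a + b ≤ 4 * (p : ℤ) := by nlinarith
  have hdvd2 : (2 : ℤ) ∣ ((p : ℤ) - (a + b) / 4) := by omega
  have hn0 : 0 ≤ n := by omega
  have h4p : 8 * n + a + b = 4 * (p : ℤ) := by omega
  -- the solution set is a singleton
  have hset : {xy : ℤ × ℤ | xy.1 % 4 = 1 ∧ xy.2 % 4 = 1 ∧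
      a * xy.1 ^ 2 + b * xy.2 ^ 2 = 8 * n + a + b} = {(x, y)} := by
    ext ⟨u, v⟩
    simp only [Set.mem_setOf_eq, Set.mem_singleton_iff, Prod.mk.injEq]
    constructor
    · rintro ⟨hu4, hv4, huv⟩
      rw [h4p] at huv
      exact uniq_rep_s11 a b ha hb hab5 p hp hpodd hpab u v x y huv hxy.symm hu4 hv4 hx4 hy4
    · rintro ⟨rfl, rfl⟩
      exact ⟨hx4, hy4, by omega⟩
  have hlam : lam a b n = x * y := by
    rw [lam, hset, finsum_mem_singleton]
  refine ⟨hdvd2, hn0, hlam.symm, ?_⟩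
  rw [hlam]
  linear_combination (-(a * x ^ 2)) * hxy
end

section
/- For every positive integer n, λ(1, 3; n+1) = (1/2) · Σ_{(x,y) ∈ ℤ², x² + 3y² = 2n+1} (x² − 3y²), where the sum is over all integer pairs (x, y) with x² + 3y² = 2n + 1. -/
private lemma sq_emod_two (u : ℤ) : u ^ 2 % 2 = u % 2 := by
  have h : Even (u ^ 2) ↔ Even u := Int.even_pow' (by norm_num)
  rw [Int.even_iff, Int.even_iff] at h
  omega

private lemma finite_sols (c : ℤ) : {p : ℤ × ℤ | p.1 ^ 2 + 3 * p.2 ^ 2 = c}.Finite := by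
  apply Set.Finite.subset (((Set.finite_Icc (-(c+1)) (c+1)).prod
    (Set.finite_Icc (-(c+1)) (c+1))))
  rintro ⟨x, y⟩ hp
  simp only [Set.mem_setOf_eq] at hp
  constructor <;> simp only [Set.mem_Icc] <;> constructor <;>
    nlinarith [sq_nonneg (x+1), sq_nonneg (x-1), sq_nonneg (y+1), sq_nonneg (y-1),
      sq_nonneg x, sq_nonneg y]

theorem stmt12 (n : ℕ) (hn : 0 < n) :
    2 * lam 1 3 (n : ℤ) =
      ∑ᶠ xy ∈ {xy : ℤ × ℤ | xy.1 ^ 2 + 3 * xy.2 ^ 2 = 2 * (n : ℤ) + 1},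
        (xy.1 ^ 2 - 3 * xy.2 ^ 2) := by
  set m : ℤ := (n : ℤ) with hm
  set S : Set (ℤ × ℤ) := {p | p.1 ^ 2 + 3 * p.2 ^ 2 = 2 * m + 1} with hSdef
  set L : Set (ℤ × ℤ) := {xy : ℤ × ℤ | xy.1 % 4 = 1 ∧ xy.2 % 4 = 1 ∧
      1 * xy.1 ^ 2 + 3 * xy.2 ^ 2 = 8 * m + 1 + 3} with hLdef
  have hS : S.Finite := finite_sols _
  have hL : L.Finite := by
    apply Set.Finite.subset (finite_sols (8 * m + 4))
    rintro ⟨x, y⟩ ⟨-, -, h⟩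
    simp only [Set.mem_setOf_eq]
    linarith
  -- the transformation ψ
  set ψ : ℤ × ℤ → ℤ × ℤ := fun p => (p.1 + 3 * p.2, p.1 - p.2) with hψ
  have hψinj : Function.Injective ψ := by
    rintro ⟨a, b⟩ ⟨c, d⟩ h
    simp only [hψ, Prod.mk.injEq] at h
    obtain ⟨h1, h2⟩ := h
    exact Prod.ext (by omega) (by omega)
  -- negation
  set neg : ℤ × ℤ → ℤ × ℤ := fun p => (-p.1, -p.2) with hneg
  have hneginj : Function.Injective neg := by
    rintro ⟨a, b⟩ ⟨c, d⟩ h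
    simp only [hneg, Prod.mk.injEq] at h
    exact Prod.ext (by omega) (by omega)
  -- key set identity : ψ '' S = L ∪ neg '' L
  have hLsub : L ⊆ ψ '' S := by
    rintro ⟨x, y⟩ ⟨h1, h2, h3⟩
    refine ⟨((x + 3 * y) / 4, (x - y) / 4), ?_, ?_⟩
    · have hx : x = (x + 3 * y) / 4 + 3 * ((x - y) / 4) := by omega
      have hy : y = (x + 3 * y) / 4 - (x - y) / 4 := by omega
      simp only [hSdef, Set.mem_setOf_eq]
      have h4 : x ^ 2 + 3 * y ^ 2 = 8 * m + 4 := by linarith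
      have hkey : 4 * (((x + 3 * y) / 4) ^ 2 + 3 * ((x - y) / 4) ^ 2) = 8 * m + 4 := by
        calc 4 * (((x + 3 * y) / 4) ^ 2 + 3 * ((x - y) / 4) ^ 2)
            = ((x + 3 * y) / 4 + 3 * ((x - y) / 4)) ^ 2
              + 3 * ((x + 3 * y) / 4 - (x - y) / 4) ^ 2 := by ring
          _ = x ^ 2 + 3 * y ^ 2 := by rw [← hx, ← hy]
          _ = 8 * m + 4 := h4
      linarith
    · simp only [hψ]
      exact Prod.ext (by simp; omega) (by simp; omega)
  have hSneg : ∀ p ∈ S, neg p ∈ S := by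
    rintro ⟨x, y⟩ h
    simp only [hSdef, Set.mem_setOf_eq, hneg] at h ⊢
    linarith [h]
  have hset : ψ '' S = L ∪ neg '' L := by
    apply Set.eq_of_subset_of_subset
    · rintro q ⟨⟨u, v⟩, huv, rfl⟩
      simp only [hSdef, Set.mem_setOf_eq] at huv
      -- parity facts
      have h2u := sq_emod_two u
      have h2v := sq_emod_two v
      have hA : u ^ 2 + 3 * v ^ 2 = 2 * m + 1 := huv
      have huvodd : (u + v) % 2 = 1 := by omega
      simp only [hψ]
      by_cases hc : (u + 3 * v) % 4 = 1
      · left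
        refine ⟨hc, by omega, ?_⟩
        simp only
        ring_nf
        nlinarith [hA]
      · right
        refine ⟨(-(u + 3 * v), -(u - v)), ⟨by omega, by omega, ?_⟩, ?_⟩
        · simp only
          ring_nf
          nlinarith [hA]
        · simp only [hneg, neg_neg]
    · rintro q (hq | ⟨p, hp, rfl⟩)
      · exact hLsub hq
      · obtain ⟨s, hs, hps⟩ := hLsub hp
        exact ⟨neg s, hSneg s hs, by rw [← hps]; simp only [hψ, hneg]; exact Prod.ext (by simp; ring) (by simp; ring)⟩
  -- disjointness
  have hdisj : Disjoint L (neg '' L) := by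
    rw [Set.disjoint_left]
    rintro ⟨x, y⟩ ⟨h1, -, -⟩ ⟨⟨a, b⟩, ⟨h1', -, -⟩, hab⟩
    simp only [hneg, Prod.mk.injEq] at hab
    omega
  -- sum over neg '' L equals sum over L
  have hnegsum : ∑ᶠ p ∈ neg '' L, p.1 * p.2 = ∑ᶠ p ∈ L, p.1 * p.2 := by
    rw [finsum_mem_image (hneginj.injOn)]
    apply finsum_mem_congr rfl
    rintro ⟨x, y⟩ -
    simp only [hneg]
    ring
  -- sum of uv over S is zero
  have hSimg : (fun p : ℤ × ℤ => (p.1, -p.2)) '' S = S := by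
    apply Set.eq_of_subset_of_subset
    · rintro q ⟨⟨u, v⟩, huv, rfl⟩
      simp only [hSdef, Set.mem_setOf_eq] at huv ⊢
      linarith
    · rintro ⟨u, v⟩ h
      exact ⟨(u, -v), by simp only [hSdef, Set.mem_setOf_eq] at h ⊢; linarith, by simp⟩
  have huvzero : ∑ᶠ p ∈ S, p.1 * p.2 = 0 := by
    have h1 : ∑ᶠ p ∈ S, p.1 * p.2 = -∑ᶠ p ∈ S, p.1 * p.2 := by
      conv_lhs => rw [← hSimg, finsum_mem_image (by
        rintro ⟨a, b⟩ - ⟨c, d⟩ - h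
        simp only [Prod.mk.injEq] at h
        exact Prod.ext (by omega) (by omega))]
      rw [← finsum_mem_neg_distrib _ hS]
      apply finsum_mem_congr rfl
      rintro ⟨x, y⟩ -
      ring
    omega
  -- main computation
  have key : ∑ᶠ p ∈ ψ '' S, p.1 * p.2
      = ∑ᶠ p ∈ S, (p.1 ^ 2 - 3 * p.2 ^ 2) := by
    rw [finsum_mem_image (hψinj.injOn)]
    have step : ∑ᶠ p ∈ S, (ψ p).1 * (ψ p).2
        = ∑ᶠ p ∈ S, ((p.1 ^ 2 - 3 * p.2 ^ 2) + (p.1 * p.2 + p.1 * p.2)) := by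
      apply finsum_mem_congr rfl
      rintro ⟨x, y⟩ -
      simp only [hψ]
      ring
    rw [step, finsum_mem_add_distrib hS, finsum_mem_add_distrib hS, huvzero, add_zero, add_zero]
  have key2 : ∑ᶠ p ∈ ψ '' S, p.1 * p.2 = 2 * lam 1 3 m := by
    rw [hset, finsum_mem_union hdisj hL (hL.image neg), hnegsum, lam, ← hLdef]
    ring
  rw [← key2, key]
end

section
/- For every positive integer n, λ(1, 7; 2n+1) = (1/2) · Σ_{(x,y) ∈ ℤ², x² + 7y² = 2n+1} (x² − 7y²), where the sum is over all integer pairs (x, y) with x² + 7y² = 2n + 1. -/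
/-!
The substitution `(x, y) = (X - 7Y, X + Y)` satisfies `x² + 7y² = 8(X² + 7Y²)` and
`xy = X² - 7Y² - 6XY`; it maps the solutions of `X² + 7Y² = 2N + 1` with `X + Y ≡ 1 (mod 4)`
bijectively onto those of `x² + 7y² = 16N + 8` with `x ≡ y ≡ 1 (mod 4)`. Since `X + Y` is odd,
`(X, Y) ↦ (-X, -Y)` exchanges the classes `X + Y ≡ 1` and `X + Y ≡ 3 (mod 4)` and fixes the summand,
so `λ` is half the sum over all solutions; there the cross term `∑ XY` vanishes by `Y ↦ -Y`.
-/

open Set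

theorem finsum_mem_eq_zero_of_involutive {α M : Type*} [AddCommGroup M] [IsAddTorsionFree M]
    {s : Set α} {f : α → M} (σ : α → α) (hσ : Function.Involutive σ) (hs : MapsTo σ s s)
    (hf : ∀ x ∈ s, f (σ x) = -f x) : ∑ᶠ x ∈ s, f x = 0 := by
  have h : ∑ᶠ x ∈ s, f x = ∑ᶠ x ∈ s, -f x :=
    finsum_mem_eq_of_bijOn σ (InvOn.bijOn ⟨fun x _ => hσ x, fun x _ => hσ x⟩ hs hs)
      fun x hx => by rw [hf x hx, neg_neg]
  simp only [finsum_neg_distrib] at h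
  exact self_eq_neg.mp h

theorem finsum_mem_eq_two_nsmul_of_involutive {α M : Type*} [AddCommMonoid M]
    {s t : Set α} {f : α → M} (hs : s.Finite) (σ : α → α) (hσ : Function.Involutive σ)
    (hst : MapsTo σ (s ∩ t) (s \ t)) (hts : MapsTo σ (s \ t) (s ∩ t))
    (hf : ∀ x ∈ s, f (σ x) = f x) : ∑ᶠ x ∈ s, f x = 2 • ∑ᶠ x ∈ s ∩ t, f x := by
  have h : ∑ᶠ x ∈ s ∩ t, f x = ∑ᶠ x ∈ s \ t, f x :=
    finsum_mem_eq_of_bijOn σ (InvOn.bijOn ⟨fun x _ => hσ x, fun x _ => hσ x⟩ hst hts)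
      fun x hx => (hf x hx.1).symm
  rw [← finsum_mem_inter_add_sdiff t hs, ← h, two_nsmul]

def ellipsePoints (c M : ℤ) : Set (ℤ × ℤ) := {p | p.1 ^ 2 + c * p.2 ^ 2 = M}

theorem ellipsePoints_finite {c : ℤ} (hc : 0 < c) (M : ℤ) : (ellipsePoints c M).Finite := by
  refine (finite_Icc (-M, -M) (M, M)).subset fun p (hp : _ = M) => ?_
  refine ⟨⟨?_, ?_⟩, ?_, ?_⟩ <;>
    nlinarith [sq_nonneg (p.1 + 1), sq_nonneg (p.1 - 1), sq_nonneg (p.2 + 1), sq_nonneg (p.2 - 1),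
      mul_nonneg hc.le (sq_nonneg p.2)]

theorem neg_mem_ellipsePoints {c M : ℤ} {p : ℤ × ℤ} (hp : p ∈ ellipsePoints c M) :
    -p ∈ ellipsePoints c M := by
  simpa [ellipsePoints] using hp

theorem finsum_ellipsePoints_mul_eq_zero (c M : ℤ) : ∑ᶠ p ∈ ellipsePoints c M, p.1 * p.2 = 0 :=
  finsum_mem_eq_zero_of_involutive (fun p => (p.1, -p.2)) (fun p => by simp)
    (fun p (hp : _ = M) => show _ = M by simpa using hp) fun p _ => by simp

theorem add_emod_four_of_mem_ellipsePoints {N : ℤ} {p : ℤ × ℤ}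
    (hp : p ∈ ellipsePoints 7 (2 * N + 1)) : (p.1 + p.2) % 4 = 1 ∨ (p.1 + p.2) % 4 = 3 := by
  have hodd : Odd (p.1 ^ 2 + 7 * p.2 ^ 2) := ⟨N, hp⟩
  obtain ⟨k, hk⟩ : Odd (p.1 + p.2) := by
    simpa [Int.odd_add, parity_simps, show ¬Even (7 : ℤ) by decide] using hodd
  omega

theorem sub_emod_eight_eq_zero_of_sq_add_seven_mul_sq_eq {N x y : ℤ} (hx : x % 4 = 1)
    (hy : y % 4 = 1) (h : x ^ 2 + 7 * y ^ 2 = 16 * N + 8) : (y - x) % 8 = 0 := by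
  obtain ⟨a, rfl⟩ : ∃ a, x = 4 * a + 1 := ⟨x / 4, by omega⟩
  obtain ⟨b, rfl⟩ : ∃ b, y = 4 * b + 1 := ⟨y / 4, by omega⟩
  have : a + 7 * b = 2 * (N - a ^ 2 - 7 * b ^ 2) := by linarith
  omega

theorem bijOn_ellipsePoints_seven (N : ℤ) :
    BijOn (fun p : ℤ × ℤ => (p.1 - 7 * p.2, p.1 + p.2))
      (ellipsePoints 7 (2 * N + 1) ∩ {p | (p.1 + p.2) % 4 = 1})
      {p | p.1 % 4 = 1 ∧ p.2 % 4 = 1 ∧ 1 * p.1 ^ 2 + 7 * p.2 ^ 2 = 8 * (2 * N) + 1 + 7} := by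
  refine InvOn.bijOn (f' := fun p => ((p.1 + 7 * p.2) / 8, (p.2 - p.1) / 8)) ⟨?_, ?_⟩ ?_ ?_
  · rintro ⟨X, Y⟩ -
    simp only [Prod.mk.injEq]
    omega
  · rintro ⟨x, y⟩ ⟨hx, hy, h⟩
    have := sub_emod_eight_eq_zero_of_sq_add_seven_mul_sq_eq hx hy (by linarith)
    simp only [Prod.mk.injEq] at *
    omega
  · rintro ⟨X, Y⟩ ⟨hp, hq : (X + Y) % 4 = 1⟩
    change X ^ 2 + 7 * Y ^ 2 = 2 * N + 1 at hp
    exact ⟨show (X - 7 * Y) % 4 = 1 by omega, hq, by linear_combination 8 * hp⟩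
  · rintro ⟨x, y⟩ ⟨hx, hy, h⟩
    have h8 := sub_emod_eight_eq_zero_of_sq_add_seven_mul_sq_eq hx hy (by linarith)
    simp only at hx hy h h8 ⊢
    obtain ⟨Y, rfl⟩ : ∃ Y, x = y - 8 * Y := ⟨(y - x) / 8, by omega⟩
    refine ⟨show _ = 2 * N + 1 from ?_, show _ % 4 = 1 by omega⟩
    have hX : (y - 8 * Y + 7 * y) / 8 = y - Y := by omega
    have hY : (y - (y - 8 * Y)) / 8 = Y := by omega
    rw [hX, hY]
    linarith

theorem two_mul_lam_one_seven (N : ℤ) :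
    2 * lam 1 7 (2 * N) = ∑ᶠ p ∈ ellipsePoints 7 (2 * N + 1), (p.1 ^ 2 - 7 * p.2 ^ 2) := by
  set B := ellipsePoints 7 (2 * N + 1)
  have hB : B.Finite := ellipsePoints_finite (by norm_num) _
  calc 2 * lam 1 7 (2 * N)
      = 2 * ∑ᶠ p ∈ B ∩ {p | (p.1 + p.2) % 4 = 1}, (p.1 ^ 2 - 7 * p.2 ^ 2 - 6 * (p.1 * p.2)) := by
        rw [lam, finsum_mem_eq_of_bijOn _ (bijOn_ellipsePoints_seven N) fun p _ => ?_]
        ring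
    _ = ∑ᶠ p ∈ B, (p.1 ^ 2 - 7 * p.2 ^ 2 - 6 * (p.1 * p.2)) := by
        rw [two_mul, ← two_nsmul]
        refine (finsum_mem_eq_two_nsmul_of_involutive hB Neg.neg neg_involutive ?_ ?_
          fun p _ => by simp only [Prod.fst_neg, Prod.snd_neg]; ring).symm
        · rintro p ⟨hp, hq : _ % 4 = 1⟩
          refine ⟨neg_mem_ellipsePoints hp, fun h : (-p.1 + -p.2) % 4 = 1 => ?_⟩
          omega
        · rintro p ⟨hp, hq : ¬_ % 4 = 1⟩
          refine ⟨neg_mem_ellipsePoints hp, show (-p.1 + -p.2) % 4 = 1 from ?_⟩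
          have := add_emod_four_of_mem_ellipsePoints hp
          omega
    _ = ∑ᶠ p ∈ B, (p.1 ^ 2 - 7 * p.2 ^ 2) - 6 * ∑ᶠ p ∈ B, p.1 * p.2 := by
        rw [mul_finsum_mem]
        exact finsum_mem_sub_distrib _ _ hB
    _ = ∑ᶠ p ∈ B, (p.1 ^ 2 - 7 * p.2 ^ 2) := by
        rw [finsum_ellipsePoints_mul_eq_zero, mul_zero, sub_zero]

theorem stmt13_general (n : ℕ) :
    2 * lam 1 7 (2 * (n : ℤ)) =
      ∑ᶠ xy ∈ {xy : ℤ × ℤ | xy.1 ^ 2 + 7 * xy.2 ^ 2 = 2 * (n : ℤ) + 1},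
        (xy.1 ^ 2 - 7 * xy.2 ^ 2) :=
  two_mul_lam_one_seven n

theorem stmt13 (n : ℕ) (hn : 0 < n) :
    2 * lam 1 7 (2 * (n : ℤ)) =
      ∑ᶠ xy ∈ {xy : ℤ × ℤ | xy.1 ^ 2 + 7 * xy.2 ^ 2 = 2 * (n : ℤ) + 1},
        (xy.1 ^ 2 - 7 * xy.2 ^ 2) :=
  stmt13_general n
end

section
/- For every positive integer n, λ(1, 15; 4n+1) = λ(3, 5; 2n+1) = (1/2) · Σ_{(x,y) ∈ ℤ², x² + 15y² = 2n+1} (x² − 15y²), where the sum is over all integer pairs (x, y) with x² + 15y² = 2n + 1. -/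
def nu (t : ℤ) : ℤ := if t % 4 = 1 then t else -t

def PosP (p : ℤ × ℤ) : Prop := 0 < p.1 ∨ (p.1 = 0 ∧ 0 < p.2)

lemma sqm2 (s : ℤ) : s^2 % 2 = s % 2 := by
  rcases Int.even_or_odd s with ⟨k, hk⟩ | ⟨k, hk⟩ <;> subst hk <;> ring_nf <;> omega

lemma parS (s t m : ℤ) (h : s^2 + 15*t^2 = m) (hm : m % 2 = 1) : (s + t) % 2 = 1 := by
  have h1 := sqm2 s; have h2 := sqm2 t; omega

lemma nu_sq (t : ℤ) : (nu t)^2 = t^2 := by unfold nu; split <;> ring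

lemma nu_mod (t : ℤ) (h : t % 2 = 1) : nu t % 4 = 1 := by
  unfold nu; split <;> omega

lemma nu_neg (t : ℤ) (h : t % 2 = 1) : nu (-t) = nu t := by
  unfold nu; split_ifs <;> omega

lemma nu_mul (u v : ℤ) (h : (u - v) % 4 = 0) (hu : u % 2 = 1) :
    nu u * nu v = u * v := by
  unfold nu; split_ifs with h1 h2 h3
  · rfl
  · exfalso; omega
  · exfalso; omega
  · ring

lemma nu_eq_cases (a b : ℤ) (ha : a % 2 = 1) (hb : b % 2 = 1) (h : nu a = nu b) :
    a = b ∨ a = -b := by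
  unfold nu at h; split_ifs at h <;> omega

lemma mod16_fact (X Y k : ℤ) (hX : X % 4 = 1) (hY : Y % 4 = 1)
    (h : X^2 + 15*Y^2 = 32*k + 16) : (X - Y) % 16 = 0 := by
  obtain ⟨a, ha⟩ : ∃ a, X = 16*a + X % 16 := ⟨X/16, by omega⟩
  obtain ⟨b, hb⟩ : ∃ b, Y = 16*b + Y % 16 := ⟨Y/16, by omega⟩
  have hx : X % 16 = 1 ∨ X % 16 = 5 ∨ X % 16 = 9 ∨ X % 16 = 13 := by omega
  have hy : Y % 16 = 1 ∨ Y % 16 = 5 ∨ Y % 16 = 9 ∨ Y % 16 = 13 := by omega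
  rcases hx with h1|h1|h1|h1 <;> rcases hy with h2|h2|h2|h2 <;>
    (rw [h1] at ha; rw [h2] at hb; subst ha; subst hb; ring_nf at h; omega)

lemma mod8_fact (U V k : ℤ) (hU : U % 4 = 1) (hV : V % 4 = 1)
    (h : 3*U^2 + 5*V^2 = 16*k + 8) : (U - V) % 8 = 0 := by
  obtain ⟨a, ha⟩ : ∃ a, U = 8*a + U % 8 := ⟨U/8, by omega⟩
  obtain ⟨b, hb⟩ : ∃ b, V = 8*b + V % 8 := ⟨V/8, by omega⟩
  have hx : U % 8 = 1 ∨ U % 8 = 5 := by omega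
  have hy : V % 8 = 1 ∨ V % 8 = 5 := by omega
  rcases hx with h1|h1 <;> rcases hy with h2|h2 <;>
    (rw [h1] at ha; rw [h2] at hb; subst ha; subst hb; ring_nf at h; omega)

lemma ne_zero_of_eq (s t m : ℤ) (h : s^2 + 15*t^2 = m) (hm : m % 2 = 1) :
    ((s, t) : ℤ × ℤ) ≠ 0 := by
  intro hz
  have hs : s = 0 := congrArg Prod.fst hz
  have ht : t = 0 := congrArg Prod.snd hz
  subst hs; subst ht; simp at h; omega

lemma bij1 (m : ℤ) (hm : m % 2 = 1) (sel : ℤ × ℤ → Prop)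
    (hsel : ∀ p : ℤ × ℤ, p ≠ 0 → (sel p ↔ ¬ sel (-p))) :
    Set.BijOn (fun p : ℤ × ℤ => (nu (p.1 + 15 * p.2), nu (p.1 - p.2)))
      {p : ℤ × ℤ | p.1 ^ 2 + 15 * p.2 ^ 2 = m ∧ sel p}
      {q : ℤ × ℤ | q.1 % 4 = 1 ∧ q.2 % 4 = 1 ∧ q.1 ^ 2 + 15 * q.2 ^ 2 = 16 * m} := by
  refine ⟨?_, ?_, ?_⟩
  · rintro ⟨s, t⟩ ⟨heq, hs⟩
    have hpar : (s + t) % 2 = 1 := parS s t m heq hm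
    refine ⟨nu_mod _ (by omega), nu_mod _ (by omega), ?_⟩
    show (nu (s + 15*t))^2 + 15 * (nu (s - t))^2 = 16 * m
    rw [nu_sq, nu_sq]; linear_combination 16 * heq
  · rintro ⟨s, t⟩ ⟨heq, hs⟩ ⟨s', t'⟩ ⟨heq', hs'⟩ hval
    have hpar : (s + t) % 2 = 1 := parS s t m heq hm
    have hpar' : (s' + t') % 2 = 1 := parS s' t' m heq' hm
    have hv1 : nu (s + 15*t) = nu (s' + 15*t') := congrArg Prod.fst hval
    have hv2 : nu (s - t) = nu (s' - t') := congrArg Prod.snd hval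
    rcases nu_eq_cases _ _ (by omega) (by omega) hv1 with e1|e1 <;>
      rcases nu_eq_cases _ _ (by omega) (by omega) hv2 with e2|e2
    · have : s = s' ∧ t = t' := by omega
      rw [Prod.mk.injEq]; omega
    · rw [Prod.mk.injEq]; omega
    · rw [Prod.mk.injEq]; omega
    · exfalso
      have hne := ne_zero_of_eq s t m heq hm
      have hq : ((s', t') : ℤ × ℤ) = -(s, t) := by
        rw [Prod.neg_mk, Prod.mk.injEq]; omega
      exact (hsel _ hne).mp hs (hq ▸ hs')
  · rintro ⟨X, Y⟩ ⟨hX, hY, heq⟩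
    obtain ⟨k, hk⟩ : ∃ k, m = 2*k + 1 := ⟨m/2, by omega⟩
    have hd : (X - Y) % 16 = 0 := mod16_fact X Y k hX hY (by linarith)
    obtain ⟨t0, ht0⟩ : ∃ t0, X - Y = 16 * t0 := ⟨(X - Y)/16, by omega⟩
    set s0 := Y + t0 with hs0
    have hX' : X = s0 + 15*t0 := by omega
    have hY' : Y = s0 - t0 := by omega
    have hS0 : s0^2 + 15*t0^2 = m := by
      rw [hX', hY'] at heq
      have h16 : 16*(s0^2 + 15*t0^2) = 16*m := by linear_combination heq
      omega
    have hne := ne_zero_of_eq s0 t0 m hS0 hm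
    have hmap : (fun p : ℤ × ℤ => (nu (p.1 + 15 * p.2), nu (p.1 - p.2))) (s0, t0) = ((X, Y) : ℤ × ℤ) := by
      show (nu (s0 + 15*t0), nu (s0 - t0)) = (X, Y)
      rw [← hX', ← hY']
      unfold nu; rw [if_pos hX, if_pos hY]
    by_cases hsl : sel (s0, t0)
    · exact ⟨(s0, t0), ⟨hS0, hsl⟩, hmap⟩
    · refine ⟨(-s0, -t0), ⟨by linear_combination hS0, ?_⟩, ?_⟩
      · by_contra hc
        exact hsl ((hsel _ hne).mpr hc)
      · show (nu (-s0 + 15 * -t0), nu (-s0 - -t0)) = (X, Y)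
        rw [show -s0 + 15 * -t0 = -(s0 + 15*t0) from by ring,
            show -s0 - -t0 = -(s0 - t0) from by ring,
            nu_neg _ (by omega), nu_neg _ (by omega)]
        exact hmap

lemma bij2 (m : ℤ) (hm : m % 2 = 1) (sel : ℤ × ℤ → Prop)
    (hsel : ∀ p : ℤ × ℤ, p ≠ 0 → (sel p ↔ ¬ sel (-p))) :
    Set.BijOn (fun p : ℤ × ℤ => (nu (p.1 + 5 * p.2), nu (p.1 - 3 * p.2)))
      {p : ℤ × ℤ | p.1 ^ 2 + 15 * p.2 ^ 2 = m ∧ sel p}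
      {q : ℤ × ℤ | q.1 % 4 = 1 ∧ q.2 % 4 = 1 ∧ 3 * q.1 ^ 2 + 5 * q.2 ^ 2 = 8 * m} := by
  refine ⟨?_, ?_, ?_⟩
  · rintro ⟨s, t⟩ ⟨heq, hs⟩
    have hpar : (s + t) % 2 = 1 := parS s t m heq hm
    refine ⟨nu_mod _ (by omega), nu_mod _ (by omega), ?_⟩
    show 3 * (nu (s + 5*t))^2 + 5 * (nu (s - 3*t))^2 = 8 * m
    rw [nu_sq, nu_sq]; linear_combination 8 * heq
  · rintro ⟨s, t⟩ ⟨heq, hs⟩ ⟨s', t'⟩ ⟨heq', hs'⟩ hval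
    have hpar : (s + t) % 2 = 1 := parS s t m heq hm
    have hpar' : (s' + t') % 2 = 1 := parS s' t' m heq' hm
    have hv1 : nu (s + 5*t) = nu (s' + 5*t') := congrArg Prod.fst hval
    have hv2 : nu (s - 3*t) = nu (s' - 3*t') := congrArg Prod.snd hval
    rcases nu_eq_cases _ _ (by omega) (by omega) hv1 with e1|e1 <;>
      rcases nu_eq_cases _ _ (by omega) (by omega) hv2 with e2|e2
    · rw [Prod.mk.injEq]; omega
    · rw [Prod.mk.injEq]; omega
    · rw [Prod.mk.injEq]; omega
    · exfalso
      have hne := ne_zero_of_eq s t m heq hm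
      have hq : ((s', t') : ℤ × ℤ) = -(s, t) := by
        rw [Prod.neg_mk, Prod.mk.injEq]; omega
      exact (hsel _ hne).mp hs (hq ▸ hs')
  · rintro ⟨U, V⟩ ⟨hU, hV, heq⟩
    obtain ⟨k, hk⟩ : ∃ k, m = 2*k + 1 := ⟨m/2, by omega⟩
    have hd : (U - V) % 8 = 0 := mod8_fact U V k hU hV (by linarith)
    obtain ⟨t0, ht0⟩ : ∃ t0, U - V = 8 * t0 := ⟨(U - V)/8, by omega⟩
    set s0 := V + 3*t0 with hs0
    have hX' : U = s0 + 5*t0 := by omega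
    have hY' : V = s0 - 3*t0 := by omega
    have hS0 : s0^2 + 15*t0^2 = m := by
      rw [hX', hY'] at heq
      have h16 : 8*(s0^2 + 15*t0^2) = 8*m := by linear_combination heq
      omega
    have hne := ne_zero_of_eq s0 t0 m hS0 hm
    have hmap : (fun p : ℤ × ℤ => (nu (p.1 + 5 * p.2), nu (p.1 - 3 * p.2))) (s0, t0) = ((U, V) : ℤ × ℤ) := by
      show (nu (s0 + 5*t0), nu (s0 - 3*t0)) = (U, V)
      rw [← hX', ← hY']
      unfold nu; rw [if_pos hU, if_pos hV]
    by_cases hsl : sel (s0, t0)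
    · exact ⟨(s0, t0), ⟨hS0, hsl⟩, hmap⟩
    · refine ⟨(-s0, -t0), ⟨by linear_combination hS0, ?_⟩, ?_⟩
      · by_contra hc
        exact hsl ((hsel _ hne).mpr hc)
      · show (nu (-s0 + 5 * -t0), nu (-s0 - 3 * -t0)) = (U, V)
        rw [show -s0 + 5 * -t0 = -(s0 + 5*t0) from by ring,
            show -s0 - 3 * -t0 = -(s0 - 3*t0) from by ring,
            nu_neg _ (by omega), nu_neg _ (by omega)]
        exact hmap

lemma posP_iff (p : ℤ × ℤ) (hp : p ≠ 0) : PosP p ↔ ¬ PosP (-p) := by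
  obtain ⟨a, b⟩ := p
  have h0 : ¬(a = 0 ∧ b = 0) := by rintro ⟨rfl, rfl⟩; exact hp rfl
  show (0 < a ∨ (a = 0 ∧ 0 < b)) ↔ ¬ (0 < -a ∨ (-a = 0 ∧ 0 < -b))
  omega

lemma Sfin (m : ℤ) : {p : ℤ × ℤ | p.1 ^ 2 + 15 * p.2 ^ 2 = m}.Finite := by
  apply Set.Finite.subset (Set.finite_Icc ((-m, -m) : ℤ × ℤ) ((m, m) : ℤ × ℤ))
  rintro ⟨x, y⟩ h
  simp only [Set.mem_setOf_eq] at h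
  have h1 := Int.le_self_sq x
  have h2 := Int.le_self_sq (-x)
  have h3 := Int.le_self_sq y
  have h4 := Int.le_self_sq (-y)
  rw [neg_sq] at h2 h4
  simp only [Set.mem_Icc, Prod.mk_le_mk]
  refine ⟨⟨?_, ?_⟩, ?_, ?_⟩ <;> nlinarith [sq_nonneg x, sq_nonneg y]

lemma sum_split (m : ℤ) (f : ℤ × ℤ → ℤ) :
    ∑ᶠ p ∈ {p : ℤ × ℤ | p.1 ^ 2 + 15 * p.2 ^ 2 = m}, f p
    = (∑ᶠ p ∈ {p : ℤ × ℤ | p.1 ^ 2 + 15 * p.2 ^ 2 = m ∧ PosP p}, f p)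
    + ∑ᶠ p ∈ {p : ℤ × ℤ | p.1 ^ 2 + 15 * p.2 ^ 2 = m ∧ ¬ PosP p}, f p := by
  have hfin := Sfin m
  have hu : {p : ℤ × ℤ | p.1 ^ 2 + 15 * p.2 ^ 2 = m}
      = {p : ℤ × ℤ | p.1 ^ 2 + 15 * p.2 ^ 2 = m ∧ PosP p}
      ∪ {p : ℤ × ℤ | p.1 ^ 2 + 15 * p.2 ^ 2 = m ∧ ¬ PosP p} := by
    ext p; simp only [Set.mem_setOf_eq, Set.mem_union]; tauto
  rw [hu]
  exact finsum_mem_union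
    (Set.disjoint_left.mpr (by rintro p ⟨_, h⟩ ⟨_, h'⟩; exact h' h))
    (hfin.subset (fun p hp => hp.1)) (hfin.subset (fun p hp => hp.1))

theorem stmt14 (n : ℕ) (hn : 0 < n) :
    lam 1 15 (4 * (n : ℤ)) = lam 3 5 (2 * (n : ℤ)) ∧
    2 * lam 3 5 (2 * (n : ℤ)) =
      ∑ᶠ xy ∈ {xy : ℤ × ℤ | xy.1 ^ 2 + 15 * xy.2 ^ 2 = 2 * (n : ℤ) + 1},
        (xy.1 ^ 2 - 15 * xy.2 ^ 2) := by
  have hm : (2 * (n : ℤ) + 1) % 2 = 1 := by omega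
  have hSfin := Sfin (2 * (n : ℤ) + 1)
  have hsel' : ∀ p : ℤ × ℤ, p ≠ 0 → ((¬ PosP p) ↔ ¬ ¬ PosP (-p)) :=
    fun p hp => not_congr (posP_iff p hp)
  -- unfold the two lam's
  have hA : lam 1 15 (4 * (n : ℤ)) =
      ∑ᶠ q ∈ {q : ℤ × ℤ | q.1 % 4 = 1 ∧ q.2 % 4 = 1 ∧
        q.1 ^ 2 + 15 * q.2 ^ 2 = 16 * (2 * (n : ℤ) + 1)}, q.1 * q.2 := by
    rw [lam]
    refine finsum_mem_congr ?_ (fun _ _ => rfl)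
    ext q; simp only [Set.mem_setOf_eq]
    constructor <;> rintro ⟨h1, h2, h3⟩ <;> exact ⟨h1, h2, by linarith⟩
  have hB : lam 3 5 (2 * (n : ℤ)) =
      ∑ᶠ q ∈ {q : ℤ × ℤ | q.1 % 4 = 1 ∧ q.2 % 4 = 1 ∧
        3 * q.1 ^ 2 + 5 * q.2 ^ 2 = 8 * (2 * (n : ℤ) + 1)}, q.1 * q.2 := by
    rw [lam]
    refine finsum_mem_congr ?_ (fun _ _ => rfl)
    ext q; simp only [Set.mem_setOf_eq]
    constructor <;> rintro ⟨h1, h2, h3⟩ <;> exact ⟨h1, h2, by linarith⟩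
  -- the four bijection sum identities
  have k1p : ∑ᶠ p ∈ {p : ℤ × ℤ | p.1 ^ 2 + 15 * p.2 ^ 2 = 2 * (n : ℤ) + 1 ∧ PosP p},
        (p.1 ^ 2 + 14 * p.1 * p.2 - 15 * p.2 ^ 2)
      = ∑ᶠ q ∈ {q : ℤ × ℤ | q.1 % 4 = 1 ∧ q.2 % 4 = 1 ∧
        q.1 ^ 2 + 15 * q.2 ^ 2 = 16 * (2 * (n : ℤ) + 1)}, q.1 * q.2 := by
    refine finsum_mem_eq_of_bijOn _ (bij1 (2 * (n : ℤ) + 1) hm PosP posP_iff) ?_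
    intro p hp
    have hpar := parS p.1 p.2 _ hp.1 hm
    show _ = nu (p.1 + 15 * p.2) * nu (p.1 - p.2)
    rw [nu_mul _ _ (by omega) (by omega)]; ring
  have k1n : ∑ᶠ p ∈ {p : ℤ × ℤ | p.1 ^ 2 + 15 * p.2 ^ 2 = 2 * (n : ℤ) + 1 ∧ ¬ PosP p},
        (p.1 ^ 2 + 14 * p.1 * p.2 - 15 * p.2 ^ 2)
      = ∑ᶠ q ∈ {q : ℤ × ℤ | q.1 % 4 = 1 ∧ q.2 % 4 = 1 ∧
        q.1 ^ 2 + 15 * q.2 ^ 2 = 16 * (2 * (n : ℤ) + 1)}, q.1 * q.2 := by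
    refine finsum_mem_eq_of_bijOn _
      (bij1 (2 * (n : ℤ) + 1) hm (fun p => ¬ PosP p) hsel') ?_
    intro p hp
    have hpar := parS p.1 p.2 _ hp.1 hm
    show _ = nu (p.1 + 15 * p.2) * nu (p.1 - p.2)
    rw [nu_mul _ _ (by omega) (by omega)]; ring
  have k2p : ∑ᶠ p ∈ {p : ℤ × ℤ | p.1 ^ 2 + 15 * p.2 ^ 2 = 2 * (n : ℤ) + 1 ∧ PosP p},
        (p.1 ^ 2 + 2 * p.1 * p.2 - 15 * p.2 ^ 2)
      = ∑ᶠ q ∈ {q : ℤ × ℤ | q.1 % 4 = 1 ∧ q.2 % 4 = 1 ∧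
        3 * q.1 ^ 2 + 5 * q.2 ^ 2 = 8 * (2 * (n : ℤ) + 1)}, q.1 * q.2 := by
    refine finsum_mem_eq_of_bijOn _ (bij2 (2 * (n : ℤ) + 1) hm PosP posP_iff) ?_
    intro p hp
    have hpar := parS p.1 p.2 _ hp.1 hm
    show _ = nu (p.1 + 5 * p.2) * nu (p.1 - 3 * p.2)
    rw [nu_mul _ _ (by omega) (by omega)]; ring
  have k2n : ∑ᶠ p ∈ {p : ℤ × ℤ | p.1 ^ 2 + 15 * p.2 ^ 2 = 2 * (n : ℤ) + 1 ∧ ¬ PosP p},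
        (p.1 ^ 2 + 2 * p.1 * p.2 - 15 * p.2 ^ 2)
      = ∑ᶠ q ∈ {q : ℤ × ℤ | q.1 % 4 = 1 ∧ q.2 % 4 = 1 ∧
        3 * q.1 ^ 2 + 5 * q.2 ^ 2 = 8 * (2 * (n : ℤ) + 1)}, q.1 * q.2 := by
    refine finsum_mem_eq_of_bijOn _
      (bij2 (2 * (n : ℤ) + 1) hm (fun p => ¬ PosP p) hsel') ?_
    intro p hp
    have hpar := parS p.1 p.2 _ hp.1 hm
    show _ = nu (p.1 + 5 * p.2) * nu (p.1 - 3 * p.2)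
    rw [nu_mul _ _ (by omega) (by omega)]; ring
  -- splitting the full sums
  have split1 := sum_split (2 * (n : ℤ) + 1)
    (fun p => p.1 ^ 2 + 14 * p.1 * p.2 - 15 * p.2 ^ 2)
  have split2 := sum_split (2 * (n : ℤ) + 1)
    (fun p => p.1 ^ 2 + 2 * p.1 * p.2 - 15 * p.2 ^ 2)
  -- flip symmetry
  have hflip : ∀ c : ℤ,
      ∑ᶠ p ∈ {p : ℤ × ℤ | p.1 ^ 2 + 15 * p.2 ^ 2 = 2 * (n : ℤ) + 1},
        (p.1 ^ 2 + c * p.1 * p.2 - 15 * p.2 ^ 2)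
      = ∑ᶠ p ∈ {p : ℤ × ℤ | p.1 ^ 2 + 15 * p.2 ^ 2 = 2 * (n : ℤ) + 1},
        (p.1 ^ 2 - c * p.1 * p.2 - 15 * p.2 ^ 2) := by
    intro c
    refine finsum_mem_eq_of_bijOn (fun p : ℤ × ℤ => (p.1, -p.2)) ⟨?_, ?_, ?_⟩ ?_
    · rintro ⟨a, b⟩ h
      simp only [Set.mem_setOf_eq] at h ⊢
      linear_combination h
    · rintro ⟨a, b⟩ _ ⟨a', b'⟩ _ h
      have h1 : a = a' := congrArg Prod.fst h
      have h2 : -b = -b' := congrArg Prod.snd h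
      rw [Prod.mk.injEq]; omega
    · rintro ⟨a, b⟩ h
      simp only [Set.mem_setOf_eq] at h
      refine ⟨(a, -b), by simp only [Set.mem_setOf_eq]; linear_combination h, ?_⟩
      show ((a, -(-b)) : ℤ × ℤ) = (a, b)
      rw [neg_neg]
    · intro p hp
      show _ = p.1 ^ 2 - c * p.1 * -p.2 - 15 * (-p.2) ^ 2
      ring
  have hdd : ∀ c : ℤ,
      ∑ᶠ p ∈ {p : ℤ × ℤ | p.1 ^ 2 + 15 * p.2 ^ 2 = 2 * (n : ℤ) + 1},
        (p.1 ^ 2 + c * p.1 * p.2 - 15 * p.2 ^ 2)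
      = ∑ᶠ p ∈ {p : ℤ × ℤ | p.1 ^ 2 + 15 * p.2 ^ 2 = 2 * (n : ℤ) + 1},
        (p.1 ^ 2 - 15 * p.2 ^ 2) := by
    intro c
    have h1 := hflip c
    have h2 : ∑ᶠ p ∈ {p : ℤ × ℤ | p.1 ^ 2 + 15 * p.2 ^ 2 = 2 * (n : ℤ) + 1},
        ((p.1 ^ 2 + c * p.1 * p.2 - 15 * p.2 ^ 2) + (p.1 ^ 2 - c * p.1 * p.2 - 15 * p.2 ^ 2))
        = (∑ᶠ p ∈ {p : ℤ × ℤ | p.1 ^ 2 + 15 * p.2 ^ 2 = 2 * (n : ℤ) + 1},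
            (p.1 ^ 2 + c * p.1 * p.2 - 15 * p.2 ^ 2))
        + ∑ᶠ p ∈ {p : ℤ × ℤ | p.1 ^ 2 + 15 * p.2 ^ 2 = 2 * (n : ℤ) + 1},
            (p.1 ^ 2 - c * p.1 * p.2 - 15 * p.2 ^ 2) := finsum_mem_add_distrib hSfin
    have h3 : ∑ᶠ p ∈ {p : ℤ × ℤ | p.1 ^ 2 + 15 * p.2 ^ 2 = 2 * (n : ℤ) + 1},
        ((p.1 ^ 2 - 15 * p.2 ^ 2) + (p.1 ^ 2 - 15 * p.2 ^ 2))
        = (∑ᶠ p ∈ {p : ℤ × ℤ | p.1 ^ 2 + 15 * p.2 ^ 2 = 2 * (n : ℤ) + 1},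
            (p.1 ^ 2 - 15 * p.2 ^ 2))
        + ∑ᶠ p ∈ {p : ℤ × ℤ | p.1 ^ 2 + 15 * p.2 ^ 2 = 2 * (n : ℤ) + 1},
            (p.1 ^ 2 - 15 * p.2 ^ 2) := finsum_mem_add_distrib hSfin
    have h4 : ∑ᶠ p ∈ {p : ℤ × ℤ | p.1 ^ 2 + 15 * p.2 ^ 2 = 2 * (n : ℤ) + 1},
        ((p.1 ^ 2 + c * p.1 * p.2 - 15 * p.2 ^ 2) + (p.1 ^ 2 - c * p.1 * p.2 - 15 * p.2 ^ 2))
        = ∑ᶠ p ∈ {p : ℤ × ℤ | p.1 ^ 2 + 15 * p.2 ^ 2 = 2 * (n : ℤ) + 1},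
        ((p.1 ^ 2 - 15 * p.2 ^ 2) + (p.1 ^ 2 - 15 * p.2 ^ 2)) :=
      finsum_mem_congr rfl (fun p _ => by ring)
    linarith
  have e1 : 2 * lam 1 15 (4 * (n : ℤ))
      = ∑ᶠ p ∈ {p : ℤ × ℤ | p.1 ^ 2 + 15 * p.2 ^ 2 = 2 * (n : ℤ) + 1},
        (p.1 ^ 2 + 14 * p.1 * p.2 - 15 * p.2 ^ 2) := by
    rw [hA]; linarith [split1, k1p, k1n]
  have e2 : 2 * lam 3 5 (2 * (n : ℤ))
      = ∑ᶠ p ∈ {p : ℤ × ℤ | p.1 ^ 2 + 15 * p.2 ^ 2 = 2 * (n : ℤ) + 1},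
        (p.1 ^ 2 + 2 * p.1 * p.2 - 15 * p.2 ^ 2) := by
    rw [hB]; linarith [split2, k2p, k2n]
  have e3 := hdd 14
  have e4 := hdd 2
  constructor
  · omega
  · rw [e2, e4]
end
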